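/- arXiv:2509.17577 — 11 statements merged into one kernel-verified Lean document; each statement's English description precedes it below -/
import Mathlib

section
/- Let G be a topological group acting faithfully and continuously on compact Hausdorff spaces X and Y, with the topology of G equal to the topology of pointwise convergence for each action, and let φ : X → Y be a continuous surjective equivariant map. Let E_X and E_Y be the closures of ι_X(G) in X → X and of ι_Y(G) in Y → Y respectively (product topologies, ι_X(g)(x) = g•x, ι_Y(g)(y) = g•y). Then there exists a unique continuous map Φ : E_X → E_Y with Φ(ι_X(g)) = ι_Y(g) for all g ∈ G; moreover Φ is surjective, is a monoid homomorphism for composition (Φ(f ∘ h) = Φ(f) ∘ Φ(h) and Φ(id) = id), and satisfies Φ(ι_X(g) ∘ f) = ι_Y(g) ∘ Φ(f) for all g ∈ G, f ∈ E_X. -/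
/-- The Ellis semigroup of an action of `G` on a topological space `K`: the closure, in
`K → K` with the product topology, of the set of translations by elements of `G`. -/
def ellisSemigroup (G K : Type*) [SMul G K] [TopologicalSpace K] : Set (K → K) :=
  closure {f : K → K | ∃ g : G, f = fun x => g • x}

/-- A continuous surjective equivariant map `φ : X → Y` of compact Hausdorff `G`-spaces, on
which the topology of `G` is the topology of pointwise convergence, induces a unique
continuous map `Φ` of Ellis semigroups extending `g ↦ g•·`; it is surjective, a monoid
homomorphism for composition, and equivariant. -/
theorem ellis_map_of_equivariant_map
    {G X Y : Type*} [Group G] [tG : TopologicalSpace G] [IsTopologicalGroup G]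
    [TopologicalSpace X] [CompactSpace X] [T2Space X]
    [MulAction G X] [ContinuousSMul G X] [FaithfulSMul G X]
    [TopologicalSpace Y] [CompactSpace Y] [T2Space Y]
    [MulAction G Y] [ContinuousSMul G Y] [FaithfulSMul G Y]
    (hGX : tG = TopologicalSpace.induced (fun g : G => fun x : X => g • x) Pi.topologicalSpace)
    (hGY : tG = TopologicalSpace.induced (fun g : G => fun y : Y => g • y) Pi.topologicalSpace)
    (φ : X → Y) (hφc : Continuous φ) (hφs : Function.Surjective φ)
    (hφe : ∀ (g : G) (x : X), φ (g • x) = g • φ x) :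
    ∃ Φ : (X → X) → (Y → Y),
      ContinuousOn Φ (ellisSemigroup G X) ∧
      (∀ g : G, Φ (fun x => g • x) = fun y => g • y) ∧
      (∀ f ∈ ellisSemigroup G X, Φ f ∈ ellisSemigroup G Y) ∧
      (∀ k ∈ ellisSemigroup G Y, ∃ f ∈ ellisSemigroup G X, Φ f = k) ∧
      (∀ f ∈ ellisSemigroup G X, ∀ h ∈ ellisSemigroup G X, Φ (f ∘ h) = Φ f ∘ Φ h) ∧
      Φ id = id ∧
      (∀ g : G, ∀ f ∈ ellisSemigroup G X,
        Φ ((fun x => g • x) ∘ f) = (fun y => g • y) ∘ Φ f) ∧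
      (∀ Φ' : (X → X) → (Y → Y), ContinuousOn Φ' (ellisSemigroup G X) →
        (∀ g : G, Φ' (fun x => g • x) = fun y => g • y) →
        Set.EqOn Φ' Φ (ellisSemigroup G X)) := by
  classical
  set SX : Set (X → X) := {f : X → X | ∃ g : G, f = fun x => g • x} with hSX
  set SY : Set (Y → Y) := {f : Y → Y | ∃ g : G, f = fun y => g • y} with hSY
  set s : Y → X := Function.surjInv hφs with hs
  have hse : ∀ y, φ (s y) = y := fun y => Function.surjInv_eq hφs y
  set Φ : (X → X) → (Y → Y) := fun f => φ ∘ f ∘ s with hΦdef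
  -- Φ is continuous (globally)
  have hΦc : Continuous Φ := by
    apply continuous_pi
    intro y
    exact hφc.comp (continuous_apply (s y))
  -- every f in the Ellis semigroup respects φ-fibers
  have hP : ∀ f ∈ ellisSemigroup G X, ∀ x x', φ x = φ x' → φ (f x) = φ (f x') := by
    have hclosed : IsClosed {f : X → X | ∀ x x', φ x = φ x' → φ (f x) = φ (f x')} := by
      have heq : {f : X → X | ∀ x x', φ x = φ x' → φ (f x) = φ (f x')} =
          ⋂ (x : X) (x' : X) (_ : φ x = φ x'), {f : X → X | φ (f x) = φ (f x')} := by
        ext f; simp [Set.mem_iInter]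
      rw [heq]
      exact isClosed_iInter fun x => isClosed_iInter fun x' => isClosed_iInter fun _ =>
        isClosed_eq (hφc.comp (continuous_apply x)) (hφc.comp (continuous_apply x'))
    have hsub : SX ⊆ {f : X → X | ∀ x x', φ x = φ x' → φ (f x) = φ (f x')} := by
      rintro _ ⟨g, rfl⟩ x x' h
      simp only [Set.mem_setOf_eq, hφe, h]
    intro f hf
    exact closure_minimal hsub hclosed hf
  -- Φ sends translations to translations
  have hΦg : ∀ g : G, Φ (fun x => g • x) = fun y => g • y := by
    intro g
    funext y
    simp only [hΦdef, Function.comp_apply, hφe, hse]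
  -- Φ maps the Ellis semigroup into the Ellis semigroup
  have hmem : ∀ f ∈ ellisSemigroup G X, Φ f ∈ ellisSemigroup G Y := by
    intro f hf
    have h1 : Φ f ∈ closure (Φ '' SX) :=
      image_closure_subset_closure_image hΦc ⟨f, hf, rfl⟩
    refine closure_mono ?_ h1
    rintro _ ⟨k, ⟨g, rfl⟩, rfl⟩
    exact ⟨g, (hΦg g).symm ▸ rfl⟩
  -- surjectivity onto the Ellis semigroup of Y
  have hsurj : ∀ k ∈ ellisSemigroup G Y, ∃ f ∈ ellisSemigroup G X, Φ f = k := by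
    have hcpt : IsCompact (ellisSemigroup G X) := isClosed_closure.isCompact
    have hclosedim : IsClosed (Φ '' ellisSemigroup G X) :=
      (hcpt.image hΦc).isClosed
    have hsubset : SY ⊆ Φ '' ellisSemigroup G X := by
      rintro _ ⟨g, rfl⟩
      exact ⟨fun x => g • x, subset_closure ⟨g, rfl⟩, hΦg g⟩
    intro k hk
    have := closure_minimal hsubset hclosedim hk
    obtain ⟨f, hf, hfk⟩ := this
    exact ⟨f, hf, hfk⟩
  refine ⟨Φ, hΦc.continuousOn, hΦg, hmem, hsurj, ?_, ?_, ?_, ?_⟩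
  · -- multiplicative
    intro f hf h _
    funext y
    simp only [hΦdef, Function.comp_apply]
    exact hP f hf (h (s y)) (s (φ (h (s y)))) (hse _).symm
  · -- identity
    funext y
    simp [hΦdef, hse]
  · -- equivariance
    intro g f _
    funext y
    simp only [hΦdef, Function.comp_apply, hφe]
  · -- uniqueness
    intro Φ' hΦ'c hΦ'g f hf
    have hfS : f ∈ closure SX := hf
    haveI : (nhdsWithin f SX).NeBot := mem_closure_iff_nhdsWithin_neBot.mp hfS
    have h1 : Filter.Tendsto Φ' (nhdsWithin f SX) (nhds (Φ' f)) :=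
      (hΦ'c f hf).mono_left (nhdsWithin_mono f subset_closure)
    have h2 : Filter.Tendsto Φ (nhdsWithin f SX) (nhds (Φ f)) :=
      (hΦc.continuousAt).mono_left nhdsWithin_le_nhds
    have heq : Φ' =ᶠ[nhdsWithin f SX] Φ := by
      filter_upwards [self_mem_nhdsWithin] with k hk
      obtain ⟨g, rfl⟩ := hk
      rw [hΦ'g g, hΦg g]
    exact tendsto_nhds_unique (h1.congr' heq) h2
end

section
/- Let G be a topological group acting faithfully and continuously on a compact Hausdorff space X, with the topology of G equal to the topology of pointwise convergence for the action, and let 𝓤 be the unique uniformity of X. Then for every finite set F ⊆ X and every entourage U ∈ 𝓤 there exist a neighborhood O of the identity of G and a finite set σ ⊆ X such that for all g, h ∈ G with h ∈ O·g·St_σ (i.e. h = o·g·t for some o ∈ O, t ∈ St_σ) and all x ∈ F, one has (g•x, h•x) ∈ U. (That is, the uniformity induced on G from the product uniformity of X^X via g ↦ (x ↦ g•x) is coarser than the uniformity with basic entourages {(g,h) : h ∈ O·g·St_σ}.) -/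
open scoped Uniformity Topology Pointwise

/-- For a topological group `G` acting faithfully and continuously on a compact Hausdorff
space `X`, with the topology of `G` equal to the topology of pointwise convergence, the
uniformity on `G` induced from the product uniformity of `X^X` is coarser than the uniformity
whose basic entourages are `{(g,h) : h ∈ O·g·St_σ}` for `O` a neighborhood of the identity
and `σ ⊆ X` finite. -/
theorem induced_uniformity_coarser_than_stabilizer_uniformity
    {G X : Type*} [Group G] [tG : TopologicalSpace G] [IsTopologicalGroup G]
    [UniformSpace X] [CompactSpace X] [T2Space X]
    [MulAction G X] [ContinuousSMul G X] [FaithfulSMul G X]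
    (hGX : tG = TopologicalSpace.induced (fun g : G => fun x : X => g • x)
      Pi.topologicalSpace) :
    ∀ F : Finset X, ∀ U ∈ 𝓤 X, ∃ O ∈ 𝓝 (1 : G), ∃ σ : Finset X,
      ∀ g h : G, (∃ o ∈ O, ∃ t : G, (∀ x ∈ σ, t • x = x) ∧ h = o * g * t) →
        ∀ x ∈ F, (g • x, h • x) ∈ U := by
  intro F U hU
  obtain ⟨V, ⟨hV, hVopen⟩, hVU⟩ := (uniformity_hasBasis_open (α := X)).mem_iff.mp hU
  have hf : Continuous (fun p : G × X => ((p.2, p.1 • p.2) : X × X)) :=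
    (continuous_snd.prodMk (continuous_smul))
  have hsub : ({1} : Set G) ×ˢ (Set.univ : Set X) ⊆
      (fun p : G × X => ((p.2, p.1 • p.2) : X × X)) ⁻¹' V := by
    rintro ⟨o, y⟩ ⟨ho, -⟩
    simp only [Set.mem_singleton_iff] at ho
    simp only [Set.mem_preimage, ho, one_smul]
    exact refl_mem_uniformity hV
  obtain ⟨u, v, hu, hv, h1u, huniv, huv⟩ :=
    generalized_tube_lemma isCompact_singleton isCompact_univ
      (hVopen.preimage hf) hsub
  refine ⟨u, hu.mem_nhds (h1u rfl), F, ?_⟩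
  rintro g h ⟨o, ho, t, ht, rfl⟩ x hx
  have hkey : ((g • x, o • (g • x)) : X × X) ∈ V :=
    huv (Set.mk_mem_prod ho (huniv (Set.mem_univ (g • x))))
  have : (o * g * t) • x = o • (g • x) := by
    rw [mul_smul, mul_smul, ht x hx]
  rw [this]
  exact hVU hkey
end

section
/- Let X be an infinite set with the discrete topology and let G be the group of all permutations of X, equipped with the topology of pointwise convergence (basic neighborhoods of g are {h : h(x) = g(x) for all x ∈ σ}, σ ⊆ X finite). Let G act on the one-point compactification OnePoint X = X ∪ {∞} by g•x = g(x) for x ∈ X and g•∞ = ∞. Then this action G × OnePoint X → OnePoint X is continuous, the inclusion X → OnePoint X is a dense equivariant embedding, and OnePoint X is the unique G-compactification of X: for every compact Hausdorff space K with a continuous action G × K → K and a topological embedding j : X → K with dense image satisfying j(g(x)) = g•j(x), there is an equivariant homeomorphism ψ : K → OnePoint X with ψ(j(x)) = x for all x ∈ X. -/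
open Topology

/-- The topology of pointwise convergence on the permutation group of a topological space:
the topology induced from `X → X` with the product topology. -/
def permPtwiseTopology (X : Type*) [TopologicalSpace X] :
    TopologicalSpace (Equiv.Perm X) :=
  TopologicalSpace.induced (fun g : Equiv.Perm X => (g : X → X)) Pi.topologicalSpace

/-- The canonical action of a permutation of `X` on the one-point compactification
`OnePoint X`, fixing the point at infinity. -/
def permOnePoint {X : Type*} (g : Equiv.Perm X) : OnePoint X → OnePoint X :=
  fun k => OnePoint.rec OnePoint.infty (fun x => ((g x : X) : OnePoint X)) k

set_option linter.unusedSectionVars false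

open Set Filter OnePoint
section helpers

variable {X : Type u} [TopologicalSpace X] [DiscreteTopology X]

@[simp] theorem permOnePoint_coe (g : Equiv.Perm X) (x : X) :
    permOnePoint g (↑x) = ↑(g x) := rfl

@[simp] theorem permOnePoint_infty (g : Equiv.Perm X) :
    permOnePoint g ∞ = ∞ := rfl

theorem isOpen_eval {tG : TopologicalSpace (Equiv.Perm X)}
    (htG : tG = permPtwiseTopology X) (x v : X) :
    IsOpen {h : Equiv.Perm X | h x = v} := by
  subst htG
  have : {h : Equiv.Perm X | h x = v} =
      (fun g : Equiv.Perm X => (g : X → X)) ⁻¹' ((fun f : X → X => f x) ⁻¹' {v}) := rfl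
  rw [this]
  exact isOpen_induced ((isOpen_discrete _).preimage (continuous_apply x))

theorem mem_nhds_one_perm {tG : TopologicalSpace (Equiv.Perm X)}
    (htG : tG = permPtwiseTopology X) {s : Set (Equiv.Perm X)}
    (hs : s ∈ 𝓝 (1 : Equiv.Perm X)) :
    ∃ σ : Set X, σ.Finite ∧ {h : Equiv.Perm X | ∀ y ∈ σ, h y = y} ⊆ s := by
  subst htG
  rw [permPtwiseTopology, nhds_induced, Filter.mem_comap] at hs
  obtain ⟨t, ht, hsub⟩ := hs
  rw [nhds_pi, Filter.mem_pi] at ht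
  obtain ⟨I, hI, t', ht', hsub'⟩ := ht
  refine ⟨I, hI, fun h hh => hsub ?_⟩
  apply hsub'
  intro y hy
  have h1 : t' y ∈ 𝓝 (((1 : Equiv.Perm X) : X → X) y) := ht' y
  have : ((1 : Equiv.Perm X) : X → X) y = y := rfl
  rw [this, nhds_discrete, Filter.mem_pure] at h1
  simpa [hh y hy] using h1

theorem part_a {tG : TopologicalSpace (Equiv.Perm X)}
    (htG : tG = permPtwiseTopology X) :
    Continuous (fun p : Equiv.Perm X × OnePoint X => permOnePoint p.1 p.2) := by
  rw [continuous_def]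
  intro s hs
  rw [isOpen_iff_forall_mem_open]
  rintro ⟨g, k⟩ hmem
  induction k with
  | infty =>
    have hinf : ∞ ∈ s := hmem
    obtain ⟨hcl, hcpt⟩ := (OnePoint.isOpen_iff_of_mem hinf).1 hs
    have hF : (((↑) : X → OnePoint X) ⁻¹' s)ᶜ.Finite := hcpt.finite_of_discrete
    set F := (((↑) : X → OnePoint X) ⁻¹' s)ᶜ with hFdef
    have hS : ((⇑g) ⁻¹' F).Finite := hF.preimage (g.injective.injOn)
    set S := (⇑g) ⁻¹' F with hSdef
    refine ⟨{h : Equiv.Perm X | ∀ y ∈ S, h y = g y} ×ˢ (((↑) : X → OnePoint X) '' S)ᶜ,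
      ?_, ?_, ?_, ?_⟩
    · rintro ⟨h, k'⟩ ⟨hh, hk⟩
      induction k' with
      | infty => exact hinf
      | coe x =>
        have hx : x ∉ S := fun hxS => hk (Set.mem_image_of_mem _ hxS)
        show ((h x : X) : OnePoint X) ∈ s
        by_contra hc
        have hxF : h x ∈ F := hc
        have hyS : g.symm (h x) ∈ S := by
          simp [hSdef, Set.mem_preimage, Equiv.apply_symm_apply, hxF]
        have := hh _ hyS
        rw [Equiv.apply_symm_apply] at this
        exact hx (by rwa [← h.injective this])
    · refine IsOpen.prod ?_ ?_
      · have : {h : Equiv.Perm X | ∀ y ∈ S, h y = g y} = ⋂ y ∈ S, {h : Equiv.Perm X | h y = g y} := by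
          ext h; simp
        rw [this]
        exact hS.isOpen_biInter fun y _ => isOpen_eval htG y (g y)
      · rw [isOpen_compl_iff]
        have : IsClosed ((((↑) : X → OnePoint X) '' S) : Set (OnePoint X)) := by
          rw [← isOpen_compl_iff, OnePoint.isOpen_iff_of_mem (by rintro ⟨x, -, hx⟩; exact OnePoint.coe_ne_infty x hx)]
          constructor
          · rw [preimage_compl, compl_compl, preimage_image_eq _ OnePoint.coe_injective]
            exact isClosed_discrete _
          · rw [preimage_compl, compl_compl, preimage_image_eq _ OnePoint.coe_injective]
            exact hS.isCompact
        exact this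
    · intro y _; rfl
    · rintro ⟨x, -, hx⟩
      exact OnePoint.coe_ne_infty x hx
  | coe x =>
    have hgx : ((g x : X) : OnePoint X) ∈ s := hmem
    refine ⟨{h : Equiv.Perm X | h x = g x} ×ˢ {((x : OnePoint X))}, ?_, ?_, ?_, rfl⟩
    · rintro ⟨h, k'⟩ ⟨hh, hk⟩
      rcases hk with rfl
      show ((h x : X) : OnePoint X) ∈ s
      rw [show h x = g x from hh]
      exact hgx
    · exact (isOpen_eval htG x (g x)).prod (by
        have : ({((x : OnePoint X))} : Set (OnePoint X)) = (↑) '' {x} := by simp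
        rw [this]; exact OnePoint.isOpen_image_coe.2 (isOpen_discrete _))
    · exact rfl

end helpers

theorem part_e {X : Type u} [TopologicalSpace X] [DiscreteTopology X] [Infinite X]
    [tG : TopologicalSpace (Equiv.Perm X)] (htG : tG = permPtwiseTopology X)
    (K : Type v) [TopologicalSpace K] [CompactSpace K] [T2Space K]
    (a : Equiv.Perm X → K → K)
    (hc : Continuous (fun p : Equiv.Perm X × K => a p.1 p.2))
    (h1 : ∀ k : K, a 1 k = k)
    (hmul : ∀ (g h : Equiv.Perm X) (k : K), a (g * h) k = a g (a h k))
    (j : X → K) (hj : IsEmbedding j) (hd : DenseRange j)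
    (heq : ∀ (g : Equiv.Perm X) (x : X), a g (j x) = j (g x)) :
    ∃ ψ : K ≃ₜ OnePoint X, (∀ x : X, ψ (j x) = ↑x) ∧
      ∀ (g : Equiv.Perm X) (k : K), ψ (a g k) = permOnePoint g (ψ k) := by
  classical
  -- isolated points of the image
  have hiso : ∀ x : X, IsOpen ({j x} : Set K) := by
    intro x
    obtain ⟨U, hU, hUx⟩ : ∃ U, IsOpen U ∧ j ⁻¹' U = {x} :=
      (hj.isInducing.isOpen_iff).1 (isOpen_discrete ({x} : Set X))
    have hxU : j x ∈ U := by rw [← Set.mem_preimage, hUx]; rfl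
    have h2 : U ∩ Set.range j ⊆ {j x} := by
      rintro _ ⟨hu, z, rfl⟩
      have hz : z ∈ j ⁻¹' U := hu
      rw [hUx, Set.mem_singleton_iff] at hz
      subst hz; rfl
    have hsubU : U ⊆ {j x} :=
      (hd.open_subset_closure_inter hU).trans
        ((closure_mono h2).trans (by rw [closure_singleton]))
    have : U = {j x} := subset_antisymm hsubU (by simpa using hxU)
    rw [← this]; exact hU
  have hro : IsOpen (Set.range j) := by
    have : Set.range j = ⋃ x : X, {j x} := by ext k; simp [eq_comm]
    rw [this]; exact isOpen_iUnion fun x => hiso x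
  set R : Set K := (Set.range j)ᶜ with hRdef
  -- the remainder is nonempty
  have hRne : R.Nonempty := by
    by_contra hempty
    rw [Set.not_nonempty_iff_eq_empty, hRdef, Set.compl_empty_iff] at hempty
    have : IsCompact (Set.univ : Set X) := by
      rw [hj.isCompact_iff, Set.image_univ, hempty]
      exact isCompact_univ
    have : Finite X := @finite_of_compact_of_discrete X _ (isCompact_univ_iff.1 this) _
    exact Infinite.not_finite this
  -- a useful picking lemma
  have hpick : ∀ p ∈ R, ∀ U ∈ 𝓝 p, ∀ F : Set X, F.Finite →
      ∃ x : X, j x ∈ U ∧ x ∉ F := by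
    intro p hp U hU F hF
    obtain ⟨U', hU'sub, hU'open, hpU'⟩ := mem_nhds_iff.1 hU
    have hclF : IsClosed (j '' F) := (hF.image j).isClosed
    have hopen : IsOpen (U' \ j '' F) := hU'open.sdiff hclF
    have hpmem : p ∈ U' \ j '' F := ⟨hpU', fun ⟨x, _, hx⟩ => hp ⟨x, hx⟩⟩
    obtain ⟨x, hx⟩ := hd.exists_mem_open hopen ⟨p, hpmem⟩
    exact ⟨x, hU'sub hx.1, fun hxF => hx.2 (Set.mem_image_of_mem j hxF)⟩
  -- the remainder is a subsingleton
  have hsub : ∀ p ∈ R, ∀ q ∈ R, p = q := by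
    intro p hp q hq
    apply eq_of_nhds_neBot
    rw [Filter.inf_neBot_iff]
    intro V hV W hW
    have hca : ContinuousAt (fun p : Equiv.Perm X × K => a p.1 p.2) (1, p) :=
      hc.continuousAt
    have hVpre : (fun p : Equiv.Perm X × K => a p.1 p.2) ⁻¹' V ∈
        𝓝 ((1 : Equiv.Perm X), p) := hca (by simpa [h1] using hV)
    rw [mem_nhds_prod_iff] at hVpre
    obtain ⟨s, hs, U, hU, hsU⟩ := hVpre
    obtain ⟨σ, hσfin, hσ⟩ := mem_nhds_one_perm htG hs
    obtain ⟨x, hxU, hxσ⟩ := hpick p hp U hU σ hσfin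
    obtain ⟨y, hyW, hyσ⟩ := hpick q hq W hW (σ ∪ {x}) (hσfin.union (Set.finite_singleton x))
    have hyσ' : y ∉ σ := fun h => hyσ (Set.mem_union_left _ h)
    have hxy : x ≠ y := fun h => hyσ (Set.mem_union_right _ (by simp [h]))
    have hgmem : Equiv.swap x y ∈ s := by
      apply hσ
      intro z hz
      exact Equiv.swap_apply_of_ne_of_ne (fun h => hxσ (by rwa [h] at hz)) (fun h => hyσ' (by rwa [h] at hz))
    have : a (Equiv.swap x y) (j x) ∈ V := hsU (Set.mk_mem_prod hgmem hxU)
    rw [heq, Equiv.swap_apply_left] at this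
    exact ⟨j y, this, hyW⟩
  obtain ⟨r, hr⟩ := hRne
  -- the comparison map
  set φ : OnePoint X → K := fun o => OnePoint.rec r (fun x => j x) o with hφdef
  have hφinfty : φ ∞ = r := rfl
  have hφcoe : ∀ x : X, φ ↑x = j x := fun _ => rfl
  have hφbij : Function.Bijective φ := by
    constructor
    · intro o₁ o₂ h
      induction o₁ with
      | infty =>
        induction o₂ with
        | infty => rfl
        | coe x => exact absurd ⟨x, h.symm⟩ hr
      | coe x =>
        induction o₂ with
        | infty => exact absurd ⟨x, h⟩ hr
        | coe y => exact congrArg _ (hj.injective h)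
    · intro k
      by_cases hk : k ∈ Set.range j
      · obtain ⟨x, rfl⟩ := hk; exact ⟨↑x, rfl⟩
      · exact ⟨∞, hsub r hr k hk⟩
  have hφcont : Continuous φ := by
    rw [OnePoint.continuous_iff_from_discrete]
    rw [Filter.tendsto_def]
    intro V hV
    obtain ⟨V', hV'sub, hV'open, hrV'⟩ := mem_nhds_iff.1 (by rwa [hφinfty] at hV)
    have hC : IsCompact V'ᶜ := hV'open.isClosed_compl.isCompact
    have hCsub : V'ᶜ ⊆ ⋃ x : X, {j x} := by
      intro c hc
      by_cases hcr : c ∈ R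
      · exact absurd (hsub c hcr r hr ▸ hrV') hc
      · obtain ⟨x, rfl⟩ := not_not.1 hcr
        exact Set.mem_iUnion.2 ⟨x, rfl⟩
    obtain ⟨t, ht⟩ := hC.elim_finite_subcover (fun x : X => ({j x} : Set K))
      (fun x => hiso x) hCsub
    rw [Filter.mem_cofinite]
    apply Set.Finite.subset t.finite_toSet
    intro x hx
    have : j x ∈ V'ᶜ := fun h => hx (hV'sub h)
    obtain ⟨y, hy⟩ := Set.mem_iUnion.1 (ht this)
    simp only [Set.mem_iUnion, Set.mem_singleton_iff, exists_prop] at hy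
    obtain ⟨hyt, hxy⟩ := hy
    rw [hj.injective hxy]
    exact hyt
  have hOcompact : CompactSpace (OnePoint X) := inferInstance
  let e : OnePoint X ≃ K := Equiv.ofBijective φ hφbij
  have hecont : Continuous (e : OnePoint X → K) := hφcont
  let homeo : OnePoint X ≃ₜ K := Continuous.homeoOfEquivCompactToT2 (f := e) hecont
  refine ⟨homeo.symm, ?_, ?_⟩
  · intro x
    have : homeo (↑x : OnePoint X) = j x := rfl
    rw [← this, Homeomorph.symm_apply_apply]
  · intro g k
    obtain ⟨o, rfl⟩ := homeo.surjective k
    have hhom : ∀ o : OnePoint X, homeo o = φ o := fun _ => rfl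
    induction o with
    | infty =>
      have hagr : a g r ∈ R := by
        intro ⟨x, hx⟩
        apply hr
        refine ⟨g⁻¹ x, ?_⟩
        rw [← heq, hx, ← hmul, inv_mul_cancel, h1]
      have : a g r = r := hsub (a g r) hagr r hr
      rw [hhom, hφinfty, this]
      rw [show homeo.symm r = ∞ from by rw [← hφinfty, ← hhom, Homeomorph.symm_apply_apply]]
      rw [permOnePoint_infty]
    | coe x =>
      rw [hhom, hφcoe, heq]
      have hψj : ∀ y : X, homeo.symm (j y) = ↑y := by
        intro y
        rw [show j y = homeo ↑y from rfl, Homeomorph.symm_apply_apply]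
      rw [hψj, hψj, permOnePoint_coe]

/-- For `G` the full permutation group of an infinite discrete space `X` with the topology of
pointwise convergence, the one-point compactification `OnePoint X` is a `G`-compactification
of `X`, and it is the unique one. -/
theorem onePoint_unique_G_compactification
    {X : Type u} [TopologicalSpace X] [DiscreteTopology X] [Infinite X]
    [tG : TopologicalSpace (Equiv.Perm X)] (htG : tG = permPtwiseTopology X) :
    Continuous (fun p : Equiv.Perm X × OnePoint X => permOnePoint p.1 p.2) ∧
    IsEmbedding ((↑) : X → OnePoint X) ∧
    DenseRange ((↑) : X → OnePoint X) ∧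
    (∀ (g : Equiv.Perm X) (x : X), permOnePoint g (↑x) = ↑(g x)) ∧
    (∀ (K : Type v) [TopologicalSpace K] [CompactSpace K] [T2Space K],
      ∀ a : Equiv.Perm X → K → K,
        Continuous (fun p : Equiv.Perm X × K => a p.1 p.2) →
        (∀ k : K, a 1 k = k) →
        (∀ (g h : Equiv.Perm X) (k : K), a (g * h) k = a g (a h k)) →
        ∀ j : X → K, IsEmbedding j → DenseRange j →
          (∀ (g : Equiv.Perm X) (x : X), a g (j x) = j (g x)) →
          ∃ ψ : K ≃ₜ OnePoint X,
            (∀ x : X, ψ (j x) = ↑x) ∧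
            (∀ (g : Equiv.Perm X) (k : K), ψ (a g k) = permOnePoint g (ψ k))) := by
  have hnc : NoncompactSpace X := by
    rw [← not_compactSpace_iff]
    intro h
    exact Infinite.not_finite (finite_of_compact_of_discrete (X := X))
  refine ⟨part_a htG, OnePoint.isOpenEmbedding_coe.isEmbedding, OnePoint.denseRange_coe,
    fun g x => rfl, fun K _ _ _ a hc h1 hmul j hj hd heq => part_e htG K a hc h1 hmul j hj hd heq⟩
end

section
/- Let X be a countably infinite ultrahomogeneous linear order, let Aut(X) be its group of order automorphisms acting on OnePoint X = X ∪ {∞} by g•x = g(x) for x ∈ X and g•∞ = ∞, and let E be the closure of {k ↦ g•k : g ∈ Aut(X)} in (OnePoint X) → (OnePoint X) with the product topology (X discrete). Then E is homeomorphic to the Cantor space ℕ → Bool. -/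
set_option linter.unusedSectionVars false
set_option maxHeartbeats 1000000

open Set

/-- The action of an order automorphism of `X` on the one-point compactification
`OnePoint X`, fixing the point at infinity. -/
def orderIsoOnePoint {X : Type*} [LinearOrder X] (g : X ≃o X) :
    OnePoint X → OnePoint X :=
  fun k => OnePoint.rec OnePoint.infty (fun x => ((g x : X) : OnePoint X)) k

namespace EllisCantorAux

variable {X : Type*} [LinearOrder X] [Countable X] [Infinite X]
    [TopologicalSpace X] [DiscreteTopology X]

@[simp] lemma oiop_infty (g : X ≃o X) :
    orderIsoOnePoint g (OnePoint.infty) = OnePoint.infty := rfl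

@[simp] lemma oiop_coe (g : X ≃o X) (x : X) :
    orderIsoOnePoint g (x : OnePoint X) = ((g x : X) : OnePoint X) := rfl

section OrderFacts

variable (hultra : ∀ (n : ℕ) (x y : Fin n → X), StrictMono x → StrictMono y →
      ∃ g : X ≃o X, ∀ i, g (x i) = y i)

lemma exists_lt_lt : ∃ u v : X, u < v := by
  obtain ⟨u, v, huv⟩ := exists_pair_ne X
  rcases lt_or_gt_of_ne huv with h | h
  · exact ⟨u, v, h⟩
  · exact ⟨v, u, h⟩

include hultra in
lemma exists_lt' (a : X) : ∃ b : X, b < a := by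
  obtain ⟨u, v, huv⟩ := exists_lt_lt (X := X)
  obtain ⟨g, hg⟩ := hultra 1 (fun _ => v) (fun _ => a)
    (Subsingleton.strictMono _) (Subsingleton.strictMono _)
  exact ⟨g u, by calc g u < g v := g.strictMono huv
                      _ = a := hg 0⟩

lemma strictMono_two {a b : X} (h : a < b) :
    StrictMono (fun i : Fin 2 => if i = 0 then a else b) := by
  intro i j hij
  fin_cases i <;> fin_cases j <;> simp_all

include hultra in
lemma exists_between' {a b : X} (hab : a < b) : ∃ c : X, a < c ∧ c < b := by
  obtain ⟨c, hc⟩ := Infinite.exists_notMem_finset ({a, b} : Finset X)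
  simp only [Finset.mem_insert, Finset.mem_singleton, not_or] at hc
  rcases lt_trichotomy c a with h | h | h
  · -- map (c, b) to (a, b); then g a is between
    obtain ⟨g, hg⟩ := hultra 2 (fun i => if i = 0 then c else b)
      (fun i => if i = 0 then a else b) (strictMono_two (h.trans hab)) (strictMono_two hab)
    have h0 : g c = a := by simpa using hg 0
    have h1 : g b = b := by simpa using hg 1
    refine ⟨g a, ?_, ?_⟩
    · calc a = g c := h0.symm
        _ < g a := g.strictMono h
    · calc g a < g b := g.strictMono hab
        _ = b := h1
  · exact absurd h hc.1
  · rcases lt_trichotomy c b with h' | h' | h'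
    · exact ⟨c, h, h'⟩
    · exact absurd h' hc.2
    · -- map (a, c) to (a, b); then g b is between
      obtain ⟨g, hg⟩ := hultra 2 (fun i => if i = 0 then a else c)
        (fun i => if i = 0 then a else b) (strictMono_two (hab.trans h')) (strictMono_two hab)
      have h0 : g a = a := by simpa using hg 0
      have h1 : g c = b := by simpa using hg 1
      refine ⟨g b, ?_, ?_⟩
      · calc a = g a := h0.symm
          _ < g b := g.strictMono hab
      · calc g b < g c := g.strictMono h'
          _ = b := h1

include hultra in
/-- Key extension lemma: one can fix finitely many points and still move something. -/
lemma exists_agree_ne (T : Finset X) (g : X ≃o X) :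
    ∃ g' : X ≃o X, (∀ t ∈ T, g' t = g t) ∧ ∃ x₀ : X, g' x₀ ≠ g x₀ := by
  obtain ⟨x₀, hx₀⟩ := Infinite.exists_notMem_finset T
  set T' : Finset X := insert x₀ T with hT'
  set m : ℕ := T'.card with hm
  set σ : Fin m ≃o {x // x ∈ T'} := T'.orderIsoOfFin rfl with hσ
  set x : Fin m → X := fun i => (σ i : X) with hx
  have hxmono : StrictMono x := fun i j hij => by
    exact_mod_cast σ.strictMono hij
  have hxmem : ∀ i, x i ∈ T' := fun i => (σ i).2
  -- choose the new value v
  have hv : ∃ v : X, v < g x₀ ∧ ∀ t ∈ T, t < x₀ → g t < v := by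
    set B : Finset X := (T.filter (fun t => t < x₀)).image g with hB
    by_cases hBne : B.Nonempty
    · have hmax : B.max' hBne < g x₀ := by
        obtain ⟨t, ht, hteq⟩ := Finset.mem_image.mp (B.max'_mem hBne)
        rw [← hteq]
        exact g.strictMono (Finset.mem_filter.mp ht).2
      obtain ⟨v, hv1, hv2⟩ := exists_between' hultra hmax
      refine ⟨v, hv2, fun t ht htlt => lt_of_le_of_lt ?_ hv1⟩
      exact B.le_max' _ (Finset.mem_image.mpr ⟨t, Finset.mem_filter.mpr ⟨ht, htlt⟩, rfl⟩)
    · obtain ⟨v, hvlt⟩ := exists_lt' hultra (g x₀)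
      refine ⟨v, hvlt, fun t ht htlt => absurd ?_ hBne⟩
      exact ⟨g t, Finset.mem_image.mpr ⟨t, Finset.mem_filter.mpr ⟨ht, htlt⟩, rfl⟩⟩
  obtain ⟨v, hvlt, hvup⟩ := hv
  set y : Fin m → X := fun i => if x i = x₀ then v else g (x i) with hy
  have hmem' : ∀ i, x i ≠ x₀ → x i ∈ T := fun i hne => by
    rcases Finset.mem_insert.mp (hxmem i) with h | h
    · exact absurd h hne
    · exact h
  have hymono : StrictMono y := by
    intro i j hij
    have hxij : x i < x j := hxmono hij
    by_cases hi : x i = x₀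
    · have hj : x j ≠ x₀ := fun h => by rw [hi, h] at hxij; exact lt_irrefl _ hxij
      have hjT : x j ∈ T := hmem' j hj
      have : x₀ < x j := hi ▸ hxij
      simp only [hy, hi, if_pos rfl, hj, if_neg hj]
      exact hvlt.trans (g.strictMono this)
    · by_cases hj : x j = x₀
      · have hiT : x i ∈ T := hmem' i hi
        have : x i < x₀ := hj ▸ hxij
        simp only [hy, hi, if_neg hi, hj, if_pos hj]
        exact hvup _ hiT this
      · simp only [hy, if_neg hi, if_neg hj]
        exact g.strictMono hxij
  obtain ⟨g', hg'⟩ := hultra m x y hxmono hymono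
  have hxval : ∀ (t : X) (ht : t ∈ T'), x (σ.symm ⟨t, ht⟩) = t := by
    intro t ht
    simp only [hx]
    rw [σ.apply_symm_apply]
  refine ⟨g', fun t ht => ?_, x₀, ?_⟩
  · have htT' : t ∈ T' := Finset.mem_insert_of_mem ht
    have := hg' (σ.symm ⟨t, htT'⟩)
    rw [hxval t htT'] at this
    rw [this, hy]
    simp only [hxval t htT']
    have : t ≠ x₀ := fun h => hx₀ (h ▸ ht)
    rw [if_neg this]
  · have hx₀T' : x₀ ∈ T' := Finset.mem_insert_self _ _
    have := hg' (σ.symm ⟨x₀, hx₀T'⟩)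
    rw [hxval x₀ hx₀T'] at this
    rw [this, hy]
    simp only [hxval x₀ hx₀T', if_pos rfl]
    exact ne_of_lt hvlt

end OrderFacts

section Topol

variable (X) in
/-- The Ellis compactification. -/
def EE : Set (OnePoint X → OnePoint X) :=
  closure {f : OnePoint X → OnePoint X | ∃ g : X ≃o X, f = orderIsoOnePoint g}

lemma mem_EE_of_orderIso (g : X ≃o X) : orderIsoOnePoint g ∈ EE X :=
  subset_closure ⟨g, rfl⟩

instance : Nonempty ↥(EE X) := ⟨⟨_, mem_EE_of_orderIso (OrderIso.refl X)⟩⟩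

instance : Countable (OnePoint X) := inferInstanceAs (Countable (Option X))

instance : CompactSpace ↥(EE X) :=
  isCompact_iff_compactSpace.mp (isClosed_closure.isCompact)

lemma isClopen_singleton_coe (a : X) : IsClopen {((a : OnePoint X))} := by
  constructor
  · exact isClosed_singleton
  · have : {((a : OnePoint X))} = (↑) '' ({a} : Set X) := by simp
    rw [this]
    exact OnePoint.isOpen_image_coe.mpr (isOpen_discrete _)

/-- The separating clopen family, indexed by pairs (coordinate, value). -/
def Dset (e : ℕ → OnePoint X × X) (n : ℕ) : Set ↥(EE X) :=
  {f | (f : OnePoint X → OnePoint X) (e n).1 = (((e n).2 : X) : OnePoint X)}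

lemma isClopen_Dset (e : ℕ → OnePoint X × X) (n : ℕ) : IsClopen (Dset e n) :=
  (isClopen_singleton_coe (e n).2).preimage
    ((continuous_apply (e n).1).comp continuous_subtype_val)

lemma separating (e : ℕ → OnePoint X × X) (he : Function.Surjective e)
    {f g : ↥(EE X)} (hfg : f ≠ g) :
    ∃ n, (f ∈ Dset e n ∧ g ∉ Dset e n) ∨ (f ∉ Dset e n ∧ g ∈ Dset e n) := by
  have hne : (f : OnePoint X → OnePoint X) ≠ (g : OnePoint X → OnePoint X) :=
    fun h => hfg (Subtype.ext h)
  obtain ⟨k, hk⟩ := Function.ne_iff.mp hne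
  by_cases hf : (f : OnePoint X → OnePoint X) k = OnePoint.infty
  · have hg' : (g : OnePoint X → OnePoint X) k ≠ OnePoint.infty := fun h => hk (by rw [hf, h])
    obtain ⟨a, ha⟩ := OnePoint.ne_infty_iff_exists.mp hg'
    obtain ⟨n, hn⟩ := he (k, a)
    refine ⟨n, Or.inr ⟨?_, ?_⟩⟩
    · simp only [Dset, mem_setOf_eq, hn, hf]
      exact fun h => (OnePoint.infty_ne_coe a) h
    · simp only [Dset, mem_setOf_eq, hn]
      exact ha.symm
  · obtain ⟨a, ha⟩ := OnePoint.ne_infty_iff_exists.mp hf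
    obtain ⟨n, hn⟩ := he (k, a)
    refine ⟨n, Or.inl ⟨?_, ?_⟩⟩
    · simp only [Dset, mem_setOf_eq, hn]
      exact ha.symm
    · simp only [Dset, mem_setOf_eq, hn]
      intro h
      exact hk (by rw [h, ha])

lemma exists_two
    (hagree : ∀ (T : Finset X) (g : X ≃o X),
      ∃ g' : X ≃o X, (∀ t ∈ T, g' t = g t) ∧ ∃ x₀ : X, g' x₀ ≠ g x₀)
    {V : Set ↥(EE X)} (hV : IsOpen V) (hne : V.Nonempty) :
    ∃ p q : ↥(EE X), p ∈ V ∧ q ∈ V ∧ p ≠ q := by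
  obtain ⟨O, hO, hVO⟩ := isOpen_induced_iff.mp hV
  obtain ⟨f₀, hf₀⟩ := hne
  have hf₀O : (f₀ : OnePoint X → OnePoint X) ∈ O := by
    rw [← hVO] at hf₀; exact hf₀
  have hf₀cl : (f₀ : OnePoint X → OnePoint X) ∈
      closure {f : OnePoint X → OnePoint X | ∃ g : X ≃o X, f = orderIsoOnePoint g} := f₀.2
  obtain ⟨f₁, hf₁O, g, rfl⟩ := mem_closure_iff.mp hf₀cl O hO hf₀O
  obtain ⟨I, u, hIu, hsub⟩ := isOpen_pi_iff.mp hO _ hf₁O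
  set T : Finset X := I.preimage ((↑) : X → OnePoint X) (OnePoint.coe_injective.injOn) with hT
  obtain ⟨g', hg'T, x₀, hx₀⟩ := hagree T g
  have hg'mem : orderIsoOnePoint g' ∈ (I : Set (OnePoint X)).pi u := by
    intro k hk
    by_cases hki : k = OnePoint.infty
    · subst hki
      have : orderIsoOnePoint g OnePoint.infty ∈ u OnePoint.infty := (hIu _ hk).2
      simpa using this
    · obtain ⟨a, ha⟩ := OnePoint.ne_infty_iff_exists.mp hki
      subst ha
      have haT : a ∈ T := Finset.mem_preimage.mpr hk
      have : orderIsoOnePoint g (a : OnePoint X) ∈ u _ := (hIu _ hk).2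
      simpa [hg'T a haT] using this
  refine ⟨⟨orderIsoOnePoint g, mem_EE_of_orderIso g⟩,
    ⟨orderIsoOnePoint g', mem_EE_of_orderIso g'⟩, ?_, ?_, ?_⟩
  · rw [← hVO]; exact hf₁O
  · rw [← hVO]; exact hsub hg'mem
  · intro h
    have := congrFun (congrArg Subtype.val h) (x₀ : OnePoint X)
    simp only [oiop_coe] at this
    exact hx₀ (OnePoint.coe_injective this).symm

end Topol

section Tree

variable (e : ℕ → OnePoint X × X)

def Pgood (V : Set ↥(EE X)) (n : ℕ) (p : Set ↥(EE X) × Set ↥(EE X)) : Prop :=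
  IsClopen p.1 ∧ IsClopen p.2 ∧ p.1.Nonempty ∧ p.2.Nonempty ∧
    p.1 ∪ p.2 = V ∧ Disjoint p.1 p.2 ∧
    (p.1 ⊆ Dset e n ∨ p.1 ⊆ (Dset e n)ᶜ) ∧ (p.2 ⊆ Dset e n ∨ p.2 ⊆ (Dset e n)ᶜ)

variable {e} in
lemma exists_Pgood (he : Function.Surjective e)
    (htwo : ∀ V : Set ↥(EE X), IsOpen V → V.Nonempty →
      ∃ p q : ↥(EE X), p ∈ V ∧ q ∈ V ∧ p ≠ q)
    {V : Set ↥(EE X)} (hV : IsClopen V) (hne : V.Nonempty) (n : ℕ) :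
    ∃ p, Pgood e V n p := by
  by_cases h1 : (V ∩ Dset e n).Nonempty ∧ (V \ Dset e n).Nonempty
  · refine ⟨(V ∩ Dset e n, V \ Dset e n), hV.inter (isClopen_Dset e n),
      hV.diff (isClopen_Dset e n), h1.1, h1.2, inter_union_diff V _, ?_, ?_, ?_⟩
    · exact Set.disjoint_of_subset inter_subset_right (diff_subset_compl _ _)
        disjoint_compl_right
    · exact Or.inl inter_subset_right
    · exact Or.inr (diff_subset_compl _ _)
  · have hVD : V ⊆ Dset e n ∨ V ⊆ (Dset e n)ᶜ := by
      rcases not_and_or.mp h1 with h | h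
      · right
        intro x hx hxD
        exact h ⟨x, hx, hxD⟩
      · left
        intro x hx
        by_contra hxD
        exact h ⟨x, hx, hxD⟩
    obtain ⟨p, q, hp, hq, hpq⟩ := htwo V hV.isOpen hne
    obtain ⟨m, hm⟩ := separating e he hpq
    have hnem : (V ∩ Dset e m).Nonempty ∧ (V \ Dset e m).Nonempty := by
      rcases hm with ⟨h1', h2'⟩ | ⟨h1', h2'⟩
      · exact ⟨⟨p, hp, h1'⟩, ⟨q, hq, h2'⟩⟩
      · exact ⟨⟨q, hq, h2'⟩, ⟨p, hp, h1'⟩⟩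
    refine ⟨(V ∩ Dset e m, V \ Dset e m), hV.inter (isClopen_Dset e m),
      hV.diff (isClopen_Dset e m), hnem.1, hnem.2, inter_union_diff V _, ?_, ?_, ?_⟩
    · exact Set.disjoint_of_subset inter_subset_right (diff_subset_compl _ _)
        disjoint_compl_right
    · rcases hVD with h | h
      · exact Or.inl (inter_subset_left.trans h)
      · exact Or.inr (inter_subset_left.trans h)
    · rcases hVD with h | h
      · exact Or.inl (diff_subset.trans h)
      · exact Or.inr (diff_subset.trans h)

open Classical in
noncomputable def splitPair (V : Set ↥(EE X)) (n : ℕ) : Set ↥(EE X) × Set ↥(EE X) :=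
  if h : ∃ p, Pgood e V n p then h.choose else (∅, ∅)

noncomputable def node : List Bool → Set ↥(EE X)
  | [] => univ
  | b :: s => if b then (splitPair e (node s) s.length).2 else (splitPair e (node s) s.length).1

lemma node_cons_false (s : List Bool) :
    node e (false :: s) = (splitPair e (node e s) s.length).1 := by simp [node]

lemma node_cons_true (s : List Bool) :
    node e (true :: s) = (splitPair e (node e s) s.length).2 := by simp [node]

variable {e}
variable (he : Function.Surjective e)
    (htwo : ∀ V : Set ↥(EE X), IsOpen V → V.Nonempty →
      ∃ p q : ↥(EE X), p ∈ V ∧ q ∈ V ∧ p ≠ q)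

include he htwo

lemma splitPair_spec {V : Set ↥(EE X)} (hV : IsClopen V) (hne : V.Nonempty) (n : ℕ) :
    Pgood e V n (splitPair e V n) := by
  have h := exists_Pgood he htwo hV hne n
  rw [splitPair, dif_pos h]
  exact h.choose_spec

lemma node_clopen_nonempty : ∀ s : List Bool, IsClopen (node e s) ∧ (node e s).Nonempty
  | [] => ⟨isClopen_univ, univ_nonempty⟩
  | b :: s => by
      obtain ⟨hc, hn⟩ := node_clopen_nonempty s
      have hs := splitPair_spec he htwo hc hn s.length
      cases b
      · rw [node_cons_false]
        exact ⟨hs.1, hs.2.2.1⟩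
      · rw [node_cons_true]
        exact ⟨hs.2.1, hs.2.2.2.1⟩

lemma node_good (s : List Bool) :
    Pgood e (node e s) s.length (splitPair e (node e s) s.length) :=
  splitPair_spec he htwo (node_clopen_nonempty he htwo s).1 (node_clopen_nonempty he htwo s).2 _

lemma node_cons_subset (b : Bool) (s : List Bool) : node e (b :: s) ⊆ node e s := by
  have h := (node_good he htwo s).2.2.2.2.1
  cases b
  · rw [node_cons_false]
    have h2 : (splitPair e (node e s) s.length).1 ⊆
        (splitPair e (node e s) s.length).1 ∪ (splitPair e (node e s) s.length).2 :=
      subset_union_left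
    rwa [h] at h2
  · rw [node_cons_true]
    have h2 : (splitPair e (node e s) s.length).2 ⊆
        (splitPair e (node e s) s.length).1 ∪ (splitPair e (node e s) s.length).2 :=
      subset_union_right
    rwa [h] at h2

lemma node_cons_subset_D (b : Bool) (s : List Bool) :
    node e (b :: s) ⊆ Dset e s.length ∨ node e (b :: s) ⊆ (Dset e s.length)ᶜ := by
  have h := node_good he htwo s
  cases b
  · rw [node_cons_false]
    exact h.2.2.2.2.2.2.1
  · rw [node_cons_true]
    exact h.2.2.2.2.2.2.2

lemma node_disjoint (s : List Bool) :
    Disjoint (node e (false :: s)) (node e (true :: s)) := by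
  rw [node_cons_false, node_cons_true]
  exact (node_good he htwo s).2.2.2.2.2.1

lemma node_union (s : List Bool) :
    node e (false :: s) ∪ node e (true :: s) = node e s := by
  rw [node_cons_false, node_cons_true]
  exact (node_good he htwo s).2.2.2.2.1

end Tree

section Branches

def pre (b : ℕ → Bool) : ℕ → List Bool
  | 0 => []
  | n + 1 => b n :: pre b n

@[simp] lemma length_pre (b : ℕ → Bool) : ∀ n, (pre b n).length = n
  | 0 => rfl
  | n + 1 => by simp [pre, length_pre b n]

lemma pre_eq_of_agree {b b' : ℕ → Bool} :
    ∀ n, (∀ m < n, b m = b' m) → pre b n = pre b' n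
  | 0, _ => rfl
  | n + 1, h => by
      simp only [pre]
      rw [h n (Nat.lt_succ_self n),
        pre_eq_of_agree n (fun m hm => h m (hm.trans (Nat.lt_succ_self n)))]

variable {e : ℕ → OnePoint X × X}
variable (he : Function.Surjective e)
    (htwo : ∀ V : Set ↥(EE X), IsOpen V → V.Nonempty →
      ∃ p q : ↥(EE X), p ∈ V ∧ q ∈ V ∧ p ≠ q)

include he htwo

lemma branch_nonempty (b : ℕ → Bool) : (⋂ n, node e (pre b n)).Nonempty := by
  apply IsCompact.nonempty_iInter_of_sequence_nonempty_isCompact_isClosed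
  · intro n
    exact node_cons_subset he htwo (b n) (pre b n)
  · intro n
    exact (node_clopen_nonempty he htwo _).2
  · exact ((node_clopen_nonempty he htwo _).1).isClosed.isCompact
  · intro n
    exact ((node_clopen_nonempty he htwo _).1).isClosed

lemma branch_unique (b : ℕ → Bool) {x y : ↥(EE X)}
    (hx : x ∈ ⋂ n, node e (pre b n)) (hy : y ∈ ⋂ n, node e (pre b n)) : x = y := by
  by_contra hxy
  obtain ⟨m, hm⟩ := separating e he hxy
  have hxm' : x ∈ node e (b m :: pre b m) := mem_iInter.mp hx (m + 1)
  have hym' : y ∈ node e (b m :: pre b m) := mem_iInter.mp hy (m + 1)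
  have hsub := node_cons_subset_D he htwo (b m) (pre b m)
  rw [length_pre] at hsub
  rcases hsub with h | h
  · rcases hm with ⟨_, h2⟩ | ⟨h1, _⟩
    · exact h2 (h hym')
    · exact h1 (h hxm')
  · rcases hm with ⟨h1, _⟩ | ⟨_, h2⟩
    · exact h hxm' h1
    · exact h hym' h2

noncomputable def hfun (b : ℕ → Bool) : ↥(EE X) := (branch_nonempty he htwo b).choose

lemma hfun_mem (b : ℕ → Bool) (n : ℕ) : hfun he htwo b ∈ node e (pre b n) :=
  mem_iInter.mp (branch_nonempty he htwo b).choose_spec n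

lemma hfun_injective : Function.Injective (hfun he htwo) := by
  intro b b' hbb'
  by_contra hne
  have hex : ∃ n, b n ≠ b' n := Function.ne_iff.mp hne
  classical
  set n := Nat.find hex with hn
  have hne_n : b n ≠ b' n := Nat.find_spec hex
  have hagree : ∀ m < n, b m = b' m := fun m hm => by
    by_contra h
    exact Nat.find_min hex hm h
  have hpre : pre b n = pre b' n := pre_eq_of_agree n hagree
  have hb : hfun he htwo b ∈ node e (b n :: pre b n) := hfun_mem he htwo b (n + 1)
  have hb' : hfun he htwo b' ∈ node e (b' n :: pre b n) := by
    have h := hfun_mem he htwo b' (n + 1)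
    rw [show pre b' (n + 1) = b' n :: pre b' n from rfl, ← hpre] at h
    exact h
  rw [hbb'] at hb
  cases hbn : b n <;> cases hb'n : b' n
  · exact hne_n (by rw [hbn, hb'n])
  · rw [hbn] at hb; rw [hb'n] at hb'
    exact Set.disjoint_left.mp (node_disjoint he htwo (pre b n)) hb hb'
  · rw [hbn] at hb; rw [hb'n] at hb'
    exact Set.disjoint_left.mp (node_disjoint he htwo (pre b n)) hb' hb
  · exact hne_n (by rw [hbn, hb'n])

omit he htwo in
open Classical in
noncomputable def blist (e : ℕ → OnePoint X × X) (x : ↥(EE X)) : ℕ → List Bool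
  | 0 => []
  | n + 1 =>
      (if x ∈ (splitPair e (node e (blist e x n)) n).1 then false else true) :: blist e x n

omit he htwo in
@[simp] lemma length_blist (x : ↥(EE X)) : ∀ n, (blist e x n).length = n
  | 0 => rfl
  | n + 1 => by simp [blist, length_blist x n]

lemma mem_blist (x : ↥(EE X)) : ∀ n, x ∈ node e (blist e x n)
  | 0 => mem_univ x
  | n + 1 => by
      classical
      have hx := mem_blist x n
      by_cases hmem : x ∈ (splitPair e (node e (blist e x n)) n).1
      · rw [show blist e x (n + 1) =
          (if x ∈ (splitPair e (node e (blist e x n)) n).1 then false else true)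
            :: blist e x n from rfl, if_pos hmem, node_cons_false, length_blist]
        exact hmem
      · rw [show blist e x (n + 1) =
          (if x ∈ (splitPair e (node e (blist e x n)) n).1 then false else true)
            :: blist e x n from rfl, if_neg hmem, node_cons_true, length_blist]
        have hunion := (node_good he htwo (blist e x n)).2.2.2.2.1
        rw [length_blist] at hunion
        rw [← hunion] at hx
        rcases hx with h | h
        · exact absurd h hmem
        · exact h

omit he htwo in
open Classical in
noncomputable def bfun (e : ℕ → OnePoint X × X) (x : ↥(EE X)) : ℕ → Bool :=
  fun n => if x ∈ (splitPair e (node e (blist e x n)) n).1 then false else true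

omit he htwo in
lemma pre_bfun (x : ↥(EE X)) : ∀ n, pre (bfun e x) n = blist e x n
  | 0 => rfl
  | n + 1 => by
      rw [show pre (bfun e x) (n + 1) = bfun e x n :: pre (bfun e x) n from rfl,
        pre_bfun x n]
      rfl

lemma hfun_surjective : Function.Surjective (hfun he htwo) := by
  intro x
  refine ⟨bfun e x, ?_⟩
  apply branch_unique he htwo (bfun e x)
  · exact (branch_nonempty he htwo _).choose_spec
  · rw [mem_iInter]
    intro n
    rw [pre_bfun x n]
    exact mem_blist he htwo x n

lemma exists_node_subset {b : ℕ → Bool} {U : Set ↥(EE X)} (hU : IsOpen U)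
    (hmem : hfun he htwo b ∈ U) : ∃ n, node e (pre b n) ⊆ U := by
  by_contra hcon
  push_neg at hcon
  have hne : ∀ n, (node e (pre b n) ∩ Uᶜ).Nonempty := fun n => by
    obtain ⟨z, hz1, hz2⟩ := not_subset.mp (hcon n)
    exact ⟨z, hz1, hz2⟩
  have hnon := IsCompact.nonempty_iInter_of_sequence_nonempty_isCompact_isClosed
    (fun n => node e (pre b n) ∩ Uᶜ)
    (fun n => inter_subset_inter_left _ (node_cons_subset he htwo (b n) (pre b n)))
    hne
    (((node_clopen_nonempty he htwo _).1.isClosed.inter hU.isClosed_compl).isCompact)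
    (fun n => (node_clopen_nonempty he htwo _).1.isClosed.inter hU.isClosed_compl)
  obtain ⟨z, hz⟩ := hnon
  have hz1 : z ∈ ⋂ n, node e (pre b n) :=
    mem_iInter.mpr fun n => (mem_iInter.mp hz n).1
  have hz2 : z ∉ U := (mem_iInter.mp hz 0).2
  have heq : z = hfun he htwo b :=
    branch_unique he htwo b hz1 (branch_nonempty he htwo b).choose_spec
  exact hz2 (heq ▸ hmem)

lemma hfun_continuous : Continuous (hfun he htwo) := by
  rw [continuous_iff_continuousAt]
  intro b
  rw [ContinuousAt, Filter.tendsto_def]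
  intro s hs
  obtain ⟨U, hUs, hUopen, hmemU⟩ := mem_nhds_iff.mp hs
  obtain ⟨n, hn⟩ := exists_node_subset he htwo hUopen hmemU
  have hNopen : IsOpen {b' : ℕ → Bool | ∀ m < n, b' m = b m} := by
    have heq : {b' : ℕ → Bool | ∀ m < n, b' m = b m}
        = ⋂ m ∈ Finset.range n, {b' : ℕ → Bool | b' m = b m} := by
      ext b'
      simp [Finset.mem_range]
    rw [heq]
    apply isOpen_biInter_finset
    intro m _
    have heq2 : {b' : ℕ → Bool | b' m = b m} = (fun f : ℕ → Bool => f m) ⁻¹' {b m} := rfl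
    rw [heq2]
    exact (continuous_apply m).isOpen_preimage _ (isOpen_discrete _)
  apply Filter.mem_of_superset (hNopen.mem_nhds (by simp))
  intro b' hb'
  have hpre : pre b' n = pre b n := pre_eq_of_agree n (fun m hm => hb' m hm)
  have hmem2 : hfun he htwo b' ∈ node e (pre b' n) := hfun_mem he htwo b' n
  rw [hpre] at hmem2
  exact hUs (hn hmem2)

end Branches

theorem main
    (hultra : ∀ (n : ℕ) (x y : Fin n → X), StrictMono x → StrictMono y →
      ∃ g : X ≃o X, ∀ i, g (x i) = y i) :
    Nonempty (↥(EE X) ≃ₜ (ℕ → Bool)) := by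
  obtain ⟨e, he⟩ := exists_surjective_nat (OnePoint X × X)
  have htwo : ∀ V : Set ↥(EE X), IsOpen V → V.Nonempty →
      ∃ p q : ↥(EE X), p ∈ V ∧ q ∈ V ∧ p ≠ q :=
    fun V hV hne => exists_two (exists_agree_ne hultra) hV hne
  let φ : (ℕ → Bool) ≃ ↥(EE X) :=
    Equiv.ofBijective (hfun he htwo) ⟨hfun_injective he htwo, hfun_surjective he htwo⟩
  have hc : Continuous φ := hfun_continuous he htwo
  exact ⟨(hc.homeoOfEquivCompactToT2 (f := φ)).symm⟩

end EllisCantorAux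

/-- For a countably infinite ultrahomogeneous chain `X` (discrete topology), the Ellis
compactification of `Aut(X)` obtained from its action on `OnePoint X`, i.e. the closure of
the set of extended automorphisms in `(OnePoint X) → (OnePoint X)` with the product topology,
is homeomorphic to the Cantor space. -/
theorem ellis_of_aut_chain_homeomorphic_cantor
    {X : Type*} [LinearOrder X] [Countable X] [Infinite X]
    [TopologicalSpace X] [DiscreteTopology X]
    (hultra : ∀ (n : ℕ) (x y : Fin n → X), StrictMono x → StrictMono y →
      ∃ g : X ≃o X, ∀ i, g (x i) = y i) :
    Nonempty
      ((closure {f : OnePoint X → OnePoint X | ∃ g : X ≃o X, f = orderIsoOnePoint g})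
        ≃ₜ (ℕ → Bool)) := by
  exact EllisCantorAux.main hultra
end

section
/- Let X be an infinite set and let G be the group of all permutations of X with the topology of pointwise convergence (basic neighborhoods of g are {h : h(x) = g(x) for all x ∈ σ}, σ ⊆ X finite). Then G is Roelcke precompact: for every neighborhood O of the identity there exists a finite set F ⊆ G such that G = O·F·O = {o₁ f o₂ : o₁, o₂ ∈ O, f ∈ F}. -/
open Topology

/-- Key algebraic lemma: if `f` and `g` induce the same partial map pattern on a finite set
`σ` of an infinite type, then `g ∈ U f U` where `U` is the pointwise stabilizer of `σ`. -/
theorem perm_double_coset {X : Type*} [Infinite X] (σ : Finset X) (f g : Equiv.Perm X)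
    (hq : ∀ x ∈ σ, (f x ∈ σ ↔ g x ∈ σ) ∧ (f x ∈ σ → f x = g x)) :
    ∃ u₁ u₂ : Equiv.Perm X, (∀ x ∈ σ, u₁ x = x) ∧ (∀ x ∈ σ, u₂ x = x) ∧
      g = u₁ * f * u₂ := by
  classical
  set D : Set X := ↑σ ∪ f '' ↑σ with hD
  have hDfin : D.Finite := (σ.finite_toSet).union (σ.finite_toSet.image f)
  -- the partial map to extend
  have hmem : ∀ x : D, (x : X) ∉ σ → f.symm (x : X) ∈ σ := by
    rintro ⟨x, hx⟩ hxs
    rcases hx with hx | ⟨y, hy, rfl⟩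
    · exact absurd hx hxs
    · simpa using hy
  set d : D → X := fun x => if (x : X) ∈ σ then (x : X) else g (f.symm (x : X)) with hd
  -- basic values of d
  have hval1 : ∀ (x : X) (hx : x ∈ σ), d ⟨x, Or.inl hx⟩ = x := by
    intro x hx; simp [hd, hx]
  have hval2 : ∀ (x : X) (hx : x ∈ σ), d ⟨f x, Or.inr ⟨x, hx, rfl⟩⟩ = g x := by
    intro x hx
    by_cases h : f x ∈ σ
    · simpa [hd, h] using ((hq x hx).2 h)
    · simp [hd, h]
  have hnotin : ∀ (x : X) (hx : x ∈ σ), f x ∉ σ → g (f.symm (f x)) ∉ σ := by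
    intro x hx h
    simpa using fun hg => h (((hq x hx).1).mpr (by simpa using hg))
  have hdinj : Function.Injective d := by
    rintro ⟨x, hx⟩ ⟨y, hy⟩ hxy
    by_cases hxs : x ∈ σ <;> by_cases hys : y ∈ σ
    · simpa [hd, hxs, hys] using hxy
    · exfalso
      rcases hy with hy | ⟨z, hz, rfl⟩
      · exact hys hy
      · have := hnotin z hz (by simpa using hys)
        simp only [hd, hxs, hys, if_true, if_false] at hxy
        exact this (hxy ▸ hxs)
    · exfalso
      rcases hx with hx | ⟨z, hz, rfl⟩
      · exact hxs hx
      · have := hnotin z hz (by simpa using hxs)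
        simp only [hd, hxs, hys, if_true, if_false] at hxy
        exact this (hxy.symm ▸ hys)
    · simp only [hd, hxs, hys, if_false] at hxy
      have : f.symm x = f.symm y := g.injective hxy
      simpa [Subtype.ext_iff] using f.symm.injective (by exact this)
  have hcard : (Cardinal.mk D) < Cardinal.mk X := by
    have := hDfin.lt_aleph0
    exact this.trans_le (Cardinal.aleph0_le_mk X)
  obtain ⟨u₁, hu₁⟩ := Cardinal.extend_function_of_lt ⟨d, hdinj⟩ hcard ⟨Equiv.refl X⟩
  have h1 : ∀ x ∈ σ, u₁ x = x := by
    intro x hx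
    have := hu₁ ⟨x, Or.inl hx⟩
    simpa [hval1 x hx] using this
  have h2 : ∀ x ∈ σ, u₁ (f x) = g x := by
    intro x hx
    have := hu₁ ⟨f x, Or.inr ⟨x, hx, rfl⟩⟩
    simpa [hval2 x hx] using this
  refine ⟨u₁, f⁻¹ * u₁⁻¹ * g, h1, ?_, by group⟩
  intro x hx
  have h3 : u₁.symm (g x) = f x := by
    rw [← h2 x hx]; exact u₁.symm_apply_apply _
  simp only [Equiv.Perm.mul_apply, Equiv.Perm.inv_def, h3, Equiv.symm_apply_apply]

/-- The permutation group of an infinite discrete set, with the topology of pointwise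
convergence, is Roelcke precompact: `G = O·F·O` for a suitable finite set `F`, for every
neighborhood `O` of the identity. -/
theorem permGroup_roelcke_precompact
    {X : Type*} [TopologicalSpace X] [DiscreteTopology X] [Infinite X]
    [tG : TopologicalSpace (Equiv.Perm X)] (htG : tG = permPtwiseTopology X) :
    ∀ O ∈ 𝓝 (1 : Equiv.Perm X), ∃ F : Finset (Equiv.Perm X),
      ∀ g : Equiv.Perm X, ∃ o₁ ∈ O, ∃ f ∈ F, ∃ o₂ ∈ O, g = o₁ * f * o₂ := by
  classical
  subst htG
  intro O hO
  rw [permPtwiseTopology, nhds_induced] at hO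
  obtain ⟨S, hS, hSO⟩ := hO
  rw [nhds_pi, Filter.mem_pi] at hS
  obtain ⟨I, hIfin, t, ht, hsub⟩ := hS
  set σ : Finset X := hIfin.toFinset with hσ
  -- the basic neighborhood U
  have hU : ∀ h : Equiv.Perm X, (∀ x ∈ σ, h x = x) → h ∈ O := by
    intro h hh
    apply hSO
    apply hsub
    intro x hx
    have hxσ : x ∈ σ := hIfin.mem_toFinset.mpr hx
    have := ht x
    have hxt : ((1 : Equiv.Perm X) : X → X) x ∈ t x := mem_of_mem_nhds this
    simpa [hh x hxσ] using hxt
  -- the pattern map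
  set q : Equiv.Perm X → (σ → Option σ) := fun g x =>
    if h : (g (x : X)) ∈ σ then some ⟨g (x : X), h⟩ else none with hqdef
  -- representatives
  have hrep : ∃ F : Finset (Equiv.Perm X), ∀ g : Equiv.Perm X, ∃ f ∈ F, q f = q g := by
    set e : (σ → Option σ) → Equiv.Perm X := fun b =>
      if h : ∃ a, q a = b then h.choose else 1 with he
    refine ⟨Finset.univ.image e, fun g => ⟨e (q g), Finset.mem_image_of_mem _ (Finset.mem_univ _), ?_⟩⟩
    have h : ∃ a, q a = q g := ⟨g, rfl⟩
    simp only [he, dif_pos h]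
    exact h.choose_spec
  obtain ⟨F, hF⟩ := hrep
  refine ⟨F, fun g => ?_⟩
  obtain ⟨f, hfF, hfq⟩ := hF g
  have hq : ∀ x ∈ σ, (f x ∈ σ ↔ g x ∈ σ) ∧ (f x ∈ σ → f x = g x) := by
    intro x hx
    have hthis := congrFun hfq ⟨x, hx⟩
    simp only [hqdef] at hthis
    by_cases h1 : f x ∈ σ <;> by_cases h2 : g x ∈ σ
    · rw [dif_pos h1, dif_pos h2] at hthis
      have := Subtype.ext_iff.mp (Option.some_injective _ hthis)
      exact ⟨by simp [h1, h2], fun _ => this⟩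
    · rw [dif_pos h1, dif_neg h2] at hthis; exact absurd hthis (by simp)
    · rw [dif_neg h1, dif_pos h2] at hthis; exact absurd hthis (by simp)
    · exact ⟨by simp [h1, h2], fun h => absurd h h1⟩
  obtain ⟨u₁, u₂, hu₁, hu₂, hgu⟩ := perm_double_coset σ f g hq
  exact ⟨u₁, hU u₁ hu₁, f, hfF, u₂, hU u₂ hu₂, hgu⟩
end

section
/- Let X be an infinite set with the discrete topology and let G be the group of all permutations of X acting on OnePoint X = X ∪ {∞} by g•x = g(x) for x ∈ X, g•∞ = ∞. Then the closure E of {k ↦ g•k : g ∈ G} in (OnePoint X) → (OnePoint X) with the product topology is exactly the set of maps f : OnePoint X → OnePoint X such that f(∞) = ∞ and f is injective where its value lies in X, i.e. for all a, b ∈ OnePoint X, if f(a) = f(b) ≠ ∞ then a = b. -/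
open Topology Filter

/-- For an infinite discrete space `X`, the closure in `(OnePoint X) → (OnePoint X)` (product
topology) of the set of extended permutations of `X` is exactly the set of self-maps fixing
`∞` that are injective wherever their value lies in `X`. -/
theorem ellis_of_permGroup_eq
    {X : Type*} [TopologicalSpace X] [DiscreteTopology X] [Infinite X] :
    closure {f : OnePoint X → OnePoint X | ∃ g : Equiv.Perm X, f = permOnePoint g}
      = {f : OnePoint X → OnePoint X |
          f OnePoint.infty = OnePoint.infty ∧
          ∀ a b : OnePoint X, f a = f b → f a ≠ OnePoint.infty → a = b} := by
  classical
  set S := {f : OnePoint X → OnePoint X | ∃ g : Equiv.Perm X, f = permOnePoint g} with hS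
  set R := {f : OnePoint X → OnePoint X |
      f OnePoint.infty = OnePoint.infty ∧
      ∀ a b : OnePoint X, f a = f b → f a ≠ OnePoint.infty → a = b} with hR
  have hopen_single : ∀ y : X, IsOpen ({(y : OnePoint X)} : Set (OnePoint X)) := by
    intro y
    have := OnePoint.isOpenEmbedding_coe (X := X) |>.isOpenMap {y} (isOpen_discrete _)
    simpa using this
  apply Set.Subset.antisymm
  · -- closure S ⊆ R : R is closed and S ⊆ R
    have hRclosed : IsClosed R := by
      have hRe : R = {f : OnePoint X → OnePoint X | f OnePoint.infty = OnePoint.infty} ∩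
          ⋂ (a : OnePoint X) (b : OnePoint X),
            {f : OnePoint X → OnePoint X |
              f a = f b → f a ≠ OnePoint.infty → a = b} := by
        ext f
        simp only [hR, Set.mem_setOf_eq, Set.mem_inter_iff, Set.mem_iInter]
      rw [hRe]
      apply IsClosed.inter
      · have : {f : OnePoint X → OnePoint X | f OnePoint.infty = OnePoint.infty} =
            (fun f : OnePoint X → OnePoint X => f OnePoint.infty) ⁻¹'
              {(OnePoint.infty : OnePoint X)} := rfl
        rw [this]
        exact OnePoint.isClosed_infty.preimage (continuous_apply _)
      · refine isClosed_iInter fun a => isClosed_iInter fun b => ?_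
        by_cases hab : a = b
        · subst hab
          convert isClosed_univ
          ext f; simp
        · have : {f : OnePoint X → OnePoint X |
              f a = f b → f a ≠ OnePoint.infty → a = b} =
              (⋃ y : X, {f : OnePoint X → OnePoint X | f a = (y : OnePoint X)} ∩
                {f : OnePoint X → OnePoint X | f b = (y : OnePoint X)})ᶜ := by
            ext f
            simp only [Set.mem_setOf_eq, Set.mem_compl_iff, Set.mem_iUnion,
              Set.mem_inter_iff]
            constructor
            · rintro h ⟨y, h1, h2⟩
              exact hab (h (h1.trans h2.symm) (h1 ▸ OnePoint.coe_ne_infty y))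
            · intro h h1 h2
              exfalso
              obtain ⟨y, hy⟩ := OnePoint.ne_infty_iff_exists.1 h2
              exact h ⟨y, hy.symm, h1 ▸ hy.symm⟩
          rw [this]
          refine (isOpen_iUnion fun y => ?_).isClosed_compl
          exact ((hopen_single y).preimage
              (continuous_apply (A := fun _ : OnePoint X => OnePoint X) a)).inter
            ((hopen_single y).preimage
              (continuous_apply (A := fun _ : OnePoint X => OnePoint X) b))
    refine closure_minimal ?_ hRclosed
    rintro f ⟨g, rfl⟩
    refine ⟨rfl, fun a b hab hne => ?_⟩
    induction a using OnePoint.rec with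
    | infty => exact absurd rfl hne
    | coe x =>
      induction b using OnePoint.rec with
      | infty => exact absurd hab hne
      | coe y =>
        have : g x = g y := OnePoint.coe_injective hab
        exact congrArg _ (g.injective this)
  · -- R ⊆ closure S : density
    intro f hf
    obtain ⟨hfi, hinj⟩ := hf
    rw [mem_closure_iff_nhds]
    intro s hs
    rw [nhds_pi, Filter.mem_pi'] at hs
    obtain ⟨I, t, ht, hts⟩ := hs
    -- pick a representative value
    have : Nonempty X := inferInstance
    set ψ : OnePoint X → X := fun o => OnePoint.rec (Classical.arbitrary X) id o with hψdef
    have hψ : ∀ o : OnePoint X, o ≠ OnePoint.infty → ((ψ o : X) : OnePoint X) = o := by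
      intro o ho
      induction o using OnePoint.rec with
      | infty => exact absurd rfl ho
      | coe y => rfl
    set P : Set X := {x : X | (x : OnePoint X) ∈ I} with hPdef
    have hPfin : P.Finite :=
      (I.finite_toSet).preimage (OnePoint.coe_injective.injOn)
    set B : Set X := {x : X | (x : OnePoint X) ∈ I ∧ f x = OnePoint.infty} with hBdef
    have hBfin : B.Finite := hPfin.subset fun x hx => hx.1
    -- for x ∈ B, the set of bad targets is finite
    have hVfin : ∀ x ∈ B, {z : X | (z : OnePoint X) ∉ t x}.Finite := by
      intro x hx
      have h1 : t (x : OnePoint X) ∈ 𝓝 (OnePoint.infty : OnePoint X) := hx.2 ▸ ht _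
      have h2 : (fun z : X => (z : OnePoint X)) ⁻¹' t (x : OnePoint X) ∈
          Filter.coclosedCompact X := by
        rw [← OnePoint.comap_coe_nhds_infty]
        exact Filter.preimage_mem_comap h1
      rw [Filter.coclosedCompact_eq_cocompact, cocompact_eq_cofinite,
        Filter.mem_cofinite] at h2
      exact h2
    set W : Set X := {z : X | (∀ x ∈ B, (z : OnePoint X) ∈ t x) ∧
        z ∉ (fun x : X => ψ (f x)) '' P} with hWdef
    have hWinf : W.Infinite := by
      have hcompl : Wᶜ ⊆ (⋃ x ∈ hBfin.toFinset, {z : X | (z : OnePoint X) ∉ t x}) ∪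
          (fun x : X => ψ (f x)) '' P := by
        intro z hz
        simp only [hWdef, Set.mem_compl_iff, Set.mem_setOf_eq, not_and_or, not_not] at hz
        rcases hz with hz | hz
        · push_neg at hz
          obtain ⟨x, hx, hzx⟩ := hz
          exact Or.inl (Set.mem_biUnion (hBfin.mem_toFinset.2 hx) hzx)
        · exact Or.inr hz
      have hfin : (Wᶜ).Finite := by
        refine Set.Finite.subset (Set.Finite.union ?_ (hPfin.image _)) hcompl
        exact (hBfin.toFinset.finite_toSet).biUnion fun x hx =>
          hVfin x (hBfin.mem_toFinset.1 hx)
      exact Set.Finite.infinite_compl hfin |>.mono (by simp)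
    -- an injection of B into W
    haveI : Finite B := hBfin
    haveI : Infinite W := hWinf.to_subtype
    obtain ⟨eB⟩ := nonempty_embedding_nat B
    let eW : ℕ ↪ W := Infinite.natEmbedding W
    -- the partial map on P
    let Φfun : P → X := fun x =>
      if h : f (x : OnePoint X) = OnePoint.infty then (eW (eB ⟨x.1, x.2, h⟩) : X)
      else ψ (f (x : OnePoint X))
    have hΦW : ∀ (x : P) (h : f (x : OnePoint X) = OnePoint.infty),
        Φfun x ∈ W := by
      intro x h
      simp only [Φfun, dif_pos h]
      exact (eW (eB ⟨x.1, x.2, h⟩)).2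
    have hΦinj : Function.Injective Φfun := by
      rintro ⟨x, hx⟩ ⟨y, hy⟩ hxy
      simp only [Φfun] at hxy
      by_cases h1 : f (x : OnePoint X) = OnePoint.infty <;>
        by_cases h2 : f (y : OnePoint X) = OnePoint.infty
      · rw [dif_pos h1, dif_pos h2] at hxy
        have h3 := eB.injective (eW.injective (Subtype.ext hxy))
        have h4 : x = y := congrArg Subtype.val h3
        exact Subtype.ext h4
      · rw [dif_pos h1, dif_neg h2] at hxy
        exfalso
        have hmem : (eW (eB ⟨x, hx, h1⟩) : X) ∈ W := (eW (eB ⟨x, hx, h1⟩)).2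
        exact hmem.2 ⟨y, hy, hxy.symm⟩
      · rw [dif_neg h1, dif_pos h2] at hxy
        exfalso
        have hmem : (eW (eB ⟨y, hy, h2⟩) : X) ∈ W := (eW (eB ⟨y, hy, h2⟩)).2
        exact hmem.2 ⟨x, hx, hxy⟩
      · rw [dif_neg h1, dif_neg h2] at hxy
        have : f (x : OnePoint X) = f (y : OnePoint X) := by
          rw [← hψ _ h1, ← hψ _ h2, hxy]
        exact Subtype.ext (OnePoint.coe_injective (hinj _ _ this (this ▸ h1)))
    -- extend to a permutation
    have hcard : Cardinal.mk P < Cardinal.mk X :=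
      lt_of_lt_of_le hPfin.lt_aleph0 (Cardinal.aleph0_le_mk X)
    obtain ⟨g, hg⟩ := Cardinal.extend_function_of_lt ⟨Φfun, hΦinj⟩ hcard ⟨Equiv.refl X⟩
    refine ⟨permOnePoint g, hts ?_, g, rfl⟩
    intro i hi
    induction i using OnePoint.rec with
    | infty =>
      have := mem_of_mem_nhds (ht OnePoint.infty)
      rwa [hfi] at this
    | coe x =>
      have hx : x ∈ P := hi
      have hgx : g x = Φfun ⟨x, hx⟩ := hg ⟨x, hx⟩
      have hperm : permOnePoint g (x : OnePoint X) = ((g x : X) : OnePoint X) := rfl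
      by_cases h : f (x : OnePoint X) = OnePoint.infty
      · have := (hΦW ⟨x, hx⟩ h).1 x ⟨hx, h⟩
        rw [hperm, hgx]
        exact this
      · have : Φfun ⟨x, hx⟩ = ψ (f (x : OnePoint X)) := dif_neg h
        rw [hperm, hgx, this, hψ _ h]
        exact mem_of_mem_nhds (ht (x : OnePoint X))
end

section
/- Let X be an infinite set with the discrete topology, G the group of all permutations of X acting on OnePoint X = X ∪ {∞} (fixing ∞), and E the closure of {k ↦ g•k : g ∈ G} in (OnePoint X) → (OnePoint X) with the product topology, a monoid under composition. Then E is an inverse monoid: for every f ∈ E there is a unique f* ∈ E with f ∘ f* ∘ f = f and f* ∘ f ∘ f* = f*; the involution f ↦ f* is continuous; and the map sending f ∈ E to the partial bijection of X obtained by restricting f to D(f) = {x ∈ X : f(x) ≠ ∞} is a bijection of E onto the set of all partial bijections of X which transforms composition in E into composition of partial bijections (hence E is isomorphic to the symmetric inverse monoid I_X on X). -/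
/-- The Ellis compactification of the permutation group of a discrete space `X` from its
action on `OnePoint X`. -/
def ellisPerm (X : Type*) [TopologicalSpace X] : Set (OnePoint X → OnePoint X) :=
  closure {f : OnePoint X → OnePoint X | ∃ g : Equiv.Perm X, f = permOnePoint g}

/-- Extension of a partial map `p : X → OnePoint X` (with `∞` encoding "undefined") to a
self-map of `OnePoint X` sending `∞` to `∞`. -/
def partialExtend {X : Type*} (p : X → OnePoint X) : OnePoint X → OnePoint X :=
  fun k => OnePoint.rec OnePoint.infty p k

/-- Composition of partial maps of `X`, encoded as maps `X → OnePoint X`. -/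
def partialComp {X : Type*} (p q : X → OnePoint X) : X → OnePoint X :=
  fun x => partialExtend p (q x)

open OnePoint Set Filter Topology

namespace EllisAux

variable {X : Type*}

/-- Partial injection predicate. -/
def PInj (f : OnePoint X → OnePoint X) : Prop :=
  f ∞ = ∞ ∧ ∀ x y : X, f ↑x = f ↑y → f ↑x ≠ ∞ → x = y

lemma permOnePoint_coe (g : Equiv.Perm X) (x : X) : permOnePoint g ↑x = ↑(g x) := rfl

lemma pinj_perm (g : Equiv.Perm X) : PInj (permOnePoint g) := by
  refine ⟨rfl, fun x y h _ => ?_⟩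
  rw [permOnePoint_coe, permOnePoint_coe, OnePoint.coe_eq_coe] at h
  exact g.injective h

section topo

variable [TopologicalSpace X] [DiscreteTopology X]

lemma isOpen_singleton_coe (a : X) : IsOpen ({(↑a : OnePoint X)} : Set (OnePoint X)) := by
  have : ({(↑a : OnePoint X)} : Set (OnePoint X)) = (↑) '' {a} := by simp
  rw [this]
  exact OnePoint.isOpenMap_coe _ (isOpen_discrete _)

lemma isClosed_pinj : IsClosed {f : OnePoint X → OnePoint X | PInj f} := by
  have key : {f : OnePoint X → OnePoint X | PInj f}
      = {f : OnePoint X → OnePoint X | f ∞ = ∞} ∩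
        ⋂ (x : X) (y : X), {f : OnePoint X → OnePoint X | f ↑x = f ↑y → f ↑x ≠ ∞ → x = y} := by
    ext f
    simp only [PInj, mem_setOf_eq, mem_inter_iff, mem_iInter]
  rw [key]
  refine IsClosed.inter ?_ (isClosed_iInter fun x => isClosed_iInter fun y => ?_)
  · show IsClosed ((fun f : OnePoint X → OnePoint X => f ∞) ⁻¹' {∞})
    exact OnePoint.isClosed_infty.preimage (continuous_apply ∞)
  by_cases hxy : x = y
  · subst hxy
    have : {f : OnePoint X → OnePoint X | f ↑x = f ↑x → f ↑x ≠ ∞ → x = x} = univ := by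
      ext f; simp
    rw [this]; exact isClosed_univ
  · have : {f : OnePoint X → OnePoint X | f ↑x = f ↑y → f ↑x ≠ ∞ → x = y}
        = (⋃ a : X, {f : OnePoint X → OnePoint X | f ↑x = ↑a} ∩
            {f : OnePoint X → OnePoint X | f ↑y = ↑a})ᶜ := by
      ext f
      simp only [mem_compl_iff, mem_iUnion, mem_inter_iff, mem_setOf_eq, not_exists]
      constructor
      · intro h a ⟨h1, h2⟩
        exact hxy (h (h1.trans h2.symm) (by rw [h1]; exact OnePoint.coe_ne_infty a))
      · intro h h1 h2
        cases hfx : f ↑x with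
        | infty => exact absurd hfx h2
        | coe a => exact absurd ⟨hfx, h1.symm.trans hfx⟩ (h a)
    rw [this]
    refine (isOpen_iUnion fun a => IsOpen.inter ?_ ?_).isClosed_compl
    · show IsOpen ((fun f : OnePoint X → OnePoint X => f ↑x) ⁻¹' {↑a})
      exact (isOpen_singleton_coe a).preimage (continuous_apply _)
    · show IsOpen ((fun f : OnePoint X → OnePoint X => f ↑y) ⁻¹' {↑a})
      exact (isOpen_singleton_coe a).preimage (continuous_apply _)

end topo

lemma exists_perm_extend [Infinite X] {s : Set X} (hs : s.Finite) {σ : X → X}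
    (hσ : Set.InjOn σ s) : ∃ g : Equiv.Perm X, ∀ x ∈ s, g x = σ x := by
  have hcard : Cardinal.mk s < Cardinal.mk X :=
    hs.lt_aleph0.trans_le (Cardinal.aleph0_le_mk X)
  obtain ⟨g, hg⟩ := Cardinal.extend_function_of_lt
    ⟨fun x : s => σ x, fun a b hab => Subtype.ext (hσ a.2 b.2 hab)⟩ hcard ⟨Equiv.refl X⟩
  exact ⟨g, fun x hx => hg ⟨x, hx⟩⟩

lemma pinj_mem_closure [TopologicalSpace X] [DiscreteTopology X] [Infinite X]
    {f : OnePoint X → OnePoint X} (hf : PInj f) : f ∈ ellisPerm X := by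
  classical
  rw [ellisPerm, mem_closure_iff_nhds]
  intro U hU
  rw [nhds_pi, Filter.mem_pi] at hU
  obtain ⟨I, hIfin, V, hV, hVU⟩ := hU
  set F : Set X := ((↑) : X → OnePoint X) ⁻¹' I with hFdef
  have hFfin : F.Finite := hIfin.preimage OnePoint.coe_injective.injOn
  let φ : X → X := fun x => OnePoint.rec x (fun a => a) (f ↑x)
  have hφcoe : ∀ x : X, f ↑x ≠ ∞ → (↑(φ x) : OnePoint X) = f ↑x := by
    intro x hx
    cases hfx : f ↑x with
    | infty => exact absurd hfx hx
    | coe a =>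
      simp only [φ, hfx]
      rfl
  let bad : X → Set X := fun x => {a : X | (↑a : OnePoint X) ∉ V ↑x}
  have hbad : ∀ x : X, f ↑x = ∞ → (bad x).Finite := by
    intro x hx
    have hVx : V ↑x ∈ 𝓝 (∞ : OnePoint X) := hx ▸ hV ↑x
    rw [OnePoint.hasBasis_nhds_infty.mem_iff] at hVx
    obtain ⟨s, ⟨hscl, hsc⟩, hsub⟩ := hVx
    refine hsc.finite_of_discrete.subset fun a ha => ?_
    by_contra has
    exact ha (hsub (Or.inl (Set.mem_image_of_mem _ has)))
  set B : Set X := {x | x ∈ F ∧ f ↑x = ∞} with hBdef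
  have hBfin : B.Finite := hFfin.subset fun x hx => hx.1
  set BAll : Set X := φ '' F ∪ ⋃ x ∈ B, bad x with hBAdef
  have hBAfin : BAll.Finite := (hFfin.image φ).union (hBfin.biUnion fun x hx => hbad x hx.2)
  set C : Set X := BAllᶜ with hCdef
  have hCinf : C.Infinite := hBAfin.infinite_compl
  have hBC : Nonempty (↥B ↪ ↥C) := by
    rw [← Cardinal.le_def]
    exact hBfin.lt_aleph0.le.trans (Cardinal.infinite_iff.mp hCinf.to_subtype)
  obtain ⟨e⟩ := hBC
  let σ : X → X := fun x => if hx : x ∈ B then (e ⟨x, hx⟩ : X) else φ x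
  have hσB : ∀ x (hx : x ∈ B), σ x = (e ⟨x, hx⟩ : X) := fun x hx => dif_pos hx
  have hσA : ∀ x, x ∉ B → σ x = φ x := fun x hx => dif_neg hx
  have heC : ∀ b : ↥B, ((e b : X)) ∈ C := fun b => (e b).2
  have hinj : Set.InjOn σ F := by
    intro x hxF y hyF hxy
    by_cases hx : x ∈ B <;> by_cases hy : y ∈ B
    · rw [hσB x hx, hσB y hy] at hxy
      exact congrArg Subtype.val (e.injective (Subtype.ext hxy))
    · exfalso
      rw [hσB x hx, hσA y hy] at hxy
      have h1 : (e ⟨x, hx⟩ : X) ∈ C := heC _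
      rw [hxy] at h1
      exact h1 (Or.inl (Set.mem_image_of_mem φ hyF))
    · exfalso
      rw [hσA x hx, hσB y hy] at hxy
      have h1 : (e ⟨y, hy⟩ : X) ∈ C := heC _
      rw [← hxy] at h1
      exact h1 (Or.inl (Set.mem_image_of_mem φ hxF))
    · rw [hσA x hx, hσA y hy] at hxy
      have hfx : f ↑x ≠ ∞ := fun h => hx ⟨hxF, h⟩
      have hfy : f ↑y ≠ ∞ := fun h => hy ⟨hyF, h⟩
      have heq : f ↑x = f ↑y := by rw [← hφcoe x hfx, ← hφcoe y hfy, hxy]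
      exact hf.2 x y heq hfx
  obtain ⟨g, hg⟩ := exists_perm_extend hFfin hinj
  refine ⟨permOnePoint g, hVU ?_, g, rfl⟩
  intro k hk
  cases k with
  | infty =>
    have h1 := hV ∞
    rw [hf.1] at h1
    exact mem_of_mem_nhds h1
  | coe x =>
    have hxF : x ∈ F := hk
    rw [show permOnePoint g ↑x = ↑(g x) from rfl, hg x hxF]
    by_cases hx : x ∈ B
    · rw [hσB x hx]
      have hnb : (e ⟨x, hx⟩ : X) ∉ bad x :=
        fun hb => heC ⟨x, hx⟩ (Or.inr (Set.mem_biUnion hx hb))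
      by_contra hc
      exact hnb hc
    · rw [hσA x hx, hφcoe x (fun h => hx ⟨hxF, h⟩)]
      exact mem_of_mem_nhds (hV ↑x)

lemma ellisPerm_eq [TopologicalSpace X] [DiscreteTopology X] [Infinite X] :
    ellisPerm X = {f : OnePoint X → OnePoint X | PInj f} :=
  subset_antisymm
    (closure_minimal (fun f ⟨g, hg⟩ => hg ▸ pinj_perm g) isClosed_pinj)
    (fun _ hf => pinj_mem_closure hf)

open scoped Classical in
noncomputable def pinvAux (f : OnePoint X → OnePoint X) (y : X) : OnePoint X :=
  if h : ∃ x : X, f ↑x = ↑y then ↑(Classical.choose h) else ∞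

noncomputable def pinv (f : OnePoint X → OnePoint X) : OnePoint X → OnePoint X :=
  fun k => OnePoint.rec ∞ (pinvAux f) k

lemma pinv_coe (f : OnePoint X → OnePoint X) (y : X) : pinv f ↑y = pinvAux f y := rfl

lemma pinv_infty (f : OnePoint X → OnePoint X) : pinv f ∞ = ∞ := rfl

lemma pinv_coe_of_eq {f : OnePoint X → OnePoint X} (hf : PInj f) {x y : X}
    (hxy : f ↑x = ↑y) : pinv f ↑y = ↑x := by
  have h : ∃ x : X, f ↑x = ↑y := ⟨x, hxy⟩
  have hc := Classical.choose_spec h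
  have hcx : Classical.choose h = x :=
    hf.2 _ _ (hc.trans hxy.symm) (by rw [hc]; exact OnePoint.coe_ne_infty y)
  rw [pinv_coe, pinvAux, dif_pos h, hcx]

lemma pinv_coe_of_not (f : OnePoint X → OnePoint X) {y : X}
    (h : ¬ ∃ x : X, f ↑x = ↑y) : pinv f ↑y = ∞ := by
  rw [pinv_coe, pinvAux, dif_neg h]

lemma pinj_pinv {f : OnePoint X → OnePoint X} (hf : PInj f) : PInj (pinv f) := by
  refine ⟨rfl, fun y₁ y₂ h hne => ?_⟩
  by_cases h1 : ∃ x : X, f ↑x = ↑y₁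
  · obtain ⟨x₁, hx₁⟩ := h1
    rw [pinv_coe_of_eq hf hx₁] at h hne
    by_cases h2 : ∃ x : X, f ↑x = ↑y₂
    · obtain ⟨x₂, hx₂⟩ := h2
      rw [pinv_coe_of_eq hf hx₂] at h
      rw [OnePoint.coe_eq_coe] at h
      subst h
      have h5 := hx₁.symm.trans hx₂
      rwa [OnePoint.coe_eq_coe] at h5
    · rw [pinv_coe_of_not f h2] at h
      exact absurd h (OnePoint.coe_ne_infty x₁)
  · rw [pinv_coe_of_not f h1] at hne
    exact absurd rfl hne

lemma triple_id {f : OnePoint X → OnePoint X} (hf : PInj f) : f ∘ pinv f ∘ f = f := by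
  funext k
  cases k with
  | infty => show f (pinv f (f ∞)) = f ∞; rw [hf.1, pinv_infty, hf.1]
  | coe x =>
    show f (pinv f (f ↑x)) = f ↑x
    cases hfx : f ↑x with
    | infty => rw [pinv_infty, hf.1]
    | coe y => rw [pinv_coe_of_eq hf hfx, hfx]

lemma triple_inv {f : OnePoint X → OnePoint X} (hf : PInj f) :
    pinv f ∘ f ∘ pinv f = pinv f := by
  funext k
  cases k with
  | infty => show pinv f (f (pinv f ∞)) = pinv f ∞; rw [pinv_infty, hf.1, pinv_infty]
  | coe y =>
    show pinv f (f (pinv f ↑y)) = pinv f ↑y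
    by_cases h : ∃ x : X, f ↑x = ↑y
    · obtain ⟨x, hx⟩ := h
      rw [pinv_coe_of_eq hf hx, hx]
      exact pinv_coe_of_eq hf hx
    · rw [pinv_coe_of_not f h, hf.1, pinv_infty]

lemma pinv_unique {f g : OnePoint X → OnePoint X} (hf : PInj f) (hg : PInj g)
    (h1 : f ∘ g ∘ f = f) (h2 : g ∘ f ∘ g = g) : g = pinv f := by
  funext k
  cases k with
  | infty => rw [hg.1, pinv_infty]
  | coe y =>
    by_cases h : ∃ x : X, f ↑x = ↑y
    · obtain ⟨x, hx⟩ := h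
      have hfg : f (g ↑y) = ↑y := by
        have h3 := congrFun h1 ↑x
        simp only [Function.comp_apply] at h3
        rwa [hx] at h3
      have hgy : g ↑y ≠ ∞ := by
        intro hh
        rw [hh, hf.1] at hfg
        exact OnePoint.infty_ne_coe y hfg
      cases hgy' : g ↑y with
      | infty => exact absurd hgy' hgy
      | coe x' =>
        rw [hgy'] at hfg
        rw [pinv_coe_of_eq hf hfg]
    · rw [pinv_coe_of_not f h]
      cases hgy : g ↑y with
      | infty => rfl
      | coe x =>
        exfalso
        have h3 := congrFun h2 ↑y
        simp only [Function.comp_apply] at h3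
        rw [hgy] at h3
        have hfx : f ↑x ≠ ∞ := by
          intro hh
          rw [hh, hg.1] at h3
          exact OnePoint.infty_ne_coe x h3
        cases hfx' : f ↑x with
        | infty => exact absurd hfx' hfx
        | coe y' =>
          rw [hfx'] at h3
          have hyy : y' = y :=
            hg.2 y' y (h3.trans hgy.symm) (by rw [h3]; exact OnePoint.coe_ne_infty x)
          exact h ⟨x, by rw [hfx', hyy]⟩

lemma pinj_comp {f h : OnePoint X → OnePoint X} (hf : PInj f) (hh : PInj h) :
    PInj (f ∘ h) := by
  refine ⟨by show f (h ∞) = ∞; rw [hh.1, hf.1], fun x y heq hne => ?_⟩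
  simp only [Function.comp_apply] at heq hne
  have hhx : h ↑x ≠ ∞ := by
    intro e; rw [e, hf.1] at hne; exact hne rfl
  cases hx' : h ↑x with
  | infty => exact absurd hx' hhx
  | coe a =>
    cases hy' : h ↑y with
    | infty =>
      rw [hx'] at heq hne
      rw [hy', hf.1] at heq
      exact absurd heq hne
    | coe b =>
      rw [hx'] at heq hne
      rw [hy'] at heq
      have hab : a = b := hf.2 a b heq hne
      subst hab
      exact hh.2 x y (hx'.trans hy'.symm) (hx' ▸ OnePoint.coe_ne_infty a)

lemma mem_pinj [TopologicalSpace X] [DiscreteTopology X] [Infinite X]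
    {f : OnePoint X → OnePoint X} (hf : f ∈ ellisPerm X) : PInj f := by
  rwa [ellisPerm_eq] at hf

end EllisAux

/-- The Ellis compactification `E` of the permutation group of an infinite discrete space `X`
is an inverse monoid under composition with continuous involution, and restriction to
`D(f) = {x : f(x) ≠ ∞}` is a composition-preserving bijection of `E` onto the symmetric
inverse monoid of all partial bijections of `X` (encoded as maps `X → OnePoint X` that are
injective where defined). -/
theorem ellisPerm_inverse_monoid_symmetric
    {X : Type*} [TopologicalSpace X] [DiscreteTopology X] [Infinite X] :
    id ∈ ellisPerm X ∧
    (∀ f ∈ ellisPerm X, ∀ h ∈ ellisPerm X, f ∘ h ∈ ellisPerm X) ∧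
    (∀ f ∈ ellisPerm X,
      ∃! g : OnePoint X → OnePoint X,
        g ∈ ellisPerm X ∧ f ∘ g ∘ f = f ∧ g ∘ f ∘ g = g) ∧
    (∃ star : ↥(ellisPerm X) → ↥(ellisPerm X),
      Continuous star ∧
      ∀ f : ↥(ellisPerm X),
        f.1 ∘ (star f).1 ∘ f.1 = f.1 ∧ (star f).1 ∘ f.1 ∘ (star f).1 = (star f).1) ∧
    Function.Injective
      (fun f : ↥(ellisPerm X) => fun x : X => f.1 (↑x : OnePoint X)) ∧
    (Set.range (fun f : ↥(ellisPerm X) => fun x : X => f.1 (↑x : OnePoint X))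
      = {p : X → OnePoint X | ∀ a b : X, p a = p b → p a ≠ OnePoint.infty → a = b}) ∧
    (∀ f h k : ↥(ellisPerm X), k.1 = f.1 ∘ h.1 →
      (fun x : X => k.1 (↑x : OnePoint X))
        = partialComp (fun x : X => f.1 (↑x : OnePoint X))
            (fun x : X => h.1 (↑x : OnePoint X))) := by
  classical
  open EllisAux in
  have hE : ∀ {f : OnePoint X → OnePoint X}, f ∈ ellisPerm X ↔ PInj f := by
    intro f
    rw [ellisPerm_eq]
    exact Iff.rfl
  refine ⟨?_, ?_, ?_, ?_, ?_, ?_, ?_⟩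
  · exact subset_closure ⟨Equiv.refl X, funext fun k => by cases k <;> rfl⟩
  · intro f hf h hh
    exact hE.mpr (pinj_comp (hE.mp hf) (hE.mp hh))
  · intro f hf
    have hf' := hE.mp hf
    refine ⟨pinv f, ⟨hE.mpr (pinj_pinv hf'), triple_id hf', triple_inv hf'⟩, ?_⟩
    rintro g ⟨hgE, hg1, hg2⟩
    exact pinv_unique hf' (hE.mp hgE) hg1 hg2
  · refine ⟨fun f => ⟨pinv f.1, hE.mpr (pinj_pinv (hE.mp f.2))⟩, ?_, fun f =>
      ⟨triple_id (hE.mp f.2), triple_inv (hE.mp f.2)⟩⟩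
    rw [continuous_induced_rng]
    apply continuous_pi
    intro k
    cases k with
    | infty => exact continuous_const
    | coe y =>
      rw [continuous_iff_continuousAt]
      intro f₀
      have hf₀ : PInj f₀.1 := hE.mp f₀.2
      by_cases h : ∃ x : X, f₀.1 ↑x = ↑y
      · obtain ⟨x, hx⟩ := h
        have hUopen : IsOpen {f : ↥(ellisPerm X) | f.1 ↑x = ↑y} := by
          show IsOpen (Subtype.val ⁻¹'
            ((fun F : OnePoint X → OnePoint X => F ↑x) ⁻¹' {(↑y : OnePoint X)}))
          exact (((isOpen_singleton_coe y).preimage (continuous_apply _)).preimage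
            continuous_subtype_val)
        have hloc : ∀ᶠ f : ↥(ellisPerm X) in 𝓝 f₀, pinv f.1 ↑y = (↑x : OnePoint X) := by
          filter_upwards [hUopen.mem_nhds hx] with f hf2
          exact pinv_coe_of_eq (hE.mp f.2) hf2
        have hval : pinv f₀.1 ↑y = (↑x : OnePoint X) := pinv_coe_of_eq hf₀ hx
        show Filter.Tendsto (fun f : ↥(ellisPerm X) => pinv f.1 ↑y) (𝓝 f₀) (𝓝 (pinv f₀.1 ↑y))
        rw [hval]
        exact Filter.Tendsto.congr' (hloc.mono fun f hf2 => hf2.symm) tendsto_const_nhds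
      · show Filter.Tendsto (fun f : ↥(ellisPerm X) => pinv f.1 ↑y) (𝓝 f₀) (𝓝 (pinv f₀.1 ↑y))
        rw [pinv_coe_of_not f₀.1 h]
        rw [OnePoint.hasBasis_nhds_infty.tendsto_right_iff]
        rintro s ⟨hscl, hsc⟩
        have hsfin := hsc.finite_of_discrete
        have hUopen : IsOpen {f : ↥(ellisPerm X) | ∀ x ∈ s, f.1 ↑x ≠ ↑y} := by
          have hrw : {f : ↥(ellisPerm X) | ∀ x ∈ s, f.1 ↑x ≠ ↑y}
              = ⋂ x ∈ s, Subtype.val ⁻¹'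
                ((fun F : OnePoint X → OnePoint X => F ↑x) ⁻¹' {(↑y : OnePoint X)})ᶜ := by
            ext f
            simp only [Set.mem_setOf_eq, Set.mem_iInter, Set.mem_preimage, Set.mem_compl_iff,
              Set.mem_singleton_iff]
          rw [hrw]
          refine hsfin.isOpen_biInter fun x _ => ?_
          exact (isClosed_singleton.isOpen_compl.preimage (continuous_apply _)).preimage
            continuous_subtype_val
        have hmem : f₀ ∈ {f : ↥(ellisPerm X) | ∀ x ∈ s, f.1 ↑x ≠ ↑y} :=
          fun x _ hxy => h ⟨x, hxy⟩
        filter_upwards [hUopen.mem_nhds hmem] with f hf2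
        by_cases hex : ∃ x : X, f.1 ↑x = ↑y
        · obtain ⟨x, hx⟩ := hex
          rw [pinv_coe_of_eq (hE.mp f.2) hx]
          exact Or.inl ⟨x, fun hxs => hf2 x hxs hx, rfl⟩
        · rw [pinv_coe_of_not f.1 hex]
          exact Or.inr rfl
  · intro f g hfg
    apply Subtype.ext
    funext k
    cases k with
    | infty => rw [(hE.mp f.2).1, (hE.mp g.2).1]
    | coe x => exact congrFun hfg x
  · ext p
    constructor
    · rintro ⟨f, rfl⟩
      exact fun a b hab hne => (hE.mp f.2).2 a b hab hne
    · intro hp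
      refine ⟨⟨partialExtend p, hE.mpr ⟨rfl, fun a b hab hne => hp a b hab hne⟩⟩, ?_⟩
      funext x
      rfl
  · intro f h k hk
    funext x
    have hf' := hE.mp f.2
    show k.1 ↑x = partialExtend (fun x : X => f.1 ↑x) (h.1 ↑x)
    rw [hk]
    show f.1 (h.1 ↑x) = partialExtend (fun x : X => f.1 ↑x) (h.1 ↑x)
    cases hy : h.1 ↑x with
    | infty => exact hf'.1
    | coe y => rfl
end

section
/- Let X be a countably infinite set with the discrete topology, G the group of all permutations of X acting on OnePoint X = X ∪ {∞} (fixing ∞), and E the closure of {k ↦ g•k : g ∈ G} in (OnePoint X) → (OnePoint X) with the product topology. Then E is homeomorphic to the Cantor space ℕ → Bool. -/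
open Set Topology TopologicalSpace Metric

namespace EllisCantor

variable {α : Type*}

/-- Make a list of sets pairwise disjoint, keeping the union. -/
def disjointify : List (Set α) → List (Set α)
  | [] => []
  | D :: rest => D :: (disjointify rest).map (· \ D)

lemma disjointify_subset : ∀ (L : List (Set α)), ∀ E ∈ disjointify L, ∃ D ∈ L, E ⊆ D
  | [], E, hE => by simp [disjointify] at hE
  | D :: rest, E, hE => by
    rw [disjointify, List.mem_cons] at hE
    rcases hE with rfl | hE
    · exact ⟨E, List.mem_cons_self, subset_rfl⟩
    · rcases List.mem_map.mp hE with ⟨E', hE', rfl⟩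
      rcases disjointify_subset rest E' hE' with ⟨D', hD', hsub⟩
      exact ⟨D', List.mem_cons_of_mem _ hD', diff_subset.trans hsub⟩

lemma disjointify_clopen [TopologicalSpace α] :
    ∀ (L : List (Set α)), (∀ D ∈ L, IsClopen D) → ∀ E ∈ disjointify L, IsClopen E
  | [], _, E, hE => by simp [disjointify] at hE
  | D :: rest, h, E, hE => by
    rw [disjointify, List.mem_cons] at hE
    rcases hE with rfl | hE
    · exact h E (List.mem_cons_self)
    · rcases List.mem_map.mp hE with ⟨E', hE', rfl⟩
      exact (disjointify_clopen rest (fun D hD => h D (List.mem_cons_of_mem _ hD)) E' hE').diff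
        (h D (List.mem_cons_self))

lemma disjointify_union : ∀ (L : List (Set α)), (⋃ E ∈ disjointify L, E) = ⋃ D ∈ L, D
  | [] => by simp [disjointify]
  | D :: rest => by
    have : (⋃ E ∈ (disjointify rest).map (· \ D), E) = (⋃ E ∈ disjointify rest, E) \ D := by
      ext x
      simp only [mem_iUnion, List.mem_map, mem_diff, exists_prop]
      constructor
      · rintro ⟨E, ⟨E', hE', rfl⟩, hx⟩
        exact ⟨⟨E', hE', hx.1⟩, hx.2⟩
      · rintro ⟨⟨E', hE', hx⟩, hxD⟩
        exact ⟨E' \ D, ⟨E', hE', rfl⟩, hx, hxD⟩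
    simp only [disjointify, List.mem_cons, iUnion_iUnion_eq_or_left, this,
      disjointify_union rest]
    rw [union_diff_self]

lemma disjointify_pairwise : ∀ (L : List (Set α)), (disjointify L).Pairwise Disjoint
  | [] => List.Pairwise.nil
  | D :: rest => by
    rw [disjointify, List.pairwise_cons]
    constructor
    · intro E hE
      rcases List.mem_map.mp hE with ⟨E', _, rfl⟩
      exact disjoint_sdiff_right
    · exact (disjointify_pairwise rest).map _
        (fun a b hab => hab.mono diff_subset diff_subset)

open scoped Classical in
/-- Partition a nonempty clopen set in a compact totally disconnected metric space into finitely
many nonempty clopen pieces of small diameter. -/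
lemma exists_partition [MetricSpace α] [CompactSpace α] [TotallyDisconnectedSpace α]
    (C : Set α) (hC : IsClopen C) (hne : C.Nonempty) {ε : ℝ} (hε : 0 < ε) :
    ∃ L : List (Set α), L ≠ [] ∧
      (∀ D ∈ L, D.Nonempty ∧ IsClopen D ∧ D ⊆ C ∧ ∀ p ∈ D, ∀ q ∈ D, dist p q ≤ ε) ∧
      L.Pairwise Disjoint ∧ (⋃ D ∈ L, D) = C := by
  have hbasis : IsTopologicalBasis {s : Set α | IsClopen s} :=
    loc_compact_Haus_tot_disc_of_zero_dim
  have key : ∀ x : α, x ∈ C → ∃ V : Set α, IsClopen V ∧ x ∈ V ∧ V ⊆ C ∩ Metric.ball x (ε / 2) := by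
    intro x hx
    have hopen : IsOpen (C ∩ Metric.ball x (ε / 2)) := hC.isOpen.inter Metric.isOpen_ball
    have hmem : x ∈ C ∩ Metric.ball x (ε / 2) := ⟨hx, Metric.mem_ball_self (by linarith)⟩
    obtain ⟨v, hv, hxv, hsub⟩ := hbasis.exists_subset_of_mem_open hmem hopen
    exact ⟨v, hv, hxv, hsub⟩
  choose V hVc hVx hVs using key
  have hcomp : IsCompact C := hC.isClosed.isCompact
  obtain ⟨t, ht⟩ := hcomp.elim_nhds_subcover' (fun x hx => V x hx)
    (fun x hx => (hVc x hx).isOpen.mem_nhds (hVx x hx))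
  -- the raw list
  set L0 : List (Set α) := t.toList.map (fun x => V x.1 x.2) with hL0
  have hL0cl : ∀ D ∈ L0, IsClopen D := by
    rintro D hD
    rcases List.mem_map.mp hD with ⟨x, _, rfl⟩
    exact hVc x.1 x.2
  have hL0small : ∀ D ∈ L0, D ⊆ C ∧ ∀ p ∈ D, ∀ q ∈ D, dist p q ≤ ε := by
    rintro D hD
    rcases List.mem_map.mp hD with ⟨x, _, rfl⟩
    refine ⟨(hVs x.1 x.2).trans inter_subset_left, fun p hp q hq => ?_⟩
    have hp' := ((hVs x.1 x.2) hp).2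
    have hq' := ((hVs x.1 x.2) hq).2
    rw [Metric.mem_ball] at hp' hq'
    calc dist p q ≤ dist p x.1 + dist x.1 q := dist_triangle _ _ _
      _ ≤ ε := by rw [dist_comm (x.1 : α) q] at *; linarith
  have hL0union : (⋃ D ∈ L0, D) = C := by
    apply subset_antisymm
    · refine iUnion₂_subset fun D hD => (hL0small D hD).1
    · intro y hy
      rcases mem_iUnion₂.mp (ht hy) with ⟨x, hx, hyx⟩
      exact mem_iUnion₂.mpr ⟨V x.1 x.2, List.mem_map.mpr ⟨x, by simp [hx], rfl⟩, hyx⟩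
  -- disjointify and filter
  set L1 := disjointify L0 with hL1
  set L := L1.filter (fun D => decide D.Nonempty) with hLdef
  have hmemL : ∀ E, E ∈ L ↔ E ∈ L1 ∧ E.Nonempty := by
    intro E
    rw [hLdef, List.mem_filter, decide_eq_true_iff]
  have hLunion : (⋃ D ∈ L, D) = C := by
    rw [← hL0union, ← disjointify_union L0, ← hL1]
    apply subset_antisymm
    · exact iUnion₂_subset fun D hD => subset_iUnion₂_of_subset D ((hmemL D).mp hD).1 subset_rfl
    · intro y hy
      rcases mem_iUnion₂.mp hy with ⟨D, hD, hyD⟩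
      exact mem_iUnion₂.mpr ⟨D, (hmemL D).mpr ⟨hD, ⟨y, hyD⟩⟩, hyD⟩
  refine ⟨L, ?_, ?_, List.Pairwise.filter _ (disjointify_pairwise L0), hLunion⟩
  · intro hL
    rw [hL, show (⋃ D ∈ ([] : List (Set α)), D) = ∅ by simp] at hLunion
    exact hne.ne_empty hLunion.symm
  · intro D hD
    rcases (hmemL D).mp hD with ⟨hD1, hDne⟩
    rcases disjointify_subset L0 D hD1 with ⟨D', hD', hsub⟩
    exact ⟨hDne, disjointify_clopen L0 hL0cl D hD1, hsub.trans (hL0small D' hD').1,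
      fun p hp q hq => (hL0small D' hD').2 p (hsub hp) q (hsub hq)⟩

/-- Split a nonempty clopen set into two nonempty disjoint clopen pieces, in a space without
isolated points. -/
lemma exists_split [MetricSpace α] [CompactSpace α] [TotallyDisconnectedSpace α]
    (hper : ∀ x : α, ¬ IsOpen ({x} : Set α))
    (C : Set α) (hC : IsClopen C) (hne : C.Nonempty) :
    ∃ U V : Set α, U.Nonempty ∧ V.Nonempty ∧ IsClopen U ∧ IsClopen V ∧ Disjoint U V ∧
      U ∪ V = C := by
  have hbasis : IsTopologicalBasis {s : Set α | IsClopen s} :=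
    loc_compact_Haus_tot_disc_of_zero_dim
  obtain ⟨a, ha⟩ := hne
  have : ∃ b ∈ C, b ≠ a := by
    by_contra h
    push_neg at h
    have : C = {a} := subset_antisymm (fun y hy => h y hy) (by simpa using ha)
    exact hper a (this ▸ hC.isOpen)
  obtain ⟨b, hb, hba⟩ := this
  have hopen : IsOpen (C \ {b}) := hC.isOpen.sdiff isClosed_singleton
  have hamem : a ∈ C \ {b} := ⟨ha, by simpa using hba.symm⟩
  obtain ⟨U, hU, haU, hUsub⟩ := hbasis.exists_subset_of_mem_open hamem hopen
  refine ⟨U, C \ U, ⟨a, haU⟩, ⟨b, hb, fun hbU => (hUsub hbU).2 rfl⟩, hU, hC.diff hU,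
    disjoint_sdiff_right, ?_⟩
  rw [union_diff_self, union_eq_self_of_subset_left (hUsub.trans diff_subset)]

end EllisCantor
namespace EllisCantor
set_option linter.unusedSectionVars false

variable {α : Type*} [MetricSpace α] [CompactSpace α] [TotallyDisconnectedSpace α]

/-- State of the Cantor-scheme construction: a precision level `n` and a nonempty list of
nonempty pairwise-disjoint clopen pieces of diameter at most `2⁻¹ ^ n`. -/
structure PState (α : Type*) [MetricSpace α] : Type _ where
  n : ℕ
  L : List (Set α)
  ne : L ≠ []
  props : ∀ D ∈ L, D.Nonempty ∧ IsClopen D ∧ ∀ p ∈ D, ∀ q ∈ D, dist p q ≤ (2:ℝ)⁻¹ ^ n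
  disj : L.Pairwise Disjoint

/-- The union of the pieces of a state. -/
def PState.carrier (s : PState α) : Set α := ⋃ D ∈ s.L, D

lemma PState.carrier_nonempty (s : PState α) : s.carrier.Nonempty := by
  obtain ⟨x, hx⟩ := (s.props _ (List.head_mem s.ne)).1
  exact ⟨x, mem_iUnion₂.mpr ⟨_, List.head_mem s.ne, hx⟩⟩

lemma isClosed_listUnion : ∀ (L : List (Set α)), (∀ D ∈ L, IsClosed D) →
    IsClosed (⋃ D ∈ L, D)
  | [], _ => by simp
  | D :: rest, h => by
    simp only [List.mem_cons, iUnion_iUnion_eq_or_left]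
    exact (h D (List.mem_cons_self)).union
      (isClosed_listUnion rest fun D hD => h D (List.mem_cons_of_mem _ hD))

lemma PState.carrier_isClosed (s : PState α) : IsClosed s.carrier :=
  isClosed_listUnion s.L fun D hD => (s.props D hD).2.1.isClosed

lemma PState.carrier_isCompact (s : PState α) : IsCompact s.carrier :=
  s.carrier_isClosed.isCompact

lemma PState.eq_singleton (s : PState α) (h : s.L.tail = []) :
    s.L = [s.L.head s.ne] := by
  conv_lhs => rw [← List.cons_head_tail s.ne]
  rw [h]

lemma PState.carrier_small (s : PState α) (h : s.L.tail = []) :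
    ∀ p ∈ s.carrier, ∀ q ∈ s.carrier, dist p q ≤ (2:ℝ)⁻¹ ^ s.n := by
  obtain ⟨D, hD⟩ : ∃ D, s.L = [D] := ⟨_, s.eq_singleton h⟩
  have hc : s.carrier = D := by rw [PState.carrier, hD]; simp
  rw [hc]
  exact (s.props D (by rw [hD]; simp)).2.2

/-- One splitting–refinement step of a single piece. -/
lemma exists_split_partition (hper : ∀ x : α, ¬ IsOpen ({x} : Set α))
    (D : Set α) (hcl : IsClopen D) (hne : D.Nonempty) (n : ℕ) :
    ∃ P : List (Set α) × List (Set α),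
      (P.1 ≠ [] ∧ P.2 ≠ []) ∧
      (∀ E ∈ P.1 ++ P.2, E.Nonempty ∧ IsClopen E ∧
        ∀ p ∈ E, ∀ q ∈ E, dist p q ≤ (2:ℝ)⁻¹ ^ (n+1)) ∧
      (P.1 ++ P.2).Pairwise Disjoint ∧
      ((⋃ E ∈ P.1, E) ∪ (⋃ E ∈ P.2, E) = D) := by
  obtain ⟨U, V, hUne, hVne, hUcl, hVcl, hUV, hunion⟩ := exists_split hper D hcl hne
  have hpow : (0:ℝ) < (2:ℝ)⁻¹ ^ (n+1) := by positivity
  obtain ⟨L1, hL1ne, hL1props, hL1disj, hL1union⟩ := exists_partition U hUcl hUne hpow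
  obtain ⟨L2, hL2ne, hL2props, hL2disj, hL2union⟩ := exists_partition V hVcl hVne hpow
  refine ⟨(L1, L2), ⟨hL1ne, hL2ne⟩, ?_, ?_, ?_⟩
  · intro E hE
    rcases List.mem_append.mp hE with hE | hE
    · exact ⟨(hL1props E hE).1, (hL1props E hE).2.1, (hL1props E hE).2.2.2⟩
    · exact ⟨(hL2props E hE).1, (hL2props E hE).2.1, (hL2props E hE).2.2.2⟩
  · rw [List.pairwise_append]
    exact ⟨hL1disj, hL2disj, fun a ha b hb =>
      hUV.mono (hL1props a ha).2.2.1 (hL2props b hb).2.2.1⟩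
  · rw [hL1union, hL2union, hunion]

variable (hper : ∀ x : α, ¬ IsOpen ({x} : Set α))

open scoped Classical in
/-- One step of the Cantor-scheme construction. -/
noncomputable def step (s : PState α) (b : Bool) : PState α :=
  if h : s.L.tail = [] then
    -- a single piece: split it in two, and partition each half at the next precision level
    let D := s.L.head s.ne
    let hD := s.props D (List.head_mem s.ne)
    let P := (exists_split_partition hper D hD.2.1 hD.1 s.n).choose
    have hP := (exists_split_partition hper D hD.2.1 hD.1 s.n).choose_spec
    { n := s.n + 1
      L := if b then P.2 else P.1
      ne := by cases b <;> simp only [Bool.false_eq_true, ite_false, ite_true] <;> [exact hP.1.1; exact hP.1.2]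
      props := by
        intro E hE
        refine hP.2.1 E ?_
        cases b <;> simp only [if_pos, if_neg, Bool.false_eq_true, ite_false, ite_true] at hE <;>
          [exact List.mem_append_left _ hE; exact List.mem_append_right _ hE]
      disj := by
        have := List.pairwise_append.mp hP.2.2.1
        cases b <;> simp only [Bool.false_eq_true, ite_false, ite_true] <;>
          [exact this.1; exact this.2.1] }
  else
    if b then
      { n := s.n
        L := s.L.tail
        ne := h
        props := fun D hD => s.props D (List.mem_of_mem_tail hD)
        disj := s.disj.sublist (List.tail_sublist _) }
    else
      { n := s.n
        L := [s.L.head s.ne]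
        ne := by simp
        props := by
          intro D hD
          rw [List.mem_singleton] at hD
          exact hD ▸ s.props _ (List.head_mem s.ne)
        disj := List.pairwise_singleton _ _ }

lemma disjoint_listUnion {L1 L2 : List (Set α)}
    (h : ∀ A ∈ L1, ∀ B ∈ L2, Disjoint A B) :
    Disjoint (⋃ D ∈ L1, D) (⋃ D ∈ L2, D) := by
  simp only [disjoint_iUnion_left, disjoint_iUnion_right]
  exact fun B hB A hA => h A hA B hB

lemma step_union (s : PState α) :
    (step hper s false).carrier ∪ (step hper s true).carrier = s.carrier := by
  by_cases h : s.L.tail = []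
  · rw [step, step, dif_pos h, dif_pos h]
    simp only [PState.carrier, Bool.false_eq_true, ite_false, ite_true]
    have hP := (exists_split_partition hper (s.L.head s.ne)
      (s.props _ (List.head_mem s.ne)).2.1 (s.props _ (List.head_mem s.ne)).1 s.n).choose_spec
    rw [hP.2.2.2]
    conv_rhs => rw [s.eq_singleton h]
    simp
  · rw [step, step, dif_neg h, dif_neg h]
    simp only [PState.carrier, if_true, Bool.false_eq_true, if_false]
    obtain ⟨D, T, hL⟩ : ∃ D T, s.L = D :: T := ⟨_, _, (List.cons_head_tail s.ne).symm⟩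
    simp [hL, List.mem_cons, iUnion_iUnion_eq_or_left]

lemma step_disjoint (s : PState α) :
    Disjoint (step hper s false).carrier (step hper s true).carrier := by
  by_cases h : s.L.tail = []
  · rw [step, step, dif_pos h, dif_pos h]
    simp only [PState.carrier, Bool.false_eq_true, ite_false, ite_true]
    have hP := (exists_split_partition hper (s.L.head s.ne)
      (s.props _ (List.head_mem s.ne)).2.1 (s.props _ (List.head_mem s.ne)).1 s.n).choose_spec
    have := List.pairwise_append.mp hP.2.2.1
    exact disjoint_listUnion fun A hA B hB => this.2.2 A hA B hB
  · rw [step, step, dif_neg h, dif_neg h]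
    simp only [PState.carrier, if_true, Bool.false_eq_true, if_false]
    have hd := s.disj
    obtain ⟨D, T, hL⟩ : ∃ D T, s.L = D :: T := ⟨_, _, (List.cons_head_tail s.ne).symm⟩
    rw [hL, List.pairwise_cons] at hd
    simp only [hL, List.head_cons, List.tail_cons]
    apply disjoint_listUnion
    intro A hA B hB
    rw [List.mem_singleton] at hA
    exact hA ▸ hd.1 B hB

lemma step_n_mono (s : PState α) (b : Bool) : s.n ≤ (step hper s b).n := by
  by_cases h : s.L.tail = []
  · rw [step, dif_pos h]; exact Nat.le_succ _
  · rw [step, dif_neg h]; cases b <;> simp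

lemma step_n_single (s : PState α) (h : s.L.tail = []) (b : Bool) :
    (step hper s b).n = s.n + 1 := by
  rw [step, dif_pos h]

lemma step_multi (s : PState α) (h : s.L.tail ≠ []) :
    (step hper s false).L.length = 1 ∧
    (step hper s true).L.length = s.L.length - 1 ∧ ∀ b, (step hper s b).n = s.n := by
  refine ⟨?_, ?_, ?_⟩
  · rw [step, dif_neg h]; simp
  · rw [step, dif_neg h]; simp [List.length_tail]
  · intro b; rw [step, dif_neg h]; cases b <;> simp

end EllisCantor
namespace EllisCantor
set_option linter.unusedSectionVars false

open Set Topology TopologicalSpace Metric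

variable {α : Type*} [MetricSpace α] [CompactSpace α] [TotallyDisconnectedSpace α] [Nonempty α]

/-- Initial state: a partition of the whole space into clopen pieces of diameter ≤ 1. -/
noncomputable def init (α : Type*) [MetricSpace α] [CompactSpace α] [TotallyDisconnectedSpace α]
    [Nonempty α] : PState α :=
  let h := exists_partition (univ : Set α) isClopen_univ univ_nonempty one_pos
  { n := 0
    L := h.choose
    ne := h.choose_spec.1
    props := fun D hD => ⟨(h.choose_spec.2.1 D hD).1, (h.choose_spec.2.1 D hD).2.1,
      by simpa using (h.choose_spec.2.1 D hD).2.2.2⟩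
    disj := h.choose_spec.2.2.1 }

lemma init_carrier : (init α).carrier = univ := by
  have h := (exists_partition (univ : Set α) isClopen_univ univ_nonempty one_pos).choose_spec
  exact h.2.2.2

variable (hper : ∀ x : α, ¬ IsOpen ({x} : Set α))

/-- The sequence of states along a branch `x : ℕ → Bool`. -/
noncomputable def states (x : ℕ → Bool) : ℕ → PState α
  | 0 => init α
  | (j+1) => step hper (states x j) (x j)

lemma states_congr (x y : ℕ → Bool) : ∀ j, (∀ i, i < j → x i = y i) →
    states (α := α) hper x j = states hper y j
  | 0, _ => rfl
  | (j+1), h => by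
    rw [states, states, states_congr x y j (fun i hi => h i (Nat.lt_succ_of_lt hi)),
      h j (Nat.lt_succ_self j)]

lemma states_carrier_antitone (x : ℕ → Bool) (j : ℕ) :
    (states (α := α) hper x (j+1)).carrier ⊆ (states hper x j).carrier := by
  rw [states]
  cases hx : x j
  · rw [← step_union hper (states hper x j)]; exact subset_union_left
  · rw [← step_union hper (states hper x j)]; exact subset_union_right

lemma states_n_mono (x : ℕ → Bool) : ∀ {j j' : ℕ}, j ≤ j' →
    (states (α := α) hper x j).n ≤ (states hper x j').n := by
  intro j j' h
  induction j' with
  | zero => simp_all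
  | succ k ih =>
    rcases Nat.lt_or_ge j (k+1) with hlt | hge
    · exact le_trans (ih (Nat.lt_succ_iff.mp hlt)) (by rw [states]; exact step_n_mono _ _ _)
    · have : j = k + 1 := le_antisymm h hge
      simp [this]

lemma reach_singleton (x : ℕ → Bool) : ∀ (k : ℕ) (j : ℕ),
    (states (α := α) hper x j).L.length ≤ k → ∃ j', j ≤ j' ∧ (states hper x j').L.length = 1
  | 0, j, h => by
    have := List.length_pos_iff.mpr (states (α := α) hper x j).ne
    omega
  | (k+1), j, h => by
    by_cases h1 : (states (α := α) hper x j).L.length = 1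
    · exact ⟨j, le_rfl, h1⟩
    · have htail : (states (α := α) hper x j).L.tail ≠ [] := by
        intro hc
        have := (states (α := α) hper x j).eq_singleton hc
        rw [this] at h1; simp at h1
      cases hx : x j
      · refine ⟨j + 1, Nat.le_succ _, ?_⟩
        rw [states, hx]
        exact (step_multi hper _ htail).1
      · have hlen : (states (α := α) hper x (j+1)).L.length ≤ k := by
          rw [states, hx]
          rw [(step_multi hper _ htail).2.1]
          omega
        obtain ⟨j', hj', h1'⟩ := reach_singleton x k (j+1) hlen
        exact ⟨j', le_trans (Nat.le_succ _) hj', h1'⟩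

lemma exists_singleton_n_ge (x : ℕ → Bool) : ∀ (m : ℕ) (j₀ : ℕ),
    ∃ j, j₀ ≤ j ∧ (states (α := α) hper x j).L.length = 1 ∧ m ≤ (states hper x j).n
  | 0, j₀ => by
    obtain ⟨j, hj, h1⟩ := reach_singleton hper x _ j₀ le_rfl
    exact ⟨j, hj, h1, Nat.zero_le _⟩
  | (m+1), j₀ => by
    obtain ⟨j, hj, h1, hn⟩ := exists_singleton_n_ge x m j₀
    have htail : (states (α := α) hper x j).L.tail = [] := by
      have := List.length_tail (l := (states (α := α) hper x j).L)
      rw [h1] at this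
      exact List.eq_nil_of_length_eq_zero (by omega)
    have hn1 : m + 1 ≤ (states (α := α) hper x (j+1)).n := by
      rw [states, step_n_single hper _ htail]
      omega
    obtain ⟨j', hj', h1'⟩ := reach_singleton hper x _ (j+1) le_rfl
    exact ⟨j', le_trans (le_trans hj (Nat.le_succ _)) hj', h1',
      le_trans hn1 (states_n_mono hper x hj')⟩

/-- Two points lying in all carriers along the same branch are equal. -/
lemma eq_of_mem_carriers {x : ℕ → Bool} {p q : α}
    (hp : ∀ j, p ∈ (states (α := α) hper x j).carrier)
    (hq : ∀ j, q ∈ (states hper x j).carrier) : p = q := by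
  by_contra hne
  have hd : 0 < dist p q := dist_pos.mpr hne
  obtain ⟨m, hm⟩ := exists_pow_lt_of_lt_one hd (by norm_num : (2:ℝ)⁻¹ < 1)
  obtain ⟨j, _, h1, hn⟩ := exists_singleton_n_ge hper x m 0
  have htail : (states (α := α) hper x j).L.tail = [] := by
    have := List.length_tail (l := (states (α := α) hper x j).L)
    rw [h1] at this
    exact List.eq_nil_of_length_eq_zero (by omega)
  have hsmall := (states (α := α) hper x j).carrier_small htail p (hp j) q (hq j)
  have : ((2:ℝ)⁻¹) ^ (states (α := α) hper x j).n ≤ (2:ℝ)⁻¹ ^ m :=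
    pow_le_pow_of_le_one (by norm_num) (by norm_num) hn
  linarith

/-- The map from the Cantor space to `α`. -/
noncomputable def branchPoint (x : ℕ → Bool) : α :=
  (IsCompact.nonempty_iInter_of_sequence_nonempty_isCompact_isClosed
    (fun j => (states (α := α) hper x j).carrier)
    (states_carrier_antitone hper x)
    (fun j => (states hper x j).carrier_nonempty)
    (states hper x 0).carrier_isCompact
    (fun j => (states hper x j).carrier_isClosed)).choose

lemma branchPoint_mem (x : ℕ → Bool) (j : ℕ) :
    branchPoint (α := α) hper x ∈ (states hper x j).carrier := by
  have := (IsCompact.nonempty_iInter_of_sequence_nonempty_isCompact_isClosed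
    (fun j => (states (α := α) hper x j).carrier)
    (states_carrier_antitone hper x)
    (fun j => (states hper x j).carrier_nonempty)
    (states hper x 0).carrier_isCompact
    (fun j => (states hper x j).carrier_isClosed)).choose_spec
  exact mem_iInter.mp this j

lemma branchPoint_injective : Function.Injective (branchPoint (α := α) hper) := by
  intro x y hxy
  by_contra hne
  have hex : ∃ n, x n ≠ y n := by
    by_contra hc
    push_neg at hc
    exact hne (funext hc)
  let N := Nat.find hex
  have hN : x N ≠ y N := Nat.find_spec hex
  have hmin : ∀ i, i < N → x i = y i := fun i hi => by
    have := Nat.find_min hex hi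
    simpa using this
  have hstate : states (α := α) hper x N = states hper y N := states_congr hper x y N hmin
  have hx1 : branchPoint hper x ∈ (step hper (states hper x N) (x N)).carrier := by
    have := branchPoint_mem hper x (N+1)
    rwa [states] at this
  have hy1 : branchPoint hper y ∈ (step hper (states hper x N) (y N)).carrier := by
    have := branchPoint_mem hper y (N+1)
    rw [states] at this
    rwa [← hstate] at this
  rw [hxy] at hx1
  have hdisj := step_disjoint hper (states (α := α) hper x N)
  cases hxN : x N <;> cases hyN : y N
  · exact hN (hxN.trans hyN.symm)
  · rw [hxN] at hx1; rw [hyN] at hy1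
    exact Set.disjoint_left.mp hdisj hx1 hy1
  · rw [hxN] at hx1; rw [hyN] at hy1
    exact Set.disjoint_left.mp hdisj hy1 hx1
  · exact hN (hxN.trans hyN.symm)

open scoped Classical in
lemma branchPoint_surjective : Function.Surjective (branchPoint (α := α) hper) := by
  intro a
  -- build the branch through `a`
  let t : ℕ → PState α := fun k => Nat.rec (init α)
    (fun k tk => step hper tk (if a ∈ (step hper tk false).carrier then false else true)) k
  let x : ℕ → Bool := fun k => if a ∈ (step hper (t k) false).carrier then false else true
  have hstates : ∀ k, states (α := α) hper x k = t k := by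
    intro k
    induction k with
    | zero => rfl
    | succ k ih => rw [states, ih]
  have hmem : ∀ k, a ∈ (t k).carrier := by
    intro k
    induction k with
    | zero => rw [show (t 0) = init α from rfl, init_carrier]; exact mem_univ a
    | succ k ih =>
      have : a ∈ (step hper (t k) false).carrier ∪ (step hper (t k) true).carrier := by
        rw [step_union hper (t k)]; exact ih
      by_cases hc : a ∈ (step hper (t k) false).carrier
      · show a ∈ (step hper (t k) (if a ∈ (step hper (t k) false).carrier then false
          else true)).carrier
        rw [if_pos hc]; exact hc
      · show a ∈ (step hper (t k) (if a ∈ (step hper (t k) false).carrier then false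
          else true)).carrier
        rw [if_neg hc]
        rcases this with h | h
        · exact absurd h hc
        · exact h
  refine ⟨x, ?_⟩
  exact eq_of_mem_carriers hper (fun j => branchPoint_mem hper x j)
    (fun j => by rw [hstates j]; exact hmem j)

lemma branchPoint_continuous : Continuous (branchPoint (α := α) hper) := by
  rw [continuous_iff_continuousAt]
  intro x
  rw [ContinuousAt, Metric.tendsto_nhds]
  intro ε hε
  obtain ⟨m, hm⟩ := exists_pow_lt_of_lt_one hε (by norm_num : (2:ℝ)⁻¹ < 1)
  obtain ⟨j, _, h1, hn⟩ := exists_singleton_n_ge hper x m 0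
  have htail : (states (α := α) hper x j).L.tail = [] := by
    have := List.length_tail (l := (states (α := α) hper x j).L)
    rw [h1] at this
    exact List.eq_nil_of_length_eq_zero (by omega)
  have hkey : ∀ y : ℕ → Bool, (∀ i, i < j → y i = x i) →
      dist (branchPoint hper y) (branchPoint hper x) < ε := by
    intro y hy
    have hstate : states (α := α) hper y j = states hper x j := states_congr hper y x j hy
    have h1' := branchPoint_mem hper y j
    rw [hstate] at h1'
    have h2' := branchPoint_mem hper x j
    have := (states (α := α) hper x j).carrier_small htail _ h1' _ h2'
    have hle : ((2:ℝ)⁻¹) ^ (states (α := α) hper x j).n ≤ (2:ℝ)⁻¹ ^ m :=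
      pow_le_pow_of_le_one (by norm_num) (by norm_num) hn
    linarith
  have hnhds : {y : ℕ → Bool | ∀ i, i < j → y i = x i} ∈ nhds x := by
    have : {y : ℕ → Bool | ∀ i, i < j → y i = x i}
        = Set.pi (↑(Finset.range j) : Set ℕ) (fun i => {x i}) := by
      ext y
      simp [Set.mem_pi, Finset.mem_range]
    rw [this]
    exact (isOpen_set_pi (Finset.range j).finite_toSet
      (fun i _ => isOpen_discrete _)).mem_nhds (by simp [Set.mem_pi])
  filter_upwards [hnhds] with y hy
  exact hkey y hy

/-- **Brouwer's characterization of the Cantor set**: a nonempty compact metrizable totally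
disconnected space without isolated points is homeomorphic to the Cantor space. -/
theorem nonempty_homeomorph_cantor (β : Type*) [TopologicalSpace β] [CompactSpace β]
    [TopologicalSpace.MetrizableSpace β] [TotallyDisconnectedSpace β] [Nonempty β]
    (hper : ∀ x : β, ¬ IsOpen ({x} : Set β)) :
    Nonempty (β ≃ₜ (ℕ → Bool)) := by
  letI : MetricSpace β := TopologicalSpace.metrizableSpaceMetric β
  have hbij : Function.Bijective (branchPoint (α := β) hper) :=
    ⟨branchPoint_injective hper, branchPoint_surjective hper⟩
  let e : (ℕ → Bool) ≃ β := Equiv.ofBijective _ hbij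
  have hcont : Continuous e := branchPoint_continuous hper
  exact ⟨(hcont.homeoOfEquivCompactToT2 (f := e)).symm⟩

end EllisCantor
namespace EllisCantor
set_option linter.unusedSectionVars false

open Set Topology TopologicalSpace OnePoint

variable {X : Type*} [TopologicalSpace X] [DiscreteTopology X] [Countable X]

lemma secondCountable_onePoint : SecondCountableTopology (OnePoint X) := by
  classical
  set B : Set (Set (OnePoint X)) :=
    (range fun x : X => ({(x : OnePoint X)} : Set (OnePoint X))) ∪
    (range fun F : Finset X => ((((↑) : X → OnePoint X)) '' (F : Set X))ᶜ) with hB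
  have hcount : B.Countable := (countable_range _).union (countable_range _)
  have hopen : ∀ u ∈ B, IsOpen u := by
    rintro u (⟨x, rfl⟩ | ⟨F, rfl⟩)
    · show IsOpen ({((x : X) : OnePoint X)} : Set (OnePoint X))
      rw [← image_singleton]
      exact isOpen_image_coe.mpr (isOpen_discrete _)
    · exact isOpen_compl_image_coe.mpr ⟨isClosed_discrete _, (F : Set X).toFinite.isCompact⟩
  have hnhds : ∀ (a : OnePoint X) (u : Set (OnePoint X)), a ∈ u → IsOpen u →
      ∃ v ∈ B, a ∈ v ∧ v ⊆ u := by
    intro a u hau hu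
    cases a with
    | coe x =>
      exact ⟨{(x : OnePoint X)}, Or.inl ⟨x, rfl⟩, rfl, singleton_subset_iff.mpr hau⟩
    | infty =>
      have h := (isOpen_iff_of_mem' hau).mp hu
      have hfin : (((↑) : X → OnePoint X) ⁻¹' u)ᶜ.Finite := isCompact_iff_finite.mp h.1
      refine ⟨(((↑) : X → OnePoint X) '' (hfin.toFinset : Set X))ᶜ,
        Or.inr ⟨hfin.toFinset, rfl⟩, fun hc => infty_notMem_image_coe hc, ?_⟩
      intro z hz
      cases z with
      | infty => exact hau
      | coe x =>
        simp only [mem_compl_iff, mem_image, Set.Finite.coe_toFinset] at hz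
        by_contra hxu
        exact hz ⟨x, fun hc : (x : OnePoint X) ∈ u => hxu hc, rfl⟩
  exact (isTopologicalBasis_of_isOpen_of_nhds hopen hnhds).secondCountableTopology hcount

lemma permOnePoint_infty (g : Equiv.Perm X) : permOnePoint g ∞ = ∞ := rfl

lemma permOnePoint_coe (g : Equiv.Perm X) (x : X) :
    permOnePoint g (x : OnePoint X) = ((g x : X) : OnePoint X) := rfl

variable [Infinite X]

lemma not_isOpen_singleton_ellisPerm (f : ↥(ellisPerm X)) :
    ¬ IsOpen ({f} : Set ↥(ellisPerm X)) := by
  classical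
  obtain ⟨f, hf⟩ := f
  intro hopen
  obtain ⟨V, hV, hpre⟩ := isOpen_induced_iff.mp hopen
  have hfV : f ∈ V := by
    have : (⟨f, hf⟩ : ↥(ellisPerm X)) ∈ Subtype.val ⁻¹' V := by rw [hpre]; rfl
    exact this
  obtain ⟨I, u, hIu, hsub⟩ := isOpen_pi_iff.mp hV f hfV
  set W : Set (OnePoint X → OnePoint X) := (↑I : Set (OnePoint X)).pi u with hW
  have hWopen : IsOpen W := isOpen_set_pi I.finite_toSet (fun a ha => (hIu a ha).1)
  have hfW : f ∈ W := fun i hi => (hIu i hi).2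
  have hf' : f ∈ closure {f : OnePoint X → OnePoint X | ∃ g : Equiv.Perm X,
      f = permOnePoint g} := hf
  obtain ⟨y, hyW, g, hy⟩ := mem_closure_iff.mp hf' W hWopen hfW
  -- find two points of `X` not constrained by `I`
  set T : Set X := {x : X | (x : OnePoint X) ∈ (I : Set (OnePoint X))} with hT
  have hTfin : T.Finite := I.finite_toSet.preimage (OnePoint.coe_injective.injOn)
  obtain ⟨a, haT⟩ := hTfin.infinite_compl.nonempty
  obtain ⟨b, hb⟩ := ((hTfin.union (Set.finite_singleton a)).infinite_compl).nonempty
  have hbT : b ∉ T := fun hc => hb (Or.inl hc)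
  have hba : b ≠ a := fun hc => hb (Or.inr hc)
  set g' : Equiv.Perm X := (Equiv.swap a b).trans g with hg'
  have hg'W : permOnePoint g' ∈ W := by
    intro i hi
    have hyu : y i ∈ u i := hyW i hi
    cases i with
    | infty => rw [permOnePoint_infty]; rw [hy, permOnePoint_infty] at hyu; exact hyu
    | coe x =>
      have hxT : x ∈ T := hi
      have hxa : x ≠ a := fun hc => haT (hc ▸ hxT)
      have hxb : x ≠ b := fun hc => hbT (hc ▸ hxT)
      rw [permOnePoint_coe]
      rw [hy, permOnePoint_coe] at hyu
      have : g' x = g x := by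
        rw [hg']
        simp [Equiv.swap_apply_of_ne_of_ne hxa hxb]
      rw [this]
      exact hyu
  -- both `y` and `permOnePoint g'` are in `V ∩ ellisPerm X`, hence both equal `f`
  have hyE : y ∈ ellisPerm X := subset_closure ⟨g, hy⟩
  have hg'E : permOnePoint g' ∈ ellisPerm X := subset_closure ⟨g', rfl⟩
  have h1 : (⟨y, hyE⟩ : ↥(ellisPerm X)) = ⟨f, hf⟩ := by
    have : (⟨y, hyE⟩ : ↥(ellisPerm X)) ∈ Subtype.val ⁻¹' V := hsub hyW
    rwa [hpre] at this
  have h2 : (⟨permOnePoint g', hg'E⟩ : ↥(ellisPerm X)) = ⟨f, hf⟩ := by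
    have : (⟨permOnePoint g', hg'E⟩ : ↥(ellisPerm X)) ∈ Subtype.val ⁻¹' V := hsub hg'W
    rwa [hpre] at this
  have hyf : y = f := congrArg Subtype.val h1
  have hg'f : permOnePoint g' = f := congrArg Subtype.val h2
  have : permOnePoint g = permOnePoint g' := by rw [← hy, hyf, hg'f]
  have hval := congrFun this ((a : X) : OnePoint X)
  rw [permOnePoint_coe, permOnePoint_coe] at hval
  have : g a = g' a := OnePoint.coe_injective hval
  rw [hg'] at this
  simp only [Equiv.trans_apply, Equiv.swap_apply_left] at this
  exact hba (g.injective this).symm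

end EllisCantor

/-- For a countably infinite discrete space `X`, the Ellis compactification of the
permutation group of `X` from its action on `OnePoint X` is homeomorphic to the Cantor
space. -/
theorem ellisPerm_homeomorphic_cantor
    {X : Type*} [TopologicalSpace X] [DiscreteTopology X] [Countable X] [Infinite X] :
    Nonempty (↥(ellisPerm X) ≃ₜ (ℕ → Bool)) := by
  haveI : Countable (OnePoint X) := inferInstanceAs (Countable (Option X))
  haveI : SecondCountableTopology (OnePoint X) :=
    EllisCantor.secondCountable_onePoint
  haveI : CompactSpace ↥(ellisPerm X) :=
    isCompact_iff_compactSpace.mp isClosed_closure.isCompact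
  haveI : Nonempty ↥(ellisPerm X) :=
    ⟨⟨permOnePoint 1, subset_closure ⟨1, rfl⟩⟩⟩
  exact EllisCantor.nonempty_homeomorph_cantor _
    EllisCantor.not_isOpen_singleton_ellisPerm
end

section
/- Let X be an infinite ultrahomogeneous linear order and let G = Aut(X) be its group of order automorphisms, equipped with the topology of pointwise convergence for the action on X with the discrete topology (basic neighborhoods of g are {h : h(x) = g(x) for all x ∈ σ}, σ ⊆ X finite). Then G is Roelcke precompact: for every neighborhood O of the identity there exists a finite set F ⊆ G such that G = O·F·O = {o₁ f o₂ : o₁, o₂ ∈ O, f ∈ F}. -/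
open Topology

def orderAutPtwiseTopology (X : Type*) [Preorder X] [TopologicalSpace X] :
    TopologicalSpace (X ≃o X) :=
  TopologicalSpace.induced (fun g : X ≃o X => (g : X → X)) Pi.topologicalSpace

instance : Fintype Ordering :=
  ⟨{.lt, .eq, .gt}, by intro x; cases x <;> simp⟩

/-- The automorphism group of an infinite ultrahomogeneous chain, with the topology of
pointwise convergence for the action on the chain with the discrete topology (the permutation
topology), is Roelcke precompact. -/
theorem orderAut_discrete_roelcke_precompact
    {X : Type*} [LinearOrder X] [Infinite X] [TopologicalSpace X] [DiscreteTopology X]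
    [tG : TopologicalSpace (X ≃o X)] (htG : tG = orderAutPtwiseTopology X)
    (hultra : ∀ (n : ℕ) (x y : Fin n → X), StrictMono x → StrictMono y →
      ∃ g : X ≃o X, ∀ i, g (x i) = y i) :
    ∀ O ∈ 𝓝 (1 : X ≃o X), ∃ F : Finset (X ≃o X),
      ∀ g : X ≃o X, ∃ o₁ ∈ O, ∃ f ∈ F, ∃ o₂ ∈ O, g = o₁ * f * o₂ := by
  classical
  subst htG
  intro O hO
  -- extract a finite support for the neighborhood O
  obtain ⟨s, hbasic⟩ : ∃ s : Finset X, ∀ h : X ≃o X, (∀ a ∈ s, h a = a) → h ∈ O := by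
    have hO' : O ∈ @nhds _ (TopologicalSpace.induced
        (fun g : X ≃o X => (g : X → X)) Pi.topologicalSpace) 1 := hO
    rw [nhds_induced] at hO'
    obtain ⟨t, ht, hts⟩ := hO'
    rw [nhds_pi, Filter.mem_pi] at ht
    obtain ⟨I0, hI0fin, u, hu, hut⟩ := ht
    refine ⟨hI0fin.toFinset, fun h hh => hts ?_⟩
    apply hut
    intro a ha
    have h1 : h a = a := hh a (hI0fin.mem_toFinset.2 ha)
    have h2 : ((1 : X ≃o X) : X → X) a ∈ u a := mem_of_mem_nhds (hu a)
    simpa [h1] using h2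
  set n : ℕ := s.card with hn
  set e : Fin n ↪o X := s.orderEmbOfFin rfl with he
  have hes : ∀ a, a ∈ s ↔ ∃ i, e i = a := by
    intro a
    constructor
    · intro ha
      have : a ∈ Set.range e := by rw [Finset.range_orderEmbOfFin]; exact ha
      exact this
    · rintro ⟨i, rfl⟩
      exact Finset.orderEmbOfFin_mem s rfl i
  -- the pattern of a group element
  set P : (X ≃o X) → Fin n → Fin n → Ordering :=
    fun g i j => compare (e i) (g (e j)) with hP
  set rep : (Fin n → Fin n → Ordering) → (X ≃o X) :=
    fun p => if h : ∃ g, P g = p then h.choose else 1 with hrep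
  refine ⟨Finset.image rep Finset.univ, fun g => ?_⟩
  set f : X ≃o X := rep (P g) with hf
  have hex : ∃ g', P g' = P g := ⟨g, rfl⟩
  have hPf : P f = P g := by
    rw [hf, hrep]; simp only [dif_pos hex]; exact hex.choose_spec
  have hfF : f ∈ Finset.image rep Finset.univ :=
    Finset.mem_image_of_mem rep (Finset.mem_univ _)
  -- pattern consequences
  have hlt : ∀ i j, e i < g (e j) ↔ e i < f (e j) := by
    intro i j
    rw [← compare_lt_iff_lt, ← compare_lt_iff_lt (a := e i) (b := f (e j))]
    have h3 : compare (e i) (f (e j)) = compare (e i) (g (e j)) :=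
      congrFun (congrFun hPf i) j
    rw [h3]
  have heq : ∀ i j, e i = g (e j) ↔ e i = f (e j) := by
    intro i j
    rw [← compare_eq_iff_eq, ← compare_eq_iff_eq (a := e i) (b := f (e j))]
    have h3 : compare (e i) (f (e j)) = compare (e i) (g (e j)) :=
      congrFun (congrFun hPf i) j
    rw [h3]
  -- the merge map
  set S : Finset X := s ∪ s.image (⇑g) with hS
  set φ : X → X := fun a => if a ∈ s then a else f (g.symm a) with hφ
  have hφg : ∀ j, φ (g (e j)) = f (e j) := by
    intro j
    by_cases hmem : g (e j) ∈ s
    · obtain ⟨i, hi⟩ := (hes _).1 hmem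
      have h4 : e i = f (e j) := (heq i j).1 hi
      show (if g (e j) ∈ s then g (e j) else f (g.symm (g (e j)))) = f (e j)
      rw [if_pos hmem, ← hi]; exact h4
    · show (if g (e j) ∈ s then g (e j) else f (g.symm (g (e j)))) = f (e j)
      rw [if_neg hmem, g.symm_apply_apply]
  have hmono : StrictMonoOn φ ↑S := by
    intro a ha b hb hab
    have ha' : a ∈ s ∨ ∃ j, g (e j) = a := by
      rcases Finset.mem_union.1 ha with h | h
      · exact Or.inl h
      · obtain ⟨c, hc, rfl⟩ := Finset.mem_image.1 h
        obtain ⟨j, rfl⟩ := (hes c).1 hc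
        exact Or.inr ⟨j, rfl⟩
    have hb' : b ∈ s ∨ ∃ j, g (e j) = b := by
      rcases Finset.mem_union.1 hb with h | h
      · exact Or.inl h
      · obtain ⟨c, hc, rfl⟩ := Finset.mem_image.1 h
        obtain ⟨j, rfl⟩ := (hes c).1 hc
        exact Or.inr ⟨j, rfl⟩
    by_cases has : a ∈ s
    · by_cases hbs : b ∈ s
      · simpa [hφ, if_pos has, if_pos hbs] using hab
      · obtain ⟨j, rfl⟩ := hb'.resolve_left hbs
        obtain ⟨i, rfl⟩ := (hes a).1 has
        have : e i < f (e j) := (hlt i j).1 hab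
        rw [hφg j]; simpa [hφ, if_pos has] using this
    · obtain ⟨j, rfl⟩ := ha'.resolve_left has
      rw [hφg j]
      by_cases hbs : b ∈ s
      · obtain ⟨i, rfl⟩ := (hes b).1 hbs
        have h1 : ¬ (e i < g (e j)) := not_lt.2 hab.le
        have h2 : ¬ (e i = g (e j)) := fun h => (ne_of_gt hab) h
        have h1' : ¬ (e i < f (e j)) := fun h => h1 ((hlt i j).2 h)
        have h2' : ¬ (e i = f (e j)) := fun h => h2 ((heq i j).2 h)
        have : f (e j) < e i := lt_of_le_of_ne (not_lt.1 h1') (fun h => h2' h.symm)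
        simpa [hφ, if_pos hbs] using this
      · obtain ⟨j', rfl⟩ := hb'.resolve_left hbs
        rw [hφg j']
        exact f.strictMono ((g.lt_iff_lt).1 hab)
  -- find h matching φ on S via ultrahomogeneity
  set m : ℕ := S.card with hm
  set e' : Fin m ↪o X := S.orderEmbOfFin rfl with he'
  have he'S : ∀ k, e' k ∈ S := fun k => Finset.orderEmbOfFin_mem S rfl k
  obtain ⟨h, hh⟩ := hultra m (fun k => e' k) (fun k => φ (e' k)) e'.strictMono
    (fun k l hkl => hmono (he'S k) (he'S l) (e'.strictMono hkl))
  have hhS : ∀ a ∈ S, h a = φ a := by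
    intro a ha
    have : a ∈ Set.range e' := by rw [Finset.range_orderEmbOfFin]; exact ha
    obtain ⟨k, rfl⟩ := this
    exact hh k
  have hhs : ∀ a ∈ s, h a = a := by
    intro a ha
    rw [hhS a (Finset.mem_union_left _ ha)]
    simp [hφ, if_pos ha]
  have hhg : ∀ j, h (g (e j)) = f (e j) := by
    intro j
    rw [hhS _ (Finset.mem_union_right _ (Finset.mem_image_of_mem _
      (Finset.orderEmbOfFin_mem s rfl j)))]
    exact hφg j
  refine ⟨h⁻¹, hbasic _ ?_, f, hfF, f⁻¹ * h * g, hbasic _ ?_, by group⟩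
  · intro a ha
    have : h a = a := hhs a ha
    calc h⁻¹ a = h⁻¹ (h a) := by rw [this]
    _ = a := h.symm_apply_apply a
  · intro a ha
    obtain ⟨j, rfl⟩ := (hes a).1 ha
    show f⁻¹ (h (g (e j))) = e j
    rw [hhg j]
    exact f.symm_apply_apply _
end

section
/- Let X be an infinite ultrahomogeneous linear order equipped with its order topology, and let G = Aut(X) be its group of order automorphisms with the topology of pointwise convergence for the action on the space X (the topology induced along g ↦ (x ↦ g(x)) into X → X with the product of order topologies). Then G is Roelcke precompact: for every neighborhood O of the identity there exists a finite set F ⊆ G such that G = O·F·O = {o₁ f o₂ : o₁, o₂ ∈ O, f ∈ F}. -/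
open Topology

instance inst_s18 : Fintype Ordering := ⟨{.lt, .eq, .gt}, by intro x; cases x <;> decide⟩

/-- If `O` is a neighborhood of `1` in the pointwise convergence topology, then `O` contains
the pointwise stabilizer of some finite set. -/
lemma exists_finset_fix_subset {X : Type*} [Preorder X] [TopologicalSpace X]
    (O : Set (X ≃o X)) (hO : O ∈ @nhds _ (orderAutPtwiseTopology X) 1) :
    ∃ s : Finset X, ∀ g : X ≃o X, (∀ a ∈ s, g a = a) → g ∈ O := by
  classical
  rw [orderAutPtwiseTopology] at hO
  rw [nhds_induced] at hO
  obtain ⟨T, hT, hsub⟩ := hO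
  rw [nhds_pi, Filter.mem_pi] at hT
  obtain ⟨I, hIfin, t, ht, hIt⟩ := hT
  refine ⟨hIfin.toFinset, fun g hg => ?_⟩
  apply hsub
  apply hIt
  intro a ha
  show g a ∈ t a
  rw [hg a (hIfin.mem_toFinset.2 ha)]
  exact mem_of_mem_nhds (ht a)

lemma exists_conj {X : Type*} [LinearOrder X]
    (hultra : ∀ (n : ℕ) (x y : Fin n → X), StrictMono x → StrictMono y →
      ∃ g : X ≃o X, ∀ i, g (x i) = y i)
    {n : ℕ} (x : Fin n → X) (hx : StrictMono x)
    (f g : X ≃o X) (hp : ∀ i j, cmp (f (x i)) (x j) = cmp (g (x i)) (x j)) :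
    ∃ h : X ≃o X, (∀ i, h (x i) = x i) ∧ (∀ i, h (f (x i)) = g (x i)) := by
  classical
  set χ : X → X := fun a => if hc : ∃ j, f (x j) = a then g (x hc.choose) else a with hχ
  have hfx : ∀ i, χ (f (x i)) = g (x i) := by
    intro i
    have hc : ∃ j, f (x j) = f (x i) := ⟨i, rfl⟩
    have : hc.choose = i := hx.injective (f.injective hc.choose_spec)
    simp only [hχ, dif_pos hc, this]
  have hxx : ∀ i, χ (x i) = x i := by
    intro i
    by_cases hc : ∃ j, f (x j) = x i
    · have h1 : f (x hc.choose) = x i := hc.choose_spec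
      have h2 : cmp (g (x hc.choose)) (x i) = Ordering.eq := by
        rw [← hp]; exact (cmp_eq_eq_iff _ _).2 h1
      simp only [hχ, dif_pos hc]
      exact (cmp_eq_eq_iff _ _).1 h2
    · simp only [hχ, dif_neg hc]
  -- χ is strictly monotone on the merged set
  set T : Finset X := (Finset.univ.image x) ∪ (Finset.univ.image fun i => f (x i)) with hT
  have hmem : ∀ a ∈ T, (∃ i, x i = a) ∨ (∃ i, f (x i) = a) := by
    intro a ha
    rw [hT, Finset.mem_union, Finset.mem_image, Finset.mem_image] at ha
    rcases ha with ⟨i, _, hi⟩ | ⟨i, _, hi⟩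
    · exact Or.inl ⟨i, hi⟩
    · exact Or.inr ⟨i, hi⟩
  have hmono : ∀ a ∈ T, ∀ b ∈ T, a < b → χ a < χ b := by
    intro a ha b hb hab
    rcases hmem a ha with ⟨i, hi⟩ | ⟨i, hi⟩ <;> rcases hmem b hb with ⟨j, hj⟩ | ⟨j, hj⟩ <;>
      subst hi <;> subst hj
    · rw [hxx i, hxx j]; exact hab
    · rw [hxx i, hfx j]
      have : cmp (g (x j)) (x i) = Ordering.gt := by rw [← hp]; exact (cmp_eq_gt_iff _ _).2 hab
      exact (cmp_eq_gt_iff _ _).1 this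
    · rw [hfx i, hxx j]
      have : cmp (g (x i)) (x j) = Ordering.lt := by rw [← hp]; exact (cmp_eq_lt_iff _ _).2 hab
      exact (cmp_eq_lt_iff _ _).1 this
    · rw [hfx i, hfx j]
      exact g.strictMono (f.lt_iff_lt.1 hab)
  set u := T.orderIsoOfFin rfl with hu
  have humem : ∀ k, (u k : X) ∈ T := fun k => (u k).2
  have ha : StrictMono (fun k => (u k : X)) := fun k l hkl => u.strictMono hkl
  have hb : StrictMono (fun k => χ (u k : X)) := fun k l hkl =>
    hmono _ (humem k) _ (humem l) (ha hkl)
  obtain ⟨h, hh⟩ := hultra T.card (fun k => (u k : X)) (fun k => χ (u k : X)) ha hb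
  have key : ∀ a ∈ T, h a = χ a := by
    intro a haT
    have : (u (u.symm ⟨a, haT⟩) : X) = a := by rw [u.apply_symm_apply]
    calc h a = h (u (u.symm ⟨a, haT⟩) : X) := by rw [this]
    _ = χ (u (u.symm ⟨a, haT⟩) : X) := hh _
    _ = χ a := by rw [this]
  have hxT : ∀ i, x i ∈ T := fun i => by
    rw [hT, Finset.mem_union]; exact Or.inl (Finset.mem_image.2 ⟨i, Finset.mem_univ i, rfl⟩)
  have hfxT : ∀ i, f (x i) ∈ T := fun i => by
    rw [hT, Finset.mem_union]; exact Or.inr (Finset.mem_image.2 ⟨i, Finset.mem_univ i, rfl⟩)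
  exact ⟨h, fun i => by rw [key _ (hxT i), hxx i], fun i => by rw [key _ (hfxT i), hfx i]⟩

/-- The automorphism group of an infinite ultrahomogeneous linearly ordered topological space
(order topology), with the topology of pointwise convergence for the action on the space, is
Roelcke precompact. -/
theorem orderAut_LOTS_roelcke_precompact
    {X : Type*} [LinearOrder X] [Infinite X] [TopologicalSpace X] [OrderTopology X]
    [tG : TopologicalSpace (X ≃o X)] (htG : tG = orderAutPtwiseTopology X)
    (hultra : ∀ (n : ℕ) (x y : Fin n → X), StrictMono x → StrictMono y →
      ∃ g : X ≃o X, ∀ i, g (x i) = y i) :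
    ∀ O ∈ 𝓝 (1 : X ≃o X), ∃ F : Finset (X ≃o X),
      ∀ g : X ≃o X, ∃ o₁ ∈ O, ∃ f ∈ F, ∃ o₂ ∈ O, g = o₁ * f * o₂ := by
  classical
  subst htG
  intro O hO
  obtain ⟨s, hs⟩ := exists_finset_fix_subset O hO
  set x : Fin s.card → X := fun i => (s.orderIsoOfFin rfl i : X) with hxdef
  have hx : StrictMono x := fun i j hij => (s.orderIsoOfFin rfl).strictMono hij
  have hxsurj : ∀ a ∈ s, ∃ i, x i = a := by
    intro a ha
    exact ⟨(s.orderIsoOfFin rfl).symm ⟨a, ha⟩, by rw [hxdef]; simp⟩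
  set P : (X ≃o X) → (Fin s.card → Fin s.card → Ordering) :=
    fun g i j => cmp (g (x i)) (x j) with hP
  set rep : (Fin s.card → Fin s.card → Ordering) → (X ≃o X) :=
    fun p => if h : ∃ g, P g = p then h.choose else 1 with hrep
  refine ⟨Finset.univ.image rep, fun g => ?_⟩
  have hex : ∃ g', P g' = P g := ⟨g, rfl⟩
  set f := rep (P g) with hf
  have hPf : P f = P g := by rw [hf, hrep]; simp only [dif_pos hex]; exact hex.choose_spec
  have hp : ∀ i j, cmp (f (x i)) (x j) = cmp (g (x i)) (x j) := fun i j =>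
    congrFun (congrFun hPf i) j
  obtain ⟨h, h1, h2⟩ := exists_conj hultra x hx f g hp
  have fix : ∀ (k : X ≃o X), (∀ i, k (x i) = x i) → ∀ a ∈ s, k a = a := by
    intro k hk a ha
    obtain ⟨i, hi⟩ := hxsurj a ha
    rw [← hi]; exact hk i
  refine ⟨h, hs h (fix h h1), f, Finset.mem_image.2 ⟨P g, Finset.mem_univ _, rfl⟩,
    f⁻¹ * (h⁻¹ * g), hs _ (fix _ fun i => ?_), ?_⟩
  · show f⁻¹ ((h⁻¹ (g (x i)))) = x i
    rw [← h2 i]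
    show f.symm (h.symm (h (f (x i)))) = x i
    rw [h.symm_apply_apply, f.symm_apply_apply]
  · group
end

section
/- Let X be an infinite ultrahomogeneous linear order with the discrete topology, let G = Aut(X) be its group of order automorphisms acting on OnePoint X = X ∪ {∞} by g•x = g(x) for x ∈ X and g•∞ = ∞, and let E be the closure of {k ↦ g•k : g ∈ G} in (OnePoint X) → (OnePoint X) with the product topology. Then: (i) E is exactly the set of maps f : OnePoint X → OnePoint X with f(∞) = ∞ such that for all a, b ∈ X with f(a) ≠ ∞ and f(b) ≠ ∞ one has a < b if and only if f(a) < f(b) (in particular f is injective where its value lies in X); (ii) E is an inverse monoid under composition with separately continuous composition and continuous inversion, and the map sending f ∈ E to the restriction of f to D(f) = {x ∈ X : f(x) ≠ ∞} is a bijection of E onto the set J_X of all partial order-isomorphisms of X (partial bijections p of X with x < y ⟺ p(x) < p(y) for x, y in the domain of p) which transforms composition in E into composition of partial maps. -/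
/-- The Ellis compactification of the automorphism group of a chain `X` (discrete topology)
from its action on `OnePoint X`. -/
def ellisOrderAut (X : Type*) [LinearOrder X] [TopologicalSpace X] :
    Set (OnePoint X → OnePoint X) :=
  closure {f : OnePoint X → OnePoint X | ∃ g : X ≃o X, f = orderIsoOnePoint g}

open OnePoint Set



namespace EllisAux

variable {X : Type*} [LinearOrder X]

def good (X : Type*) [LinearOrder X] : Set (OnePoint X → OnePoint X) :=
  {f : OnePoint X → OnePoint X |
    f OnePoint.infty = OnePoint.infty ∧
    ∀ a b a' b' : X, f (↑a) = ↑a' → f (↑b) = ↑b' → (a < b ↔ a' < b')}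

theorem orderIsoOnePoint_mem_good (g : X ≃o X) : orderIsoOnePoint g ∈ good X := by
  refine ⟨rfl, fun a b a' b' ha hb => ?_⟩
  have ha' : ((g a : X) : OnePoint X) = ↑a' := ha
  have hb' : ((g b : X) : OnePoint X) = ↑b' := hb
  rw [coe_eq_coe] at ha' hb'
  rw [← ha', ← hb', g.lt_iff_lt]

theorem base_subset_good :
    {f : OnePoint X → OnePoint X | ∃ g : X ≃o X, f = orderIsoOnePoint g} ⊆ good X := by
  rintro _ ⟨g, rfl⟩; exact orderIsoOnePoint_mem_good g

theorem good_inj {f : OnePoint X → OnePoint X} (hf : f ∈ good X) {a b c : X}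
    (ha : f ↑a = ↑c) (hb : f ↑b = ↑c) : a = b := by
  rcases lt_trichotomy a b with h | h | h
  · exact absurd ((hf.2 a b c c ha hb).1 h) (lt_irrefl c)
  · exact h
  · exact absurd ((hf.2 b a c c hb ha).1 h) (lt_irrefl c)

theorem isOpen_coe_singleton [TopologicalSpace X] [DiscreteTopology X] (a : X) :
    IsOpen ({(a : OnePoint X)} : Set (OnePoint X)) := by
  have h : ({(a : OnePoint X)} : Set (OnePoint X)) = (↑) '' ({a} : Set X) := by simp
  rw [h]
  exact isOpen_image_coe.2 (isOpen_discrete _)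

theorem isClosed_good [TopologicalSpace X] [DiscreteTopology X] : IsClosed (good X) := by
  have h : good X = {f : OnePoint X → OnePoint X | f OnePoint.infty = OnePoint.infty} ∩
      ⋂ (a : X), ⋂ (b : X), ⋂ (a' : X), ⋂ (b' : X),
        {f : OnePoint X → OnePoint X | f ↑a = ↑a' → f ↑b = ↑b' → (a < b ↔ a' < b')} := by
    ext f
    simp only [good, mem_setOf_eq, mem_inter_iff, mem_iInter]
  rw [h]
  have hc : IsClosed ((fun f : OnePoint X → OnePoint X => f OnePoint.infty) ⁻¹' {OnePoint.infty}) :=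
    isClosed_infty.preimage (continuous_apply _)
  refine IsClosed.inter hc ?_
  refine isClosed_iInter fun a => isClosed_iInter fun b =>
    isClosed_iInter fun a' => isClosed_iInter fun b' => ?_
  by_cases hP : a < b ↔ a' < b'
  · have : {f : OnePoint X → OnePoint X | f ↑a = ↑a' → f ↑b = ↑b' → (a < b ↔ a' < b')} = univ := by
      ext f; simp [hP]
    rw [this]; exact isClosed_univ
  · have : {f : OnePoint X → OnePoint X | f ↑a = ↑a' → f ↑b = ↑b' → (a < b ↔ a' < b')}
        = ({f : OnePoint X → OnePoint X | f ↑a = ↑a'} ∩ {f | f ↑b = ↑b'})ᶜ := by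
      ext f
      simp only [mem_setOf_eq, mem_compl_iff, mem_inter_iff, not_and]
      tauto
    rw [this]
    refine IsOpen.isClosed_compl (IsOpen.inter ?_ ?_)
    · have h1 : Continuous (fun f : OnePoint X → OnePoint X => f (↑a : OnePoint X)) :=
        continuous_apply _
      exact (isOpen_coe_singleton a').preimage h1
    · have h1 : Continuous (fun f : OnePoint X → OnePoint X => f (↑b : OnePoint X)) :=
        continuous_apply _
      exact (isOpen_coe_singleton b').preimage h1

section Order

variable [Infinite X]
variable (hultra : ∀ (n : ℕ) (x y : Fin n → X), StrictMono x → StrictMono y →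
      ∃ g : X ≃o X, ∀ i, g (x i) = y i)

theorem strictMono_fin_one (f : Fin 1 → X) : StrictMono f :=
  fun i j h => absurd (Subsingleton.elim i j) (ne_of_lt h)

theorem strictMono_fin_two {f : Fin 2 → X} (h : f 0 < f 1) : StrictMono f := by
  intro i j hij
  fin_cases i <;> fin_cases j <;> first | exact h | simp_all

include hultra

theorem exists_gt_ultra (a : X) : ∃ b, a < b := by
  obtain ⟨u, v, huv⟩ := exists_pair_ne X
  rcases huv.lt_or_gt with h | h
  · obtain ⟨g, hg⟩ := hultra 1 (fun _ => u) (fun _ => a)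
      (strictMono_fin_one _) (strictMono_fin_one _)
    exact ⟨g v, by rw [← hg 0]; exact g.strictMono h⟩
  · obtain ⟨g, hg⟩ := hultra 1 (fun _ => v) (fun _ => a)
      (strictMono_fin_one _) (strictMono_fin_one _)
    exact ⟨g u, by rw [← hg 0]; exact g.strictMono h⟩

theorem exists_lt_ultra (a : X) : ∃ b, b < a := by
  obtain ⟨u, v, huv⟩ := exists_pair_ne X
  rcases huv.lt_or_gt with h | h
  · obtain ⟨g, hg⟩ := hultra 1 (fun _ => v) (fun _ => a)
      (strictMono_fin_one _) (strictMono_fin_one _)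
    exact ⟨g u, by rw [← hg 0]; exact g.strictMono h⟩
  · obtain ⟨g, hg⟩ := hultra 1 (fun _ => u) (fun _ => a)
      (strictMono_fin_one _) (strictMono_fin_one _)
    exact ⟨g v, by rw [← hg 0]; exact g.strictMono h⟩

theorem exists_between_ultra {a c : X} (hac : a < c) : ∃ b, a < b ∧ b < c := by
  obtain ⟨d, hd⟩ := exists_gt_ultra hultra c
  obtain ⟨g, hg⟩ := hultra 2 (fun i => if i = 0 then a else d) (fun i => if i = 0 then a else c)
    (strictMono_fin_two (by simpa using hac.trans hd)) (strictMono_fin_two (by simpa using hac))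
  have hga : g a = a := by simpa using hg 0
  have hgd : g d = c := by simpa using hg 1
  have h1 : a < g c := by
    calc a = g a := hga.symm
    _ < g c := g.strictMono hac
  have h2 : g c < c := by
    calc g c < g d := g.strictMono hd
    _ = c := hgd
  exact ⟨g c, h1, h2⟩

theorem exists_avoiding {L R K : Set X} (hL : L.Finite) (hR : R.Finite) (hK : K.Finite)
    (hLR : ∀ l ∈ L, ∀ r ∈ R, l < r) :
    ∃ y, y ∉ K ∧ (∀ l ∈ L, l < y) ∧ (∀ r ∈ R, y < r) := by
  classical
  set T : Set X := {y | (∀ l ∈ L, l < y) ∧ (∀ r ∈ R, y < r)} with hT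
  have hne : T.Nonempty := by
    rcases eq_empty_or_nonempty L with hLe | hLne
    · rcases eq_empty_or_nonempty R with hRe | hRne
      · exact ⟨Classical.arbitrary X, by simp [hT, hLe, hRe]⟩
      · have hRne' : hR.toFinset.Nonempty := by simpa using hRne
        obtain ⟨y, hy⟩ := exists_lt_ultra hultra (hR.toFinset.min' hRne')
        refine ⟨y, by simp [hT, hLe], fun r hr => lt_of_lt_of_le hy ?_⟩
        exact Finset.min'_le _ _ (by simpa using hr)
    · have hLne' : hL.toFinset.Nonempty := by simpa using hLne
      set l₀ := hL.toFinset.max' hLne' with hl₀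
      have hl₀L : l₀ ∈ L := by have := hL.toFinset.max'_mem hLne'; simpa using this
      rcases eq_empty_or_nonempty R with hRe | hRne
      · obtain ⟨y, hy⟩ := exists_gt_ultra hultra l₀
        refine ⟨y, fun l hl => lt_of_le_of_lt ?_ hy, by simp [hRe]⟩
        exact Finset.le_max' _ _ (by simpa using hl)
      · have hRne' : hR.toFinset.Nonempty := by simpa using hRne
        set r₀ := hR.toFinset.min' hRne' with hr₀
        have hr₀R : r₀ ∈ R := by have := hR.toFinset.min'_mem hRne'; simpa using this
        obtain ⟨y, hy1, hy2⟩ := exists_between_ultra hultra (hLR l₀ hl₀L r₀ hr₀R)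
        refine ⟨y, fun l hl => lt_of_le_of_lt (Finset.le_max' _ _ (by simpa using hl)) hy1,
          fun r hr => lt_of_lt_of_le hy2 (Finset.min'_le _ _ (by simpa using hr))⟩
  have hstep : ∀ t ∈ T, ∃ t' ∈ T, t < t' := by
    intro t ht
    rcases eq_empty_or_nonempty R with hRe | hRne
    · obtain ⟨t', ht'⟩ := exists_gt_ultra hultra t
      exact ⟨t', ⟨fun l hl => (ht.1 l hl).trans ht', by simp [hRe]⟩, ht'⟩
    · have hRne' : hR.toFinset.Nonempty := by simpa using hRne
      set r₀ := hR.toFinset.min' hRne' with hr₀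
      have hr₀R : r₀ ∈ R := by have := hR.toFinset.min'_mem hRne'; simpa using this
      obtain ⟨t', ht'1, ht'2⟩ := exists_between_ultra hultra (ht.2 r₀ hr₀R)
      exact ⟨t', ⟨fun l hl => (ht.1 l hl).trans ht'1,
        fun r hr => lt_of_lt_of_le ht'2 (Finset.min'_le _ _ (by simpa using hr))⟩, ht'1⟩
  have hTinf : T.Infinite := by
    intro hTfin
    have hne' : hTfin.toFinset.Nonempty := by simpa using hne
    obtain ⟨t', ht'T, ht'⟩ := hstep (hTfin.toFinset.max' hne')
      (by have := hTfin.toFinset.max'_mem hne'; simpa using this)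
    exact absurd (Finset.le_max' _ t' (by simpa using ht'T)) (not_le.2 ht')
  obtain ⟨y, hy⟩ := (hTinf.diff hK).nonempty
  exact ⟨y, hy.2, hy.1.1, hy.1.2⟩

theorem extend_aux :
    ∀ (n : ℕ) (s : Finset X), s.card = n → ∀ (φ : X → OnePoint X),
    (∀ a ∈ s, ∀ b ∈ s, ∀ a' b' : X, φ a = ↑a' → φ b = ↑b' → (a < b ↔ a' < b')) →
    ∀ (K : Set X), K.Finite →
    ∃ ψ : X → X,
      (∀ a ∈ s, ∀ a' : X, φ a = ↑a' → ψ a = a') ∧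
      (∀ a ∈ s, φ a = OnePoint.infty → ψ a ∉ K) ∧
      (∀ a ∈ s, ∀ b ∈ s, a < b → ψ a < ψ b) ∧
      (∀ a ∈ s, ∀ b ∈ s, ∀ b' : X, φ b = ↑b' → (a < b → ψ a < b') ∧ (b < a → b' < ψ a)) := by
  intro n
  induction n using Nat.strong_induction_on with
  | _ n IH =>
  intro s hcard φ hφ K hK
  classical
  set U : Finset X := s.filter (fun a => φ a = OnePoint.infty) with hU
  rcases U.eq_empty_or_nonempty with hUe | hUne
  · -- all values defined
    have hdef : ∀ a ∈ s, ∃ c : X, φ a = ↑c := by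
      intro a ha
      cases hfa : φ a with
      | infty =>
        have haU : a ∈ U := Finset.mem_filter.2 ⟨ha, hfa⟩
        rw [hUe] at haU
        exact absurd haU (Finset.notMem_empty a)
      | coe c => exact ⟨c, rfl⟩
    set ψ : X → X := fun a =>
      if h : ∃ c : X, φ a = ↑c then h.choose else Classical.arbitrary X with hψ
    have hval : ∀ a ∈ s, ∀ a' : X, φ a = ↑a' → ψ a = a' := by
      intro a ha a' ha'
      have h : ∃ c : X, φ a = ↑c := ⟨a', ha'⟩
      have hh : ψ a = h.choose := dif_pos h
      have hsp : φ a = ↑(h.choose) := h.choose_spec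
      exact hh.trans (coe_eq_coe.1 (hsp.symm.trans ha'))
    refine ⟨ψ, hval, ?_, ?_, ?_⟩
    · intro a ha hfa
      obtain ⟨c, hc⟩ := hdef a ha
      rw [hfa] at hc; exact absurd hc.symm (coe_ne_infty c)
    · intro a ha b hb hab
      obtain ⟨a', ha'⟩ := hdef a ha
      obtain ⟨b', hb'⟩ := hdef b hb
      rw [hval a ha a' ha', hval b hb b' hb']
      exact (hφ a ha b hb a' b' ha' hb').1 hab
    · intro a ha b hb b' hb'
      obtain ⟨a', ha'⟩ := hdef a ha
      rw [hval a ha a' ha']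
      exact ⟨fun h => (hφ a ha b hb a' b' ha' hb').1 h,
        fun h => (hφ b hb a ha b' a' hb' ha').1 h⟩
  · -- there is an undefined position; take the largest one
    set x := U.max' hUne with hx
    have hxU : x ∈ U := U.max'_mem hUne
    have hxs : x ∈ s := (Finset.mem_filter.1 hxU).1
    have hxinf : φ x = OnePoint.infty := (Finset.mem_filter.1 hxU).2
    set s' : Finset X := s.erase x with hs'
    have hcard' : s'.card < n := by
      rw [← hcard, hs']
      exact Finset.card_erase_lt_of_mem hxs
    have hmem' : ∀ a ∈ s', a ∈ s := fun a ha => Finset.mem_of_mem_erase ha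
    obtain ⟨ψ', h1', h2', h3', h4'⟩ := IH s'.card hcard' s' rfl φ
      (fun a ha b hb => hφ a (hmem' a ha) b (hmem' b hb)) K hK
    -- larger elements of s' have defined φ-values
    have hdefgt : ∀ b ∈ s', x < b → ∃ b' : X, φ b = ↑b' := by
      intro b hb hxb
      cases hfb : φ b with
      | infty =>
        have : b ∈ U := Finset.mem_filter.2 ⟨hmem' b hb, hfb⟩
        exact absurd (U.le_max' b this) (not_le.2 hxb)
      | coe c => exact ⟨c, rfl⟩
    set L : Set X := ψ' '' {a | a ∈ s' ∧ a < x} with hL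
    set R : Set X := ψ' '' {b | b ∈ s' ∧ x < b} with hR
    have hLfin : L.Finite := ((s'.finite_toSet.subset (fun a ha => ha.1)).image ψ')
    have hRfin : R.Finite := ((s'.finite_toSet.subset (fun a ha => ha.1)).image ψ')
    have hLR : ∀ l ∈ L, ∀ r ∈ R, l < r := by
      rintro _ ⟨a, ⟨has', halt⟩, rfl⟩ _ ⟨b, ⟨hbs', hbgt⟩, rfl⟩
      obtain ⟨b', hb'⟩ := hdefgt b hbs' hbgt
      rw [h1' b hbs' b' hb']
      exact (h4' a has' b hbs' b' hb').1 (halt.trans hbgt)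
    obtain ⟨y, hyK, hyL, hyR⟩ := exists_avoiding hultra hLfin hRfin hK hLR
    set ψ : X → X := Function.update ψ' x y with hψ
    have hψx : ψ x = y := Function.update_self x y ψ'
    have hψne : ∀ a, a ≠ x → ψ a = ψ' a := fun a ha => Function.update_of_ne ha y ψ'
    have hcases : ∀ a ∈ s, a = x ∨ a ∈ s' := by
      intro a ha
      by_cases hax : a = x
      · exact Or.inl hax
      · exact Or.inr (Finset.mem_erase.2 ⟨hax, ha⟩)
    refine ⟨ψ, ?_, ?_, ?_, ?_⟩
    · intro a ha a' ha'
      rcases hcases a ha with rfl | ha2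
      · rw [hxinf] at ha'; exact absurd ha'.symm (coe_ne_infty a')
      · rw [hψne a (Finset.mem_erase.1 ha2).1]
        exact h1' a ha2 a' ha'
    · intro a ha hfa
      rcases hcases a ha with rfl | ha2
      · rw [hψx]; exact hyK
      · rw [hψne a (Finset.mem_erase.1 ha2).1]
        exact h2' a ha2 hfa
    · intro a ha b hb hab
      rcases hcases a ha with rfl | ha2
      · rcases hcases b hb with rfl | hb2
        · exact absurd hab (lt_irrefl _)
        · rw [hψx, hψne b (Finset.mem_erase.1 hb2).1]
          exact hyR (ψ' b) ⟨b, ⟨hb2, hab⟩, rfl⟩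
      · rcases hcases b hb with rfl | hb2
        · rw [hψx, hψne a (Finset.mem_erase.1 ha2).1]
          exact hyL (ψ' a) ⟨a, ⟨ha2, hab⟩, rfl⟩
        · rw [hψne a (Finset.mem_erase.1 ha2).1, hψne b (Finset.mem_erase.1 hb2).1]
          exact h3' a ha2 b hb2 hab
    · intro a ha b hb b' hb'
      rcases hcases b hb with rfl | hb2
      · rw [hxinf] at hb'; exact absurd hb'.symm (coe_ne_infty b')
      · rcases hcases a ha with rfl | ha2
        · constructor
          · intro hab
            rw [hψx]
            have : ψ' b = b' := h1' b hb2 b' hb'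
            rw [← this]
            exact hyR (ψ' b) ⟨b, ⟨hb2, hab⟩, rfl⟩
          · intro hba
            rw [hψx]
            have : ψ' b = b' := h1' b hb2 b' hb'
            rw [← this]
            exact hyL (ψ' b) ⟨b, ⟨hb2, hba⟩, rfl⟩
        · rw [hψne a (Finset.mem_erase.1 ha2).1]
          exact h4' a ha2 b hb2 b' hb'

theorem good_subset_ellis [TopologicalSpace X] [DiscreteTopology X] :
    good X ⊆ ellisOrderAut X := by
  intro f hf
  rw [ellisOrderAut, mem_closure_iff]
  intro o ho hfo
  obtain ⟨I, u, hu, hIo⟩ := isOpen_pi_iff.1 ho f hfo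
  classical
  set s : Finset X := I.preimage (fun x : X => (x : OnePoint X)) coe_injective.injOn with hs
  have hmem_s : ∀ x : X, x ∈ s ↔ (x : OnePoint X) ∈ I := fun x => Finset.mem_preimage
  set K : Set X := {z : X | ∃ x ∈ s, f ↑x = OnePoint.infty ∧ (↑z : OnePoint X) ∉ u ↑x} with hKdef
  have hKfin : K.Finite := by
    have hsub : K ⊆ ⋃ x ∈ (s : Set X), {z : X | f ↑x = OnePoint.infty ∧ (↑z : OnePoint X) ∉ u ↑x} := by
      rintro z ⟨x, hxs, h1, h2⟩
      exact mem_biUnion hxs ⟨h1, h2⟩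
    refine Set.Finite.subset (Set.Finite.biUnion s.finite_toSet fun x hxs => ?_) hsub
    by_cases hfx : f ↑x = OnePoint.infty
    · have hxI : (↑x : OnePoint X) ∈ I := (hmem_s x).1 hxs
      obtain ⟨huo, hfu⟩ := hu _ hxI
      rw [hfx] at hfu
      have hcpt := ((isOpen_iff_of_mem hfu).1 huo).2
      have hfin := isCompact_iff_finite.1 hcpt
      refine hfin.subset ?_
      intro z hz
      exact hz.2
    · have : {z : X | f ↑x = OnePoint.infty ∧ (↑z : OnePoint X) ∉ u ↑x} = ∅ := by
        ext z; simp [hfx]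
      rw [this]; exact finite_empty
  obtain ⟨ψ, hψ1, hψ2, hψ3, _⟩ := extend_aux hultra s.card s rfl (fun x => f ↑x)
    (fun a ha b hb a' b' => hf.2 a b a' b') K hKfin
  set e := s.orderEmbOfFin rfl with he
  have hestrict : StrictMono fun i => e i := e.strictMono
  have hemem : ∀ i, e i ∈ s := fun i => Finset.orderEmbOfFin_mem s rfl i
  have hystrict : StrictMono fun i => ψ (e i) := by
    intro i j hij
    exact hψ3 (e i) (hemem i) (e j) (hemem j) (hestrict hij)
  obtain ⟨g, hg⟩ := hultra s.card (fun i => e i) (fun i => ψ (e i)) hestrict hystrict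
  have hgs : ∀ a ∈ s, g a = ψ a := by
    intro a ha
    have : a ∈ Set.range (s.orderEmbOfFin rfl) := by
      rw [Finset.range_orderEmbOfFin]; exact ha
    obtain ⟨i, hi⟩ := this
    rw [← hi]
    exact hg i
  refine ⟨orderIsoOnePoint g, hIo ?_, ⟨g, rfl⟩⟩
  intro k hk
  cases k with
  | infty =>
    have := (hu _ hk).2
    rw [hf.1] at this
    exact this
  | coe a =>
    have has : a ∈ s := (hmem_s a).2 hk
    have hval : orderIsoOnePoint g ↑a = ↑(g a) := rfl
    cases hfa : f ↑a with
    | infty =>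
      by_contra hcon
      have hzK : ψ a ∈ K := ⟨a, has, hfa, by rwa [hval, hgs a has] at hcon⟩
      exact hψ2 a has hfa hzK
    | coe a' =>
      rw [hval, hgs a has, hψ1 a has a' hfa]
      have := (hu _ hk).2
      rwa [hfa] at this

end Order

section Inv

theorem good_comp {f h : OnePoint X → OnePoint X} (hf : f ∈ good X) (hh : h ∈ good X) :
    f ∘ h ∈ good X := by
  refine ⟨by simp [Function.comp, hh.1, hf.1], fun a b a' b' ha hb => ?_⟩
  simp only [Function.comp_apply] at ha hb
  cases hha : h ↑a with
  | infty => rw [hha, hf.1] at ha; exact absurd ha.symm (coe_ne_infty a')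
  | coe c =>
    cases hhb : h ↑b with
    | infty => rw [hhb, hf.1] at hb; exact absurd hb.symm (coe_ne_infty b')
    | coe d =>
      rw [hha] at ha; rw [hhb] at hb
      exact (hh.2 a b c d hha hhb).trans (hf.2 c d a' b' ha hb)

theorem good_continuous [TopologicalSpace X] [DiscreteTopology X]
    {f : OnePoint X → OnePoint X} (hf : f ∈ good X) : Continuous f := by
  rw [continuous_def]
  intro t ht
  by_cases hmem : OnePoint.infty ∈ t
  · have hmem' : OnePoint.infty ∈ f ⁻¹' t := by
      rw [Set.mem_preimage, hf.1]; exact hmem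
    rw [isOpen_iff_of_mem hmem']
    refine ⟨isClosed_discrete _, ?_⟩
    rw [isCompact_iff_finite]
    have hA : (((↑) ⁻¹' t : Set X))ᶜ.Finite :=
      isCompact_iff_finite.1 ((isOpen_iff_of_mem hmem).1 ht).2
    have hsub : (((↑) ⁻¹' (f ⁻¹' t) : Set X))ᶜ ⊆
        ⋃ w ∈ (((↑) ⁻¹' t : Set X))ᶜ, {x : X | f ↑x = ↑w} := by
      intro x hx
      simp only [Set.mem_compl_iff, Set.mem_preimage] at hx
      cases hfx : f ↑x with
      | infty => rw [hfx] at hx; exact absurd hmem hx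
      | coe w =>
        rw [hfx] at hx
        exact mem_biUnion (by simpa using hx) (by simp [hfx])
    refine Set.Finite.subset (Set.Finite.biUnion hA fun w _ => ?_) hsub
    exact Set.Subsingleton.finite (fun x hx y hy => good_inj hf hx hy)
  · have hmem' : OnePoint.infty ∉ f ⁻¹' t := by
      rw [Set.mem_preimage, hf.1]; exact hmem
    rw [isOpen_iff_of_notMem hmem']
    exact isOpen_discrete _

open Classical in
noncomputable def ellisInv (f : OnePoint X → OnePoint X) : OnePoint X → OnePoint X :=
  fun k => OnePoint.rec OnePoint.infty
    (fun y => if h : ∃ x : X, f ↑x = ↑y then ↑(h.choose) else OnePoint.infty) k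

open Classical in
theorem ellisInv_coe (f : OnePoint X → OnePoint X) (y : X) :
    ellisInv f ↑y
      = if h : ∃ x : X, f ↑x = ↑y then ((h.choose : X) : OnePoint X) else OnePoint.infty := rfl

theorem ellisInv_infty (f : OnePoint X → OnePoint X) : ellisInv f OnePoint.infty = OnePoint.infty := rfl

theorem ellisInv_coe_of_not (f : OnePoint X → OnePoint X) {y : X} (h : ¬ ∃ x : X, f ↑x = ↑y) :
    ellisInv f ↑y = OnePoint.infty := by rw [ellisInv_coe]; exact dif_neg h

theorem ellisInv_coe_eq {f : OnePoint X → OnePoint X} (hf : f ∈ good X) {x y : X} :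
    ellisInv f ↑y = ↑x ↔ f ↑x = ↑y := by
  constructor
  · intro hxy
    by_cases h : ∃ x : X, f ↑x = ↑y
    · have h1 : ellisInv f ↑y = ↑(h.choose) := by rw [ellisInv_coe]; exact dif_pos h
      rw [h1, coe_eq_coe] at hxy
      rw [← hxy]
      exact h.choose_spec
    · rw [ellisInv_coe_of_not f h] at hxy
      exact absurd hxy.symm (coe_ne_infty x)
  · intro hxy
    have h : ∃ x : X, f ↑x = ↑y := ⟨x, hxy⟩
    have h1 : ellisInv f ↑y = ↑(h.choose) := by rw [ellisInv_coe]; exact dif_pos h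
    rw [h1, coe_eq_coe]
    exact good_inj hf h.choose_spec hxy

theorem ellisInv_mem_good {f : OnePoint X → OnePoint X} (hf : f ∈ good X) :
    ellisInv f ∈ good X := by
  refine ⟨rfl, fun a b a' b' ha hb => ?_⟩
  have ha' : f ↑a' = ↑a := (ellisInv_coe_eq hf).1 ha
  have hb' : f ↑b' = ↑b := (ellisInv_coe_eq hf).1 hb
  exact (hf.2 a' b' a b ha' hb').symm

theorem ellisInv_comp1 {f : OnePoint X → OnePoint X} (hf : f ∈ good X) :
    f ∘ ellisInv f ∘ f = f := by
  funext k
  cases k with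
  | infty => simp [Function.comp, hf.1, ellisInv_infty]
  | coe a =>
    simp only [Function.comp_apply]
    cases hfa : f ↑a with
    | infty => rw [ellisInv_infty, hf.1]
    | coe a' => rw [(ellisInv_coe_eq hf).2 hfa, hfa]

theorem ellisInv_comp2 {f : OnePoint X → OnePoint X} (hf : f ∈ good X) :
    ellisInv f ∘ f ∘ ellisInv f = ellisInv f := by
  funext k
  cases k with
  | infty => simp [Function.comp, hf.1, ellisInv_infty]
  | coe y =>
    simp only [Function.comp_apply]
    cases hy : ellisInv f ↑y with
    | infty => rw [hf.1, ellisInv_infty]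
    | coe x => rw [(ellisInv_coe_eq hf).1 hy, hy]

theorem ellisInv_unique {f g : OnePoint X → OnePoint X} (hf : f ∈ good X) (hg : g ∈ good X)
    (h1 : f ∘ g ∘ f = f) (h2 : g ∘ f ∘ g = g) : g = ellisInv f := by
  funext k
  cases k with
  | infty => rw [hg.1, ellisInv_infty]
  | coe y =>
    by_cases h : ∃ x : X, f ↑x = ↑y
    · obtain ⟨x, hx⟩ := h
      have hfg : f (g ↑y) = ↑y := by
        have := congrFun h1 ↑x
        simp only [Function.comp_apply] at this
        rwa [hx] at this
      cases hgy : g ↑y with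
      | infty => rw [hgy, hf.1] at hfg; exact absurd hfg.symm (coe_ne_infty y)
      | coe z =>
        rw [hgy] at hfg
        have hzx : z = x := good_inj hf hfg hx
        rw [hzx, (ellisInv_coe_eq hf).2 hx]
    · rw [ellisInv_coe_of_not f h]
      cases hgy : g ↑y with
      | infty => rfl
      | coe z =>
        exfalso
        have hgfg : g (f ↑z) = ↑z := by
          have := congrFun h2 ↑y
          simp only [Function.comp_apply] at this
          rwa [hgy] at this
        cases hfz : f ↑z with
        | infty => rw [hfz, hg.1] at hgfg; exact absurd hgfg.symm (coe_ne_infty z)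
        | coe w =>
          rw [hfz] at hgfg
          have : w = y := good_inj hg hgfg hgy
          rw [this] at hfz
          exact h ⟨z, hfz⟩

end Inv

section StarCont

variable [TopologicalSpace X] [DiscreteTopology X]

theorem ellis_subset_good : ellisOrderAut X ⊆ good X :=
  closure_minimal base_subset_good isClosed_good

theorem continuous_ellisInv :
    Continuous (fun f : ↥(ellisOrderAut X) => ellisInv f.1) := by
  rw [continuous_pi_iff]
  intro k
  cases k with
  | infty => exact continuous_const
  | coe y =>
    rw [continuous_iff_continuousAt]
    intro f₀
    have hf₀ : f₀.1 ∈ good X := ellis_subset_good f₀.2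
    have heval : ∀ x : X, Continuous (fun f : ↥(ellisOrderAut X) => f.1 (↑x : OnePoint X)) :=
      fun x => (continuous_apply _).comp continuous_subtype_val
    rw [ContinuousAt]
    cases hcase : ellisInv f₀.1 ↑y with
    | coe x =>
      have hfx : f₀.1 ↑x = ↑y := (ellisInv_coe_eq hf₀).1 hcase
      have hopen : IsOpen {f : ↥(ellisOrderAut X) | f.1 ↑x = ↑y} :=
        (isOpen_coe_singleton y).preimage (heval x)
      have hevent : ∀ᶠ f : ↥(ellisOrderAut X) in nhds f₀, ellisInv f.1 ↑y = ↑x := by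
        filter_upwards [hopen.mem_nhds hfx] with f hfmem
        exact (ellisInv_coe_eq (ellis_subset_good f.2)).2 hfmem
      exact Filter.Tendsto.congr' (hevent.mono fun f hfe => hfe.symm) tendsto_const_nhds
    | infty =>
      have hno : ¬ ∃ x : X, f₀.1 ↑x = ↑y := by
        rintro ⟨x, hx⟩
        rw [(ellisInv_coe_eq hf₀).2 hx] at hcase
        exact coe_ne_infty x hcase
      rw [hasBasis_nhds_infty.tendsto_right_iff]
      rintro K ⟨hKc, hKcomp⟩
      have hKfin : K.Finite := isCompact_iff_finite.1 hKcomp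
      have hopen : IsOpen {f : ↥(ellisOrderAut X) | ∀ x ∈ K, f.1 ↑x ≠ ↑y} := by
        have heq : {f : ↥(ellisOrderAut X) | ∀ x ∈ K, f.1 ↑x ≠ ↑y}
            = ⋂ x ∈ K, {f : ↥(ellisOrderAut X) | f.1 ↑x ≠ ↑y} := by
          ext f; simp
        rw [heq]
        refine hKfin.isOpen_biInter fun x _ => ?_
        have hcl : IsClosed ({(↑y : OnePoint X)} : Set (OnePoint X)) := isClosed_singleton
        exact hcl.isOpen_compl.preimage (heval x)
      filter_upwards [hopen.mem_nhds (fun x _ hfx => hno ⟨x, hfx⟩)] with f hfmem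
      cases hiy : ellisInv f.1 ↑y with
      | infty => exact Or.inr rfl
      | coe z =>
        left
        have hfz : f.1 ↑z = ↑y := (ellisInv_coe_eq (ellis_subset_good f.2)).1 hiy
        have hzK : z ∉ K := fun hz => hfmem z hz hfz
        exact ⟨z, hzK, rfl⟩

end StarCont

end EllisAux


/-- Description of the Ellis compactification `E` of the automorphism group of an infinite
ultrahomogeneous discrete chain `X` from its action on `OnePoint X`: (i) `E` consists of the
maps fixing `∞` that are strictly order-preserving where their values lie in `X`; (ii) `E` is
an inverse monoid under composition, with separately continuous composition and continuous
inversion, and restriction to `D(f) = {x : f(x) ≠ ∞}` is a composition-preserving bijection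
of `E` onto the inverse monoid `J_X` of partial order-isomorphisms of `X` (encoded as maps
`X → OnePoint X`). -/
theorem ellisOrderAut_description_and_inverse_monoid
    {X : Type*} [LinearOrder X] [Infinite X] [TopologicalSpace X] [DiscreteTopology X]
    (hultra : ∀ (n : ℕ) (x y : Fin n → X), StrictMono x → StrictMono y →
      ∃ g : X ≃o X, ∀ i, g (x i) = y i) :
    (ellisOrderAut X
      = {f : OnePoint X → OnePoint X |
          f OnePoint.infty = OnePoint.infty ∧
          ∀ a b a' b' : X, f (↑a) = ↑a' → f (↑b) = ↑b' → (a < b ↔ a' < b')}) ∧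
    id ∈ ellisOrderAut X ∧
    (∀ f ∈ ellisOrderAut X, ∀ h ∈ ellisOrderAut X, f ∘ h ∈ ellisOrderAut X) ∧
    (∀ f ∈ ellisOrderAut X,
      ∃! g : OnePoint X → OnePoint X,
        g ∈ ellisOrderAut X ∧ f ∘ g ∘ f = f ∧ g ∘ f ∘ g = g) ∧
    (∀ f ∈ ellisOrderAut X,
      Continuous (fun h : ↥(ellisOrderAut X) => f ∘ h.1) ∧
      Continuous (fun h : ↥(ellisOrderAut X) => h.1 ∘ f)) ∧
    (∃ star : ↥(ellisOrderAut X) → ↥(ellisOrderAut X),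
      Continuous star ∧
      ∀ f : ↥(ellisOrderAut X),
        f.1 ∘ (star f).1 ∘ f.1 = f.1 ∧ (star f).1 ∘ f.1 ∘ (star f).1 = (star f).1) ∧
    Function.Injective
      (fun f : ↥(ellisOrderAut X) => fun x : X => f.1 (↑x : OnePoint X)) ∧
    (Set.range (fun f : ↥(ellisOrderAut X) => fun x : X => f.1 (↑x : OnePoint X))
      = {p : X → OnePoint X |
          ∀ a b a' b' : X, p a = ↑a' → p b = ↑b' → (a < b ↔ a' < b')}) ∧
    (∀ f h k : ↥(ellisOrderAut X), k.1 = f.1 ∘ h.1 →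
      (fun x : X => k.1 (↑x : OnePoint X))
        = partialComp (fun x : X => f.1 (↑x : OnePoint X))
            (fun x : X => h.1 (↑x : OnePoint X))) := by
  have hE : ellisOrderAut X = EllisAux.good X :=
    subset_antisymm EllisAux.ellis_subset_good (EllisAux.good_subset_ellis hultra)
  have hmemgood : ∀ f : ↥(ellisOrderAut X), f.1 ∈ EllisAux.good X :=
    fun f => EllisAux.ellis_subset_good f.2
  refine ⟨hE, ?_, ?_, ?_, ?_, ?_, ?_, ?_, ?_⟩
  · -- id
    refine subset_closure ⟨OrderIso.refl X, ?_⟩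
    funext k
    cases k with
    | infty => rfl
    | coe x => rfl
  · -- composition
    intro f hf h hh
    rw [hE] at hf hh ⊢
    exact EllisAux.good_comp hf hh
  · -- unique generalized inverse
    intro f hf
    rw [hE] at hf
    refine ⟨EllisAux.ellisInv f, ⟨?_, EllisAux.ellisInv_comp1 hf, EllisAux.ellisInv_comp2 hf⟩, ?_⟩
    · rw [hE]; exact EllisAux.ellisInv_mem_good hf
    · rintro g ⟨hgE, hg1, hg2⟩
      rw [hE] at hgE
      exact EllisAux.ellisInv_unique hf hgE hg1 hg2
  · -- separate continuity
    intro f hf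
    rw [hE] at hf
    constructor
    · rw [continuous_pi_iff]
      intro k
      exact (EllisAux.good_continuous hf).comp ((continuous_apply k).comp continuous_subtype_val)
    · rw [continuous_pi_iff]
      intro k
      exact (continuous_apply (f k)).comp continuous_subtype_val
  · -- star
    refine ⟨fun f => ⟨EllisAux.ellisInv f.1, ?_⟩, ?_, ?_⟩
    · exact (EllisAux.good_subset_ellis hultra) (EllisAux.ellisInv_mem_good (hmemgood f))
    · exact Continuous.subtype_mk EllisAux.continuous_ellisInv _
    · intro f
      exact ⟨EllisAux.ellisInv_comp1 (hmemgood f), EllisAux.ellisInv_comp2 (hmemgood f)⟩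
  · -- injectivity of restriction
    intro f g hfg
    apply Subtype.ext
    funext k
    cases k with
    | infty => rw [(hmemgood f).1, (hmemgood g).1]
    | coe x => exact congrFun hfg x
  · -- range
    ext p
    constructor
    · rintro ⟨f, rfl⟩
      exact fun a b a' b' ha hb => (hmemgood f).2 a b a' b' ha hb
    · intro hp
      have hgood : partialExtend p ∈ EllisAux.good X := ⟨rfl, fun a b a' b' ha hb => hp a b a' b' ha hb⟩
      refine ⟨⟨partialExtend p, by rw [hE]; exact hgood⟩, ?_⟩
      funext x
      rfl
  · -- composition of restrictions
    intro f h k hk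
    funext x
    rw [hk]
    show f.1 (h.1 ↑x) = partialExtend (fun x : X => f.1 ↑x) (h.1 ↑x)
    cases hhx : h.1 ↑x with
    | infty => exact (hmemgood f).1
    | coe c => rfl
end
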